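/- arXiv:1510.05110 — 6 statements merged into one kernel-verified Lean document; each statement's English description precedes it below -/
import Mathlib

section
/- For every ν ∈ ℂ and every z ∈ ℂ ∖ (−∞,0], the Struve function w(z) = H_ν(z) satisfies the inhomogeneous Bessel equation w''(z) + w'(z)/z + (1 − ν²/z²) w(z) = (z/2)^{ν−1}/(√π · Γ(ν+1/2)), where derivatives are complex derivatives on the cut plane, (z/2)^{ν−1} is the principal branch, and 1/Γ(ν+1/2) is the reciprocal Gamma function. -/
set_option maxHeartbeats 1000000

open Complex

/-- `G_ν(w) = Σ_{n=0}^∞ (−1)^n w^n /(Γ(n+3/2) Γ(n+ν+3/2))`. -/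
noncomputable def struveG (ν w : ℂ) : ℂ :=
  ∑' n : ℕ, (-1) ^ n * w ^ n /
    (Complex.Gamma ((n : ℂ) + 3 / 2) * Complex.Gamma ((n : ℂ) + ν + 3 / 2))

/-- The Struve function `H_ν(z) = (z/2)^{ν+1} G_ν((z/2)²)` (principal branch). -/
noncomputable def struveH (ν z : ℂ) : ℂ :=
  (z / 2) ^ (ν + 1) * struveG ν ((z / 2) ^ 2)

namespace StruveAux

open Filter Topology

/-- Entire function attached to coefficients. -/
noncomputable def S (a : ℕ → ℂ) (w : ℂ) : ℂ := ∑' n : ℕ, a n * w ^ n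

/-- Coefficients of the derivative series. -/
noncomputable def dcoef (a : ℕ → ℂ) : ℕ → ℂ := fun n => ((n : ℂ) + 1) * a (n + 1)

/-- Entireness condition. -/
def Ent (a : ℕ → ℂ) : Prop := ∀ r : ℝ, 0 ≤ r → Summable (fun n => ‖a n‖ * r ^ n)

lemma Ent.summable {a : ℕ → ℂ} (h : Ent a) (w : ℂ) :
    Summable (fun n => a n * w ^ n) := by
  refine Summable.of_norm ((h ‖w‖ (norm_nonneg w)).congr fun n => ?_)
  rw [norm_mul, norm_pow]

lemma ent_dcoef {a : ℕ → ℂ} (h : Ent a) : Ent (dcoef a) := by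
  intro r hr
  have h2 : Summable (fun n => ‖a (n + 1)‖ * (2 * r + 2) ^ (n + 1)) :=
    (summable_nat_add_iff 1).2 (h (2 * r + 2) (by linarith))
  have hb : ∀ n : ℕ, ‖dcoef a n‖ * r ^ n ≤ ‖a (n + 1)‖ * (2 * r + 2) ^ (n + 1) := by
    intro n
    have hn1 : ((n : ℝ) + 1) ≤ 2 ^ (n + 1) := by
      have := Nat.lt_two_pow_self (n := n + 1)
      exact_mod_cast this.le
    have hr1 : r ^ n ≤ (r + 1) ^ (n + 1) := by
      calc r ^ n ≤ (r + 1) ^ n := pow_le_pow_left₀ hr (by linarith) n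
      _ ≤ (r + 1) ^ (n + 1) := pow_le_pow_right₀ (by linarith) (Nat.le_succ n)
    have hnorm : ‖dcoef a n‖ = ((n : ℝ) + 1) * ‖a (n + 1)‖ := by
      have h0 : ((n : ℂ) + 1) = ((n + 1 : ℕ) : ℂ) := by push_cast; ring
      rw [StruveAux.dcoef, norm_mul, h0, Complex.norm_natCast]; push_cast; ring
    have h24 : (2 * r + 2) ^ (n + 1) = 2 ^ (n + 1) * (r + 1) ^ (n + 1) := by
      rw [show (2*r+2) = 2*(r+1) by ring, mul_pow]
    have key : ((n : ℝ) + 1) * r ^ n ≤ 2 ^ (n + 1) * (r + 1) ^ (n + 1) :=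
      mul_le_mul hn1 hr1 (pow_nonneg hr n) (by positivity)
    rw [hnorm, h24, mul_comm ((n : ℝ) + 1) (‖a (n + 1)‖), mul_assoc]
    exact mul_le_mul_of_nonneg_left key (norm_nonneg _)
  exact Summable.of_nonneg_of_le (fun n => mul_nonneg (norm_nonneg _) (pow_nonneg hr n)) hb h2

lemma Ent.hasDerivAt {a : ℕ → ℂ} (h : Ent a) (w : ℂ) :
    HasDerivAt (S a) (S (dcoef a) w) w := by
  set R : ℝ := ‖w‖ + 1 with hR
  have hR0 : 0 < R := by positivity
  set u : ℕ → ℝ := fun n => ‖a n‖ * n * R ^ n / R with hu_def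
  have hu : Summable u := by
    have h1 : Summable (fun n => ‖a n‖ * (n : ℝ) * R ^ n) := by
      rw [← summable_nat_add_iff 1]
      have := ((ent_dcoef h) R hR0.le).mul_right R
      refine this.congr fun n => ?_
      have hnorm : ‖dcoef a n‖ = ((n : ℝ) + 1) * ‖a (n + 1)‖ := by
        have : ((n : ℂ) + 1) = ((n + 1 : ℕ) : ℂ) := by push_cast; ring
        rw [StruveAux.dcoef, norm_mul, this, Complex.norm_natCast]; push_cast; ring
      rw [hnorm]
      push_cast
      ring
    exact h1.div_const R
  have hbound : ∀ n : ℕ, ∀ y : ℂ, y ∈ Metric.ball (0 : ℂ) R →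
      ‖a n * ((n : ℂ) * y ^ (n - 1))‖ ≤ u n := by
    intro n y hy
    have hy' : ‖y‖ < R := mem_ball_zero_iff.1 hy
    cases n with
    | zero => simp [hu_def]
    | succ m =>
      simp only [Nat.add_sub_cancel]
      have : ‖a (m + 1) * (((m + 1 : ℕ) : ℂ) * y ^ m)‖
          = ‖a (m + 1)‖ * ((m + 1 : ℝ) * ‖y‖ ^ m) := by
        rw [norm_mul, norm_mul, norm_pow, Complex.norm_natCast]; push_cast; ring
      rw [this]
      have hum : u (m + 1) = ‖a (m + 1)‖ * ((m + 1 : ℝ) * R ^ m) := by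
        simp only [hu_def]
        field_simp
        push_cast
        ring
      rw [hum]
      refine mul_le_mul_of_nonneg_left ?_ (norm_nonneg _)
      refine mul_le_mul_of_nonneg_left ?_ (by positivity)
      exact pow_le_pow_left₀ (norm_nonneg y) hy'.le m
  have hder := hasDerivAt_tsum_of_isPreconnected hu (Metric.isOpen_ball)
    (convex_ball (0 : ℂ) R).isPreconnected
    (fun n x _ => (hasDerivAt_pow n x).const_mul (a n))
    (fun n x hx => hbound n x hx)
    (mem_ball_zero_iff.2 (by simpa using hR0))
    (h.summable 0)
    (mem_ball_zero_iff.2 (lt_add_one ‖w‖))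
  have hsum : Summable (fun n => a n * ((n : ℂ) * w ^ (n - 1))) := by
    refine Summable.of_norm_bounded hu fun n => hbound n w ?_
    exact mem_ball_zero_iff.2 (lt_add_one ‖w‖)
  have heq : (∑' n : ℕ, a n * ((n : ℂ) * w ^ (n - 1))) = S (dcoef a) w := by
    rw [Summable.tsum_eq_zero_add hsum]
    simp only [Nat.cast_zero, zero_mul, mul_zero, zero_add]
    refine tsum_congr fun n => ?_
    rw [StruveAux.dcoef]
    push_cast
    ring
  rw [show S (dcoef a) w = _ from heq.symm]
  exact hder

/-- The Struve series coefficients. -/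
noncomputable def A (ν : ℂ) : ℕ → ℂ :=
  fun n => (-1) ^ n / (Complex.Gamma ((n : ℂ) + 3 / 2) * Complex.Gamma ((n : ℂ) + ν + 3 / 2))

lemma norm_natCast_add (n : ℕ) (c : ℝ) (hc : 0 ≤ c) : ‖((n : ℂ) + (c : ℂ))‖ = n + c := by
  have : ((n : ℂ) + (c : ℂ)) = (((n : ℝ) + c : ℝ) : ℂ) := by push_cast; ring
  rw [this]
  simp only [Complex.norm_real, Real.norm_eq_abs]
  exact abs_of_nonneg (by positivity)

lemma ent_A (ν : ℂ) : Ent (A ν) := by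
  intro r hr
  apply summable_of_ratio_norm_eventually_le (r := 1 / 2) (by norm_num)
  filter_upwards [Filter.eventually_ge_atTop (⌈‖ν‖ + 2 * r + 1⌉₊)] with n hn
  have hn' : ‖ν‖ + 2 * r + 1 ≤ (n : ℝ) := le_trans (Nat.le_ceil _) (by exact_mod_cast hn)
  set s₁ : ℂ := (n : ℂ) + 3 / 2 with hs₁def
  set s₂ : ℂ := (n : ℂ) + ν + 3 / 2 with hs₂def
  have hs₁norm : ‖s₁‖ = (n : ℝ) + 3 / 2 := by
    have := norm_natCast_add n (3 / 2) (by norm_num)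
    simpa [hs₁def] using this
  have hs₂norm : (n : ℝ) + 3 / 2 - ‖ν‖ ≤ ‖s₂‖ := by
    have h1 : ‖s₁‖ ≤ ‖s₂‖ + ‖ν‖ := by
      have : s₁ = s₂ + (-ν) := by rw [hs₁def, hs₂def]; ring
      rw [this]
      simpa using norm_add_le s₂ (-ν)
    rw [hs₁norm] at h1
    linarith
  have hs₂pos : 0 < ‖s₂‖ := by linarith
  have hs₂0 : s₂ ≠ 0 := by
    intro h0; rw [h0] at hs₂pos; simp at hs₂pos
  have hs₁0 : s₁ ≠ 0 := by
    intro h0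
    have := hs₁norm
    rw [h0] at this
    simp at this
    nlinarith [this]
  have hrec : A ν (n + 1) = (-1) * A ν n / (s₁ * s₂) := by
    have e1 : ((n + 1 : ℕ) : ℂ) + 3 / 2 = s₁ + 1 := by rw [hs₁def]; push_cast; ring
    have e2 : ((n + 1 : ℕ) : ℂ) + ν + 3 / 2 = s₂ + 1 := by rw [hs₂def]; push_cast; ring
    rw [A, A, e1, e2, Complex.Gamma_add_one s₁ hs₁0, Complex.Gamma_add_one s₂ hs₂0,
      pow_succ]
    rw [← hs₁def, ← hs₂def]
    field_simp
  have hnormrec : ‖A ν (n + 1)‖ = ‖A ν n‖ / (‖s₁‖ * ‖s₂‖) := by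
    rw [hrec, norm_div, norm_mul, norm_mul, norm_neg, norm_one, one_mul]
  have h2r : 2 * r ≤ ‖s₁‖ * ‖s₂‖ := by
    have h1 : (1 : ℝ) ≤ ‖s₁‖ := by rw [hs₁norm]; have := Nat.cast_nonneg (α := ℝ) n; linarith
    have h2 : 2 * r ≤ ‖s₂‖ := by
      have : (n : ℝ) + 3 / 2 - ‖ν‖ ≥ 2 * r := by nlinarith [norm_nonneg ν]
      linarith
    nlinarith [norm_nonneg s₂]
  have hAn : (0 : ℝ) ≤ ‖A ν n‖ := norm_nonneg _
  have hrn : (0 : ℝ) ≤ r ^ n := pow_nonneg hr n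
  have hrn1 : (0 : ℝ) ≤ r ^ (n + 1) := pow_nonneg hr (n + 1)
  have hspos : 0 < ‖s₁‖ * ‖s₂‖ := by
    have h1 : (1 : ℝ) ≤ ‖s₁‖ := by rw [hs₁norm]; have := Nat.cast_nonneg (α := ℝ) n; linarith
    nlinarith
  rw [Real.norm_eq_abs, Real.norm_eq_abs, _root_.abs_of_nonneg (mul_nonneg (norm_nonneg _) hrn1),
    _root_.abs_of_nonneg (mul_nonneg hAn hrn), hnormrec, pow_succ]
  rw [div_mul_eq_mul_div, div_le_iff₀ hspos]
  nlinarith [mul_nonneg hAn hrn, mul_nonneg (mul_nonneg hAn hrn) hr]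


lemma inv_Gamma_rec (s : ℂ) : s * (Complex.Gamma (s + 1))⁻¹ = (Complex.Gamma s)⁻¹ := by
  by_cases hs : s = 0
  · simp [hs, Complex.Gamma_zero]
  · rw [Complex.Gamma_add_one s hs, mul_inv, ← mul_assoc, mul_inv_cancel₀ hs, one_mul]

/-- Auxiliary coefficients for the inhomogeneous term. -/
noncomputable def B (ν : ℂ) : ℕ → ℂ := fun n =>
  (-1) ^ n * ((Complex.Gamma ((n : ℂ) + 1 / 2))⁻¹ * (Complex.Gamma ((n : ℂ) + ν + 1 / 2))⁻¹)

lemma B_eq (ν : ℂ) (n : ℕ) :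
    B ν n = ((n : ℂ) + 1 / 2) * ((n : ℂ) + ν + 1 / 2) * A ν n := by
  have e1 : ((n : ℂ) + 3 / 2) = ((n : ℂ) + 1 / 2) + 1 := by ring
  have e2 : ((n : ℂ) + ν + 3 / 2) = ((n : ℂ) + ν + 1 / 2) + 1 := by ring
  have h1 := inv_Gamma_rec ((n : ℂ) + 1 / 2)
  have h2 := inv_Gamma_rec ((n : ℂ) + ν + 1 / 2)
  rw [← e1] at h1
  rw [← e2] at h2
  simp only [A, B]
  rw [← h1, ← h2]
  ring

lemma B_succ (ν : ℂ) (n : ℕ) : B ν (n + 1) = - A ν n := by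
  have e1 : (((n + 1 : ℕ)) : ℂ) + 1 / 2 = (n : ℂ) + 3 / 2 := by push_cast; ring
  have e2 : (((n + 1 : ℕ)) : ℂ) + ν + 1 / 2 = (n : ℂ) + ν + 3 / 2 := by push_cast; ring
  simp only [A, B]
  rw [e1, e2]
  ring

lemma key (ν w : ℂ) :
    w ^ 2 * S (dcoef (dcoef (A ν))) w + (ν + 2) * (w * S (dcoef (A ν)) w)
      + (2 * ν + 1) / 4 * S (A ν) w + w * S (A ν) w
    = 1 / ((Real.sqrt Real.pi : ℂ) * Complex.Gamma (ν + 1 / 2)) := by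
  have hE : Ent (A ν) := ent_A ν
  have hS0 : Summable (fun n => A ν n * w ^ n) := hE.summable w
  have hS1 : Summable (fun n => dcoef (A ν) n * w ^ n) := (ent_dcoef hE).summable w
  have hS2 : Summable (fun n => dcoef (dcoef (A ν)) n * w ^ n) :=
    (ent_dcoef (ent_dcoef hE)).summable w
  have hT1 : Summable (fun n : ℕ => (n : ℂ) * (A ν n * w ^ n)) := by
    rw [← summable_nat_add_iff 1]
    refine (hS1.mul_right w).congr fun n => ?_
    simp only [dcoef]; push_cast; ring
  have hT2 : Summable (fun n : ℕ => (n : ℂ) * ((n : ℂ) - 1) * (A ν n * w ^ n)) := by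
    rw [← summable_nat_add_iff 2]
    refine ((hS2.mul_right w).mul_right w).congr fun n => ?_
    simp only [dcoef]; push_cast; ring
  have T1 : (∑' n : ℕ, (n : ℂ) * (A ν n * w ^ n)) = w * S (dcoef (A ν)) w := by
    rw [Summable.tsum_eq_zero_add hT1]
    have e : ∀ n : ℕ, ((n + 1 : ℕ) : ℂ) * (A ν (n + 1) * w ^ (n + 1))
        = dcoef (A ν) n * w ^ n * w := by
      intro n; simp only [dcoef]; push_cast; ring
    rw [tsum_congr e, tsum_mul_right]
    simp only [Nat.cast_zero, zero_mul, zero_add, S]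
    ring
  have T2 : (∑' n : ℕ, (n : ℂ) * ((n : ℂ) - 1) * (A ν n * w ^ n))
      = w ^ 2 * S (dcoef (dcoef (A ν))) w := by
    rw [Summable.tsum_eq_zero_add hT2, Summable.tsum_eq_zero_add ((summable_nat_add_iff 1).2 hT2)]
    have e : ∀ n : ℕ, ((n + 1 + 1 : ℕ) : ℂ) * (((n + 1 + 1 : ℕ) : ℂ) - 1)
        * (A ν (n + 1 + 1) * w ^ (n + 1 + 1))
        = dcoef (dcoef (A ν)) n * w ^ n * w ^ 2 := by
      intro n; simp only [dcoef]; push_cast; ring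
    rw [tsum_congr e, tsum_mul_right]
    simp only [Nat.cast_zero, Nat.cast_one, zero_mul, zero_add, sub_self, mul_zero, S]
    ring
  have hB : ∀ n : ℕ, B ν n * w ^ n
      = (n : ℂ) * ((n : ℂ) - 1) * (A ν n * w ^ n) + (ν + 2) * ((n : ℂ) * (A ν n * w ^ n))
        + (2 * ν + 1) / 4 * (A ν n * w ^ n) := by
    intro n; rw [B_eq]; ring
  have hSB : Summable (fun n => B ν n * w ^ n) :=
    (((hT2.add (hT1.mul_left (ν + 2))).add (hS0.mul_left ((2 * ν + 1) / 4)))).congr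
      fun n => (hB n).symm
  have way1 : (∑' n : ℕ, B ν n * w ^ n)
      = w ^ 2 * S (dcoef (dcoef (A ν))) w + (ν + 2) * (w * S (dcoef (A ν)) w)
        + (2 * ν + 1) / 4 * S (A ν) w := by
    rw [tsum_congr hB,
      Summable.tsum_add (hT2.add (hT1.mul_left (ν + 2))) (hS0.mul_left ((2 * ν + 1) / 4)),
      Summable.tsum_add hT2 (hT1.mul_left (ν + 2)), tsum_mul_left, tsum_mul_left, T2, T1]
    rfl
  have way2 : (∑' n : ℕ, B ν n * w ^ n) = B ν 0 - w * S (A ν) w := by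
    rw [Summable.tsum_eq_zero_add hSB]
    have e : ∀ n : ℕ, B ν (n + 1) * w ^ (n + 1) = -(A ν n * w ^ n * w) := by
      intro n; rw [B_succ]; ring
    rw [tsum_congr e, tsum_neg, tsum_mul_right]
    simp only [pow_zero, mul_one, S]
    ring
  have hB0 : B ν 0 = 1 / ((Real.sqrt Real.pi : ℂ) * Complex.Gamma (ν + 1 / 2)) := by
    have hpi : Complex.Gamma (1 / 2) = ((Real.sqrt Real.pi : ℝ) : ℂ) := by
      rw [show ((1 / 2 : ℂ)) = (((1 / 2 : ℝ)) : ℂ) by norm_num, Complex.Gamma_ofReal,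
        Real.Gamma_one_half_eq]
    simp only [B, pow_zero, Nat.cast_zero, zero_add, one_mul]
    rw [hpi]; ring
  have := way1.symm.trans way2
  rw [hB0] at this
  linear_combination this

lemma struveG_eq (ν : ℂ) : struveG ν = S (A ν) := by
  funext w
  exact tsum_congr fun n => by simp only [A]; ring

lemma half_mem {z : ℂ} (hz : z ∈ Complex.slitPlane) : z / 2 ∈ Complex.slitPlane := by
  rw [Complex.mem_slitPlane_iff] at hz ⊢
  have h2 : z / 2 = ((1 / 2 : ℝ) : ℂ) * z := by push_cast; ring
  rw [h2, Complex.re_ofReal_mul, Complex.im_ofReal_mul]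
  rcases hz with h | h
  · exact Or.inl (by linarith)
  · exact Or.inr (by simpa using h)

/-- First derivative of the Struve function. -/
noncomputable def F1 (ν z : ℂ) : ℂ :=
  (ν + 1) / 2 * ((z / 2) ^ ν * S (A ν) ((z / 2) ^ 2))
    + (z / 2) ^ (ν + 1) * S (dcoef (A ν)) ((z / 2) ^ 2) * (z / 2)

/-- Second derivative of the Struve function. -/
noncomputable def F2 (ν z : ℂ) : ℂ :=
  (z / 2) ^ (ν - 1) * (ν * (ν + 1) / 4 * S (A ν) ((z / 2) ^ 2)
    + (2 * ν + 3) / 2 * ((z / 2) ^ 2 * S (dcoef (A ν)) ((z / 2) ^ 2))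
    + (z / 2) ^ 4 * S (dcoef (dcoef (A ν))) ((z / 2) ^ 2))

lemma hasDerivAt_half (z : ℂ) : HasDerivAt (fun z : ℂ => z / 2) (1 / 2 : ℂ) z := by
  simpa using (hasDerivAt_id z).div_const 2

lemma hasDerivAt_halfsq (z : ℂ) : HasDerivAt (fun z : ℂ => (z / 2) ^ 2) (z / 2) z := by
  have h := (hasDerivAt_half z).pow 2
  refine h.congr_deriv ?_
  rw [pow_one]
  ring

lemma hasDerivAt_S_halfsq (a : ℕ → ℂ) (hE : Ent a) (z : ℂ) :
    HasDerivAt (fun z : ℂ => S a ((z / 2) ^ 2)) (S (dcoef a) ((z / 2) ^ 2) * (z / 2)) z :=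
  by have := (hE.hasDerivAt ((z / 2) ^ 2)).comp z (hasDerivAt_halfsq z); exact this

lemma hasDerivAt_cpow_half (c z : ℂ) (hz : z ∈ Complex.slitPlane) :
    HasDerivAt (fun z : ℂ => (z / 2) ^ c) (c * (z / 2) ^ (c - 1) * (1 / 2)) z :=
  (hasDerivAt_half z).cpow_const (half_mem hz)

lemma hasDerivAt_struveH (ν z : ℂ) (hz : z ∈ Complex.slitPlane) :
    HasDerivAt (struveH ν) (F1 ν z) z := by
  have hE : Ent (A ν) := ent_A ν
  have hcp := hasDerivAt_cpow_half (ν + 1) z hz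
  have hD := hcp.mul (hasDerivAt_S_halfsq (A ν) hE z)
  have hfun : struveH ν = fun z => (z / 2) ^ (ν + 1) * S (A ν) ((z / 2) ^ 2) := by
    funext x
    rw [struveH, struveG_eq]
  rw [hfun]
  refine hD.congr_deriv ?_
  have he : ν + 1 - 1 = ν := by ring
  rw [he]
  simp only [F1]
  ring

lemma hasDerivAt_F1 (ν z : ℂ) (hz : z ∈ Complex.slitPlane) :
    HasDerivAt (F1 ν) (F2 ν z) z := by
  have hE : Ent (A ν) := ent_A ν
  have ht0 : z / 2 ≠ 0 := Complex.slitPlane_ne_zero (half_mem hz)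
  have hD :=
    (((hasDerivAt_cpow_half ν z hz).mul (hasDerivAt_S_halfsq (A ν) hE z)).const_mul
        ((ν + 1) / 2)).add
      (((hasDerivAt_cpow_half (ν + 1) z hz).mul
        (hasDerivAt_S_halfsq (dcoef (A ν)) (ent_dcoef hE) z)).mul (hasDerivAt_half z))
  have hfun : F1 ν = fun z => (ν + 1) / 2 * ((z / 2) ^ ν * S (A ν) ((z / 2) ^ 2))
      + (z / 2) ^ (ν + 1) * S (dcoef (A ν)) ((z / 2) ^ 2) * (z / 2) := rfl
  rw [hfun]
  refine hD.congr_deriv ?_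
  have hν : (z / 2) ^ ν = (z / 2) ^ (ν - 1) * (z / 2) := by
    rw [show ν = ν - 1 + 1 by ring, Complex.cpow_add _ _ ht0]
    rw [show ν - 1 + 1 - 1 = ν - 1 by ring, Complex.cpow_one]
  have hν1 : (z / 2) ^ (ν + 1) = (z / 2) ^ (ν - 1) * (z / 2) * (z / 2) := by
    rw [Complex.cpow_add _ _ ht0, Complex.cpow_one, hν]
  have he : ν + 1 - 1 = ν := by ring
  simp only [F2, Pi.mul_apply]
  rw [he, hν1, hν]
  ring

lemma alg (ν t q X G0 G1 G2 : ℂ) (ht : t ≠ 0)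
    (hkey : (t ^ 2) ^ 2 * G2 + (ν + 2) * (t ^ 2 * G1) + (2 * ν + 1) / 4 * G0 + t ^ 2 * G0 = X) :
    q * (ν * (ν + 1) / 4 * G0 + (2 * ν + 3) / 2 * (t ^ 2 * G1) + t ^ 4 * G2)
        + ((ν + 1) / 2 * (q * t * G0) + q * t * t * G1 * t) / (2 * t)
      + (1 - ν ^ 2 / (2 * t) ^ 2) * (q * t * t * G0) = q * X := by
  have h1 : ((ν + 1) / 2 * (q * t * G0) + q * t * t * G1 * t) / (2 * t)
      = (ν + 1) / 4 * (q * G0) + q * t ^ 2 * G1 / 2 := by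
    field_simp
    ring
  have h2 : (1 - ν ^ 2 / (2 * t) ^ 2) * (q * t * t * G0)
      = q * t ^ 2 * G0 - ν ^ 2 / 4 * (q * G0) := by
    field_simp
    ring
  rw [h1, h2]
  linear_combination q * hkey

end StruveAux

theorem stmt_2 (ν : ℂ) (z : ℂ) (hz : z ∈ Complex.slitPlane) :
    deriv (deriv (struveH ν)) z + deriv (struveH ν) z / z +
      (1 - ν ^ 2 / z ^ 2) * struveH ν z =
    (z / 2) ^ (ν - 1) / ((Real.sqrt Real.pi : ℂ) * Complex.Gamma (ν + 1 / 2)) := by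
  obtain ⟨t, rfl⟩ : ∃ t : ℂ, z = 2 * t := ⟨z / 2, by ring⟩
  have hz0 : (2 * t : ℂ) ≠ 0 := Complex.slitPlane_ne_zero hz
  have ht0' : t ≠ 0 := by
    intro h; exact hz0 (by rw [h]; ring)
  have h2t : (2 * t : ℂ) / 2 = t := by ring
  have hd1 : deriv (struveH ν) (2 * t) = StruveAux.F1 ν (2 * t) :=
    (StruveAux.hasDerivAt_struveH ν (2 * t) hz).deriv
  have hev : deriv (struveH ν) =ᶠ[nhds (2 * t)] StruveAux.F1 ν := by
    filter_upwards [Complex.isOpen_slitPlane.mem_nhds hz] with x hx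
    exact (StruveAux.hasDerivAt_struveH ν x hx).deriv
  have hd2 : deriv (deriv (struveH ν)) (2 * t) = StruveAux.F2 ν (2 * t) := by
    rw [hev.deriv_eq]
    exact (StruveAux.hasDerivAt_F1 ν (2 * t) hz).deriv
  have hHz : struveH ν (2 * t) = (2 * t / 2) ^ (ν + 1)
      * StruveAux.S (StruveAux.A ν) ((2 * t / 2) ^ 2) := by
    rw [struveH, StruveAux.struveG_eq]
  have hkey := StruveAux.key ν (t ^ 2)
  rw [one_div] at hkey
  rw [hd2, hd1, hHz, StruveAux.F1, StruveAux.F2, h2t, div_eq_mul_inv ((t : ℂ) ^ (ν - 1))]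
  have hν : (t : ℂ) ^ ν = t ^ (ν - 1) * t := by
    rw [show ν = ν - 1 + 1 by ring, Complex.cpow_add _ _ ht0']
    rw [show ν - 1 + 1 - 1 = ν - 1 by ring, Complex.cpow_one]
  have hν1 : (t : ℂ) ^ (ν + 1) = t ^ (ν - 1) * t * t := by
    rw [Complex.cpow_add _ _ ht0', Complex.cpow_one, hν]
  rw [hν1, hν]
  generalize hX : ((Real.sqrt Real.pi : ℂ) * Complex.Gamma (ν + 1 / 2))⁻¹ = X at hkey ⊢
  exact StruveAux.alg ν t (t ^ (ν - 1)) X _ _ _ ht0' hkey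
end

section
/- Let ν ∈ ℂ with Re(ν) > −1/2 and z ∈ ℂ ∖ (−∞,0]. Then for each choice of sign, J_ν(z) ± i H_ν(z) = (2 (z/2)^ν /(√π · Γ(ν+1/2))) · ∫₀^1 e^{±izt} (1−t²)^{ν−1/2} dt, where for 0 < t < 1 one sets (1−t²)^{ν−1/2} = exp((ν−1/2) ln(1−t²)) with the real logarithm, and (z/2)^ν is the principal branch. -/
open Complex

/-- The Bessel function of the first kind
`J_ν(z) = (z/2)^ν Σ_{n=0}^∞ (−1)^n (z/2)^{2n}/(n! Γ(n+ν+1))` (principal branch). -/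
noncomputable def besselJ (ν z : ℂ) : ℂ :=
  (z / 2) ^ ν * ∑' n : ℕ, (-1) ^ n * (z / 2) ^ (2 * n) /
    ((n.factorial : ℂ) * Complex.Gamma ((n : ℂ) + ν + 1))

open MeasureTheory Filter Topology Set

noncomputable def wfun (ν : ℂ) (t : ℝ) : ℂ := Complex.exp ((ν - 1/2) * (Real.log (1 - t^2) : ℂ))

lemma wfun_eq {ν : ℂ} {t : ℝ} (ht : t ∈ Set.Ioo (0:ℝ) 1) :
    wfun ν t = ((1 - t^2 : ℝ) : ℂ) ^ (ν - 1/2) := by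
  have hpos : (0:ℝ) < 1 - t^2 := by nlinarith [ht.1, ht.2]
  rw [wfun, Complex.cpow_def_of_ne_zero (Complex.ofReal_ne_zero.mpr hpos.ne'),
    ← Complex.ofReal_log hpos.le, mul_comm]

lemma sq_cpow {t : ℝ} (ht : 0 < t) (a : ℂ) : ((t^2 : ℝ):ℂ)^a = (t:ℂ)^(2*a) := by
  rw [Complex.cpow_def_of_ne_zero (Complex.ofReal_ne_zero.mpr (by positivity)),
    Complex.cpow_def_of_ne_zero (Complex.ofReal_ne_zero.mpr ht.ne')]
  congr 1
  rw [← Complex.ofReal_log (by positivity), ← Complex.ofReal_log ht.le, Real.log_pow]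
  push_cast
  ring

lemma sq_image : (fun t : ℝ => t^2) '' Set.Ioo 0 1 = Set.Ioo (0:ℝ) 1 := by
  ext x
  constructor
  · rintro ⟨t, ⟨h1, h2⟩, rfl⟩
    refine ⟨by positivity, ?_⟩
    show t^2 < 1
    nlinarith
  · rintro ⟨h1, h2⟩
    exact ⟨Real.sqrt x, ⟨Real.sqrt_pos.mpr h1, by
      rw [show (1:ℝ) = Real.sqrt 1 by simp]
      exact Real.sqrt_lt_sqrt h1.le h2⟩, Real.sq_sqrt h1.le⟩

lemma sq_injOn : Set.InjOn (fun t : ℝ => t^2) (Set.Ioo 0 1) := by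
  intro a ha b hb h
  simp only at h
  have : Real.sqrt (a^2) = Real.sqrt (b^2) := by rw [h]
  simpa [Real.sqrt_sq ha.1.le, Real.sqrt_sq hb.1.le] using this

lemma sq_deriv : ∀ t ∈ Set.Ioo (0:ℝ) 1,
    HasDerivWithinAt (fun t : ℝ => t^2) (2*t) (Set.Ioo 0 1) t := by
  intro t _
  simpa using (hasDerivAt_pow 2 t).hasDerivWithinAt

lemma beta_cov (g : ℝ → ℂ) :
    ∫ x in Set.Ioo (0:ℝ) 1, g x = ∫ t in Set.Ioo (0:ℝ) 1, |2*t| • g (t^2) := by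
  conv_lhs => rw [← sq_image]
  exact integral_image_eq_integral_abs_deriv_smul measurableSet_Ioo sq_deriv sq_injOn g

/-- the transformed integrand -/
lemma cov_integrand (ν : ℂ) (n : ℕ) {t : ℝ} (ht : t ∈ Set.Ioo (0:ℝ) 1) :
    |2*t| • (((t^2 : ℝ):ℂ)^((((n:ℂ)+1)/2)-1) * ((1:ℂ) - ((t^2:ℝ):ℂ))^(ν+1/2-1)) =
      2 * ((t:ℂ)^n * wfun ν t) := by
  have ht0 : (0:ℝ) < t := ht.1
  have htc : (t:ℂ) ≠ 0 := Complex.ofReal_ne_zero.mpr ht0.ne'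
  have habs : |2*t| = 2*t := abs_of_pos (by linarith)
  have h1 : ((t^2 : ℝ):ℂ)^((((n:ℂ)+1)/2)-1) = (t:ℂ)^((n:ℂ)-1) := by
    rw [sq_cpow ht0]
    congr 1
    ring
  have h2 : ((1:ℂ) - ((t^2:ℝ):ℂ))^(ν+1/2-1) = wfun ν t := by
    rw [wfun_eq ht, show ν + 1/2 - 1 = ν - 1/2 by ring]
    push_cast
    norm_num
  have hcast : ((2*t : ℝ):ℂ) = 2 * (t:ℂ) := by push_cast; ring
  have h3 : ((2*t : ℝ):ℂ) * (t:ℂ)^((n:ℂ)-1) = 2 * (t:ℂ)^n := by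
    have e : (t:ℂ)^((n:ℂ)-1) * (t:ℂ)^(1:ℂ) = (t:ℂ)^(n:ℂ) := by
      rw [← Complex.cpow_add _ _ htc]; norm_num
    calc ((2*t : ℝ):ℂ) * (t:ℂ)^((n:ℂ)-1) = 2 * ((t:ℂ)^((n:ℂ)-1) * (t:ℂ)^(1:ℂ)) := by
          rw [Complex.cpow_one, hcast]; ring
    _ = 2 * (t:ℂ)^(n:ℂ) := by rw [e]
    _ = 2 * (t:ℂ)^n := by rw [Complex.cpow_natCast]
  rw [habs, h1, h2, Complex.real_smul, ← mul_assoc, h3, mul_assoc]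

lemma w_integrable (ν : ℂ) (hν : -1/2 < ν.re) :
    MeasureTheory.IntegrableOn (wfun ν) (Set.Ioo (0:ℝ) 1) := by
  have hc : 0 < (ν + 1/2).re := by
    simp only [Complex.add_re, Complex.ofReal_re, Complex.div_re, Complex.one_re,
      Complex.re_ofNat, Complex.normSq_ofNat, Complex.one_im, Complex.im_ofNat]
    norm_num
    linarith
  have h2 : (0:ℝ) < ((1:ℂ)/2).re := by norm_num
  have hbeta := Complex.betaIntegral_convergent h2 hc
  rw [intervalIntegrable_iff_integrableOn_Ioo_of_le zero_le_one] at hbeta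
  have himg := (integrableOn_image_iff_integrableOn_abs_deriv_smul measurableSet_Ioo sq_deriv
    sq_injOn (fun x : ℝ => (x:ℂ)^((1:ℂ)/2-1) * ((1:ℂ)-(x:ℂ))^(ν+1/2-1))).mp (by
      rwa [sq_image])
  have heq : Set.EqOn (fun t : ℝ => |2*t| • (((t^2:ℝ):ℂ)^((1:ℂ)/2-1) *
      ((1:ℂ)-((t^2:ℝ):ℂ))^(ν+1/2-1))) (fun t => (2:ℂ) * wfun ν t) (Set.Ioo 0 1) := by
    intro t ht
    have := cov_integrand ν 0 ht
    simpa using this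
  have h2w : MeasureTheory.IntegrableOn (fun t => (2:ℂ) * wfun ν t) (Set.Ioo (0:ℝ) 1) := by
    exact MeasureTheory.IntegrableOn.congr_fun himg heq measurableSet_Ioo
  have h3 := h2w.const_mul ((2:ℂ)⁻¹)
  exact MeasureTheory.IntegrableOn.congr_fun h3 (fun t _ => by ring) measurableSet_Ioo

lemma aux_ne_zero {s : ℂ} (h : 0 < s.re) : s ≠ 0 := fun hs => by simp [hs] at h

lemma aux_re_pos (m : ℕ) {p : ℂ} (hp : 0 < p.re) : 0 < ((m:ℂ) + p).re := by
  simp only [Complex.add_re, Complex.natCast_re]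
  positivity

lemma Gamma_half (m : ℕ) : Complex.Gamma ((m:ℂ) + 1/2) =
    (Real.sqrt Real.pi : ℂ) * (2*m).factorial / (4^m * m.factorial) := by
  induction m with
  | zero =>
      have h0 : ((0:ℕ):ℂ) + 1/2 = ((1/2 : ℝ) : ℂ) := by norm_num
      rw [h0, Complex.Gamma_ofReal, Real.Gamma_one_half_eq]
      norm_num
  | succ m ih =>
      have hne : (m:ℂ) + 1/2 ≠ 0 := aux_ne_zero (by
        simp only [Complex.add_re, Complex.natCast_re, Complex.div_re]
        norm_num
        positivity)
      have hstep : ((m+1 : ℕ):ℂ) + 1/2 = ((m:ℂ) + 1/2) + 1 := by push_cast; ring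
      rw [hstep, Complex.Gamma_add_one _ hne, ih]
      have h1 : ((2*(m+1)).factorial : ℂ) = (2*(m:ℂ)+2) * (2*(m:ℂ)+1) * (2*m).factorial := by
        have : 2*(m+1) = (2*m+1)+1 := by ring
        rw [this, Nat.factorial_succ, Nat.factorial_succ]; push_cast; ring
      have h2 : (((m+1)).factorial : ℂ) = ((m:ℂ)+1) * m.factorial := by
        rw [Nat.factorial_succ]; push_cast; ring
      have h4 : (4:ℂ)^(m+1) = 4 * 4^m := by rw [pow_succ]; ring
      rw [h1, h2, h4]
      have hm : (m.factorial : ℂ) ≠ 0 := by exact_mod_cast m.factorial_ne_zero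
      have h4m : (4:ℂ)^m ≠ 0 := by norm_num
      have hm1 : ((m:ℂ)+1) ≠ 0 := by exact_mod_cast Nat.succ_ne_zero m
      field_simp
      ring

lemma summable_gen (w p q : ℂ) (hw : w ≠ 0) (hp : 0 < p.re) (hq : 0 < q.re) :
    Summable (fun m : ℕ => (-1)^m * w^m / (Complex.Gamma ((m:ℂ)+p) * Complex.Gamma ((m:ℂ)+q))) := by
  set f : ℕ → ℂ := fun m => (-1)^m * w^m / (Complex.Gamma ((m:ℂ)+p) * Complex.Gamma ((m:ℂ)+q)) with hf
  have hGp : ∀ m : ℕ, Complex.Gamma ((m:ℂ)+p) ≠ 0 := fun m =>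
    Complex.Gamma_ne_zero_of_re_pos (aux_re_pos m hp)
  have hGq : ∀ m : ℕ, Complex.Gamma ((m:ℂ)+q) ≠ 0 := fun m =>
    Complex.Gamma_ne_zero_of_re_pos (aux_re_pos m hq)
  have hfne : ∀ m, f m ≠ 0 := fun m => div_ne_zero
    (mul_ne_zero (pow_ne_zero _ (by norm_num)) (pow_ne_zero _ hw))
    (mul_ne_zero (hGp m) (hGq m))
  have hratio : ∀ m : ℕ, f (m+1) / f m = -w / (((m:ℂ)+p) * ((m:ℂ)+q)) := by
    intro m
    have e1 : Complex.Gamma (((m+1:ℕ):ℂ)+p) = ((m:ℂ)+p) * Complex.Gamma ((m:ℂ)+p) := by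
      have : ((m+1:ℕ):ℂ)+p = ((m:ℂ)+p)+1 := by push_cast; ring
      rw [this, Complex.Gamma_add_one _ (aux_ne_zero (aux_re_pos m hp))]
    have e2 : Complex.Gamma (((m+1:ℕ):ℂ)+q) = ((m:ℂ)+q) * Complex.Gamma ((m:ℂ)+q) := by
      have : ((m+1:ℕ):ℂ)+q = ((m:ℂ)+q)+1 := by push_cast; ring
      rw [this, Complex.Gamma_add_one _ (aux_ne_zero (aux_re_pos m hq))]
    simp only [hf, e1, e2, pow_succ]
    have h1 := hGp m; have h2 := hGq m
    have h3 := aux_ne_zero (aux_re_pos m hp)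
    have h4 := aux_ne_zero (aux_re_pos m hq)
    field_simp
  apply summable_of_ratio_test_tendsto_lt_one (l := 0) one_pos
    (Filter.Eventually.of_forall hfne)
  have key : ∀ m : ℕ, ‖f (m+1)‖ / ‖f m‖ = ‖w‖ / (‖(m:ℂ)+p‖ * ‖(m:ℂ)+q‖) := by
    intro m
    rw [← norm_div, hratio]
    simp [norm_div, norm_mul]
  simp only [key]
  apply squeeze_zero' (g := fun m : ℕ => ‖w‖ / m)
  · exact Filter.Eventually.of_forall fun m => by positivity
  · filter_upwards [Filter.eventually_ge_atTop 1] with m hm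
    have hm1 : (1:ℝ) ≤ m := by exact_mod_cast hm
    have l1 : (m:ℝ) ≤ ‖(m:ℂ)+p‖ := by
      calc (m:ℝ) ≤ ((m:ℂ)+p).re := by simpa [Complex.add_re] using hp.le
      _ ≤ ‖(m:ℂ)+p‖ := Complex.re_le_norm _
    have l2 : (1:ℝ) ≤ ‖(m:ℂ)+q‖ := by
      calc (1:ℝ) ≤ m := hm1
      _ ≤ ((m:ℂ)+q).re := by simpa [Complex.add_re] using hq.le
      _ ≤ ‖(m:ℂ)+q‖ := Complex.re_le_norm _
    apply div_le_div_of_nonneg_left (norm_nonneg w) (by linarith)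
    calc (m:ℝ) = m * 1 := (mul_one _).symm
    _ ≤ ‖(m:ℂ)+p‖ * ‖(m:ℂ)+q‖ := mul_le_mul l1 l2 zero_le_one (norm_nonneg _)
  · exact tendsto_const_div_atTop_nhds_zero_nat ‖w‖

lemma wfun_meas (ν : ℂ) : Measurable (wfun ν) := by
  apply Complex.measurable_exp.comp
  apply Measurable.const_mul
  exact Complex.measurable_ofReal.comp (Real.measurable_log.comp (by fun_prop))

lemma c_re_pos {ν : ℂ} (hν : -1/2 < ν.re) : 0 < (ν + 1/2).re := by
  simp only [Complex.add_re, Complex.div_re, Complex.one_re, Complex.re_ofNat,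
    Complex.one_im, Complex.im_ofNat]
  norm_num
  linarith

lemma B_eval (ν : ℂ) (hν : -1/2 < ν.re) (n : ℕ) :
    ∫ t in Set.Ioo (0:ℝ) 1, (t:ℂ)^n * wfun ν t =
      Complex.Gamma (((n:ℂ)+1)/2) * Complex.Gamma (ν+1/2) /
        (2 * Complex.Gamma (((n:ℂ)+1)/2 + (ν+1/2))) := by
  set u := ((n:ℂ)+1)/2 with hu_def
  set c := ν+1/2 with hc_def
  have hu : 0 < u.re := by
    have : u = (((n+1:ℝ)/2 : ℝ):ℂ) := by rw [hu_def]; push_cast; ring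
    rw [this, Complex.ofReal_re]
    positivity
  have hc : 0 < c.re := c_re_pos hν
  have huc : Complex.Gamma (u + c) ≠ 0 :=
    Complex.Gamma_ne_zero_of_re_pos (by rw [Complex.add_re]; linarith)
  have hbeta := Complex.Gamma_mul_Gamma_eq_betaIntegral hu hc
  have hcov : Complex.betaIntegral u c = 2 * ∫ t in Set.Ioo (0:ℝ) 1, (t:ℂ)^n * wfun ν t := by
    rw [Complex.betaIntegral, intervalIntegral.integral_of_le zero_le_one,
      MeasureTheory.integral_Ioc_eq_integral_Ioo, beta_cov, ← MeasureTheory.integral_const_mul]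
    apply MeasureTheory.setIntegral_congr_fun measurableSet_Ioo
    intro t ht
    have := cov_integrand ν n ht
    push_cast at this ⊢
    convert this using 3
  rw [hcov] at hbeta
  field_simp at hbeta ⊢
  linear_combination -hbeta

lemma exp_int (ν z : ℂ) (hν : -1/2 < ν.re) (a : ℂ) :
    ∫ t in Set.Ioo (0:ℝ) 1, Complex.exp (a * t) * wfun ν t =
      ∑' n : ℕ, a^n / n.factorial * ∫ t in Set.Ioo (0:ℝ) 1, (t:ℂ)^n * wfun ν t := by
  have hwint := w_integrable ν hν
  have hmeas : ∀ n : ℕ, Measurable (fun t : ℝ => a^n / n.factorial * ((t:ℂ)^n * wfun ν t)) := by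
    intro n
    apply Measurable.const_mul
    exact ((Complex.measurable_ofReal.pow_const n).mul (wfun_meas ν))
  have hint : ∀ n : ℕ, MeasureTheory.IntegrableOn
      (fun t : ℝ => a^n / n.factorial * ((t:ℂ)^n * wfun ν t)) (Set.Ioo (0:ℝ) 1) := by
    intro n
    have hbound : ∀ᵐ (t : ℝ) ∂(MeasureTheory.volume.restrict (Set.Ioo (0:ℝ) 1)),
        ‖a^n / n.factorial * ((t:ℂ)^n * wfun ν t)‖ ≤ ‖(‖a‖^n / n.factorial : ℝ) • wfun ν t‖ := by
      filter_upwards [MeasureTheory.ae_restrict_mem measurableSet_Ioo] with t ht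
      rw [norm_smul, norm_mul, norm_mul]
      have h1 : ‖(t:ℂ)^n‖ ≤ 1 := by
        rw [norm_pow, Complex.norm_real]
        apply pow_le_one₀ (abs_nonneg t)
        rw [abs_of_pos ht.1]
        exact ht.2.le
      have h2 : ‖a^n / (n.factorial:ℂ)‖ = ‖a‖^n / n.factorial := by
        rw [norm_div, norm_pow]
        norm_num
      rw [h2]
      have h3 : ‖(‖a‖^n / (n.factorial:ℝ))‖ = ‖a‖^n / n.factorial := by
        rw [Real.norm_of_nonneg]
        positivity
      rw [h3, mul_comm ‖(t:ℂ)^n‖]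
      calc ‖a‖^n / n.factorial * (‖wfun ν t‖ * ‖(t:ℂ)^n‖)
          ≤ ‖a‖^n / n.factorial * (‖wfun ν t‖ * 1) := by
            apply mul_le_mul_of_nonneg_left _ (by positivity)
            exact mul_le_mul_of_nonneg_left h1 (norm_nonneg _)
      _ = ‖a‖^n / n.factorial * ‖wfun ν t‖ := by ring
    exact MeasureTheory.Integrable.mono (hwint.smul ((‖a‖^n / n.factorial : ℝ)))
      (hmeas n).aestronglyMeasurable hbound
  have hsum : Summable (fun n : ℕ =>
      ∫ t in Set.Ioo (0:ℝ) 1, ‖a^n / n.factorial * ((t:ℂ)^n * wfun ν t)‖) := by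
    apply Summable.of_nonneg_of_le
      (fun n => MeasureTheory.integral_nonneg (fun t => norm_nonneg _))
      (fun n => ?_) ((Real.summable_pow_div_factorial ‖a‖).mul_right
        (∫ t in Set.Ioo (0:ℝ) 1, ‖wfun ν t‖))
    have hb : ∀ t ∈ Set.Ioo (0:ℝ) 1,
        ‖a^n / n.factorial * ((t:ℂ)^n * wfun ν t)‖ ≤ ‖a‖^n / n.factorial * ‖wfun ν t‖ := by
      intro t ht
      rw [norm_mul, norm_mul, norm_div, norm_pow]
      have h1 : ‖(t:ℂ)^n‖ ≤ 1 := by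
        rw [norm_pow, Complex.norm_real]
        apply pow_le_one₀ (abs_nonneg t)
        rw [abs_of_pos ht.1]
        exact ht.2.le
      have h2 : ‖(n.factorial : ℂ)‖ = (n.factorial : ℝ) := by norm_num
      rw [h2]
      calc ‖a‖^n / n.factorial * (‖(t:ℂ)^n‖ * ‖wfun ν t‖)
          ≤ ‖a‖^n / n.factorial * (1 * ‖wfun ν t‖) := by
            apply mul_le_mul_of_nonneg_left _ (by positivity)
            exact mul_le_mul_of_nonneg_right h1 (norm_nonneg _)
      _ = ‖a‖^n / n.factorial * ‖wfun ν t‖ := by ring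
    calc (∫ t in Set.Ioo (0:ℝ) 1, ‖a^n / n.factorial * ((t:ℂ)^n * wfun ν t)‖)
        ≤ ∫ t in Set.Ioo (0:ℝ) 1, ‖a‖^n / n.factorial * ‖wfun ν t‖ := by
          apply MeasureTheory.setIntegral_mono_on ((hint n).norm)
            ((hwint.norm).const_mul _) measurableSet_Ioo hb
    _ = ‖a‖^n / n.factorial * ∫ t in Set.Ioo (0:ℝ) 1, ‖wfun ν t‖ := by
          rw [MeasureTheory.integral_const_mul]
  have hswap := MeasureTheory.integral_tsum_of_summable_integral_norm hint hsum
  have hexp : ∀ t ∈ Set.Ioo (0:ℝ) 1, Complex.exp (a * t) * wfun ν t =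
      ∑' n : ℕ, a^n / n.factorial * ((t:ℂ)^n * wfun ν t) := by
    intro t _
    rw [Complex.exp_eq_exp_ℂ, NormedSpace.exp_eq_tsum_div, ← tsum_mul_right]
    congr 1
    funext n
    rw [mul_pow]
    ring
  rw [MeasureTheory.setIntegral_congr_fun measurableSet_Ioo hexp, ← hswap]
  congr 1
  funext n
  rw [MeasureTheory.integral_const_mul]

lemma sqrt_pi_ne : ((Real.sqrt Real.pi : ℝ):ℂ) ≠ 0 :=
  Complex.ofReal_ne_zero.mpr (ne_of_gt (Real.sqrt_pos.mpr Real.pi_pos))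

lemma eps_sq {ε z : ℂ} (hε : ε^2 = 1) (m : ℕ) :
    (ε*Complex.I*z)^(2*m) = (-1)^m * z^(2*m) := by
  rw [pow_mul, show (ε*Complex.I*z)^2 = -(z^2) by
    rw [mul_pow, mul_pow, hε, Complex.I_sq]; ring, neg_pow, ← pow_mul]

lemma half_pow {z : ℂ} (m : ℕ) : (z/2)^(2*m) = z^(2*m)/4^m := by
  rw [div_pow]
  congr 1
  rw [pow_mul]
  norm_num

lemma even_term (ν z ε : ℂ) (hν : -1/2 < ν.re) (hε : ε^2 = 1) (m : ℕ) :
    (ε*Complex.I*z)^(2*m) / ((2*m).factorial : ℂ) *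
      (Complex.Gamma ((((2*m:ℕ):ℂ)+1)/2) * Complex.Gamma (ν+1/2) /
        (2 * Complex.Gamma ((((2*m:ℕ):ℂ)+1)/2 + (ν+1/2)))) =
    ((Real.sqrt Real.pi : ℂ) * Complex.Gamma (ν+1/2) / 2) *
      ((-1)^m * (z/2)^(2*m) / ((m.factorial:ℂ) * Complex.Gamma ((m:ℂ)+ν+1))) := by
  have h1 : (((2*m:ℕ):ℂ)+1)/2 = (m:ℂ) + 1/2 := by push_cast; ring
  rw [h1, Gamma_half m, show (m:ℂ)+1/2 + (ν+1/2) = (m:ℂ)+ν+1 by ring,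
    eps_sq hε, half_pow]
  have hG : Complex.Gamma ((m:ℂ)+ν+1) ≠ 0 := Complex.Gamma_ne_zero_of_re_pos (by
    simp only [Complex.add_re, Complex.natCast_re, Complex.one_re]
    linarith)
  have hf1 : ((2*m).factorial : ℂ) ≠ 0 := by exact_mod_cast (2*m).factorial_ne_zero
  have hf2 : ((m).factorial : ℂ) ≠ 0 := by exact_mod_cast m.factorial_ne_zero
  have h4 : ((4:ℂ))^m ≠ 0 := by norm_num
  field_simp

lemma Gamma_half' (m : ℕ) : Complex.Gamma ((m:ℂ)+3/2) =
    (Real.sqrt Real.pi : ℂ) * ((2*m+1).factorial) / (2 * 4^m * m.factorial) := by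
  rw [show ((m:ℂ)+3/2) = (((m+1:ℕ):ℂ)+1/2) by push_cast; ring, Gamma_half (m+1)]
  have hexp1 : ((2*(m+1)).factorial : ℂ) = (2*(m:ℂ)+2) * ((2*m+1).factorial : ℂ) := by
    rw [show 2*(m+1) = (2*m+1)+1 by ring, Nat.factorial_succ]
    push_cast
    ring
  have hexp2 : (((m+1)).factorial : ℂ) = ((m:ℂ)+1) * (m.factorial : ℂ) := by
    rw [Nat.factorial_succ]
    push_cast
    ring
  rw [hexp1, hexp2, pow_succ]
  have hf2 : ((m).factorial : ℂ) ≠ 0 := by exact_mod_cast m.factorial_ne_zero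
  have h4 : ((4:ℂ))^m ≠ 0 := by norm_num
  have hm1 : ((m:ℂ)+1) ≠ 0 := by exact_mod_cast Nat.succ_ne_zero m
  field_simp
  ring

lemma odd_term (ν z ε : ℂ) (hν : -1/2 < ν.re) (hε : ε^2 = 1) (m : ℕ) :
    (ε*Complex.I*z)^(2*m+1) / ((2*m+1).factorial : ℂ) *
      (Complex.Gamma ((((2*m+1:ℕ):ℂ)+1)/2) * Complex.Gamma (ν+1/2) /
        (2 * Complex.Gamma ((((2*m+1:ℕ):ℂ)+1)/2 + (ν+1/2)))) =
    ε * Complex.I * (z/2) * ((Real.sqrt Real.pi : ℂ) * Complex.Gamma (ν+1/2) / 2) *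
      ((-1)^m * ((z/2)^2)^m /
        (Complex.Gamma ((m:ℂ)+3/2) * Complex.Gamma ((m:ℂ)+ν+3/2))) := by
  have h1 : (((2*m+1:ℕ):ℂ)+1)/2 = (m:ℂ) + 1 := by push_cast; ring
  rw [h1, Complex.Gamma_nat_eq_factorial m,
    show (m:ℂ)+1 + (ν+1/2) = (m:ℂ)+ν+3/2 by ring,
    Gamma_half' m, pow_succ, eps_sq hε,
    show ((z/2)^2)^m = z^(2*m)/4^m by rw [← pow_mul]; exact half_pow m]
  have hG : Complex.Gamma ((m:ℂ)+ν+3/2) ≠ 0 := Complex.Gamma_ne_zero_of_re_pos (by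
    rw [show ((m:ℂ)+ν+3/2) = ((m:ℂ)+ν+((3/2:ℝ):ℂ)) by norm_num,
      Complex.add_re, Complex.add_re, Complex.ofReal_re, Complex.natCast_re]
    linarith)
  have hf1 : ((2*m+1).factorial : ℂ) ≠ 0 := by exact_mod_cast (2*m+1).factorial_ne_zero
  have hf2 : ((m).factorial : ℂ) ≠ 0 := by exact_mod_cast m.factorial_ne_zero
  have h4 : ((4:ℂ))^m ≠ 0 := by norm_num
  have hsπ := sqrt_pi_ne
  have e1 : ((1:ℂ)/4)^m * 4^m = 1 := by
    rw [← mul_pow]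
    norm_num
  field_simp

lemma key (ν z : ℂ) (hν : -1 / 2 < ν.re) (hz : z ∈ Complex.slitPlane) (ε : ℂ) (hε : ε^2 = 1) :
    besselJ ν z + ε * Complex.I * struveH ν z =
      2 * (z / 2) ^ ν / ((Real.sqrt Real.pi : ℂ) * Complex.Gamma (ν + 1 / 2)) *
        ∫ t in (0 : ℝ)..1, Complex.exp (ε * Complex.I * z * t) * wfun ν t := by
  have hν' : -1/2 < ν.re := by linarith
  have hz0 : z ≠ 0 := Complex.slitPlane_ne_zero hz
  have hz2 : z/2 ≠ 0 := by
    intro h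
    apply hz0
    linear_combination 2*h
  have hw0 : (z/2)^2 ≠ 0 := pow_ne_zero _ hz2
  have hΓc : Complex.Gamma (ν+1/2) ≠ 0 := Complex.Gamma_ne_zero_of_re_pos (c_re_pos hν')
  have hre1 : 0 < ((1:ℂ)).re := by norm_num
  have hreν1 : 0 < ((ν+1:ℂ)).re := by
    rw [Complex.add_re, Complex.one_re]
    linarith
  have hre32 : 0 < ((3/2 : ℂ)).re := by norm_num
  have hreν32 : 0 < ((ν+3/2 : ℂ)).re := by
    rw [show (ν+3/2 : ℂ) = ν+((3/2:ℝ):ℂ) by norm_num, Complex.add_re, Complex.ofReal_re]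
    linarith
  -- summability of even/odd parts in target form
  have hJs : Summable (fun m : ℕ => (-1)^m * (z/2)^(2*m) /
      ((m.factorial:ℂ) * Complex.Gamma ((m:ℂ)+ν+1))) := by
    apply (summable_gen ((z/2)^2) 1 (ν+1) hw0 hre1 hreν1).congr
    intro m
    rw [← pow_mul, Complex.Gamma_nat_eq_factorial,
      show ((m:ℂ)+(ν+1)) = ((m:ℂ)+ν+1) by ring]
  have hGs : Summable (fun m : ℕ => (-1)^m * ((z/2)^2)^m /
      (Complex.Gamma ((m:ℂ)+3/2) * Complex.Gamma ((m:ℂ)+ν+3/2))) := by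
    apply (summable_gen ((z/2)^2) (3/2) (ν+3/2) hw0 hre32 hreν32).congr
    intro m
    rw [show ((m:ℂ)+(ν+3/2)) = ((m:ℂ)+ν+3/2) by ring]
  -- evaluate the integral
  rw [intervalIntegral.integral_of_le zero_le_one, MeasureTheory.integral_Ioc_eq_integral_Ioo,
    exp_int ν z hν' (ε * Complex.I * z)]
  simp_rw [B_eval ν hν']
  set f : ℕ → ℂ := fun n => (ε*Complex.I*z)^n / n.factorial *
    (Complex.Gamma (((n:ℂ)+1)/2) * Complex.Gamma (ν+1/2) /
      (2 * Complex.Gamma (((n:ℂ)+1)/2 + (ν+1/2)))) with hf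
  have heq_even : ∀ m : ℕ, f (2*m) =
      ((Real.sqrt Real.pi : ℂ) * Complex.Gamma (ν+1/2) / 2) *
        ((-1)^m * (z/2)^(2*m) / ((m.factorial:ℂ) * Complex.Gamma ((m:ℂ)+ν+1))) := by
    intro m
    rw [hf]
    exact even_term ν z ε hν' hε m
  have heq_odd : ∀ m : ℕ, f (2*m+1) =
      ε * Complex.I * (z/2) * ((Real.sqrt Real.pi : ℂ) * Complex.Gamma (ν+1/2) / 2) *
        ((-1)^m * ((z/2)^2)^m /
          (Complex.Gamma ((m:ℂ)+3/2) * Complex.Gamma ((m:ℂ)+ν+3/2))) := by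
    intro m
    rw [hf]
    exact odd_term ν z ε hν' hε m
  have heven : Summable (fun m : ℕ => f (2*m)) := by
    apply ((hJs.mul_left _).congr)
    intro m
    exact (heq_even m).symm
  have hodd : Summable (fun m : ℕ => f (2*m+1)) := by
    apply ((hGs.mul_left _).congr)
    intro m
    exact (heq_odd m).symm
  rw [← tsum_even_add_odd heven hodd]
  have hsum_even : (∑' m : ℕ, f (2*m)) =
      ((Real.sqrt Real.pi : ℂ) * Complex.Gamma (ν+1/2) / 2) *
        ∑' m : ℕ, (-1)^m * (z/2)^(2*m) / ((m.factorial:ℂ) * Complex.Gamma ((m:ℂ)+ν+1)) := by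
    rw [← tsum_mul_left]
    exact tsum_congr heq_even
  have hsum_odd : (∑' m : ℕ, f (2*m+1)) =
      ε * Complex.I * (z/2) * ((Real.sqrt Real.pi : ℂ) * Complex.Gamma (ν+1/2) / 2) *
        ∑' m : ℕ, (-1)^m * ((z/2)^2)^m /
          (Complex.Gamma ((m:ℂ)+3/2) * Complex.Gamma ((m:ℂ)+ν+3/2)) := by
    rw [← tsum_mul_left]
    exact tsum_congr heq_odd
  rw [hsum_even, hsum_odd, besselJ, struveH, struveG,
    show ((z/2) ^ (ν+1) : ℂ) = (z/2)^ν * (z/2) by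
      rw [Complex.cpow_add _ _ hz2, Complex.cpow_one]]
  have hsπ := sqrt_pi_ne
  set g := Complex.Gamma (ν + 1/2) with hg
  set S1 := ∑' m : ℕ, (-1)^m * (z/2)^(2*m) / ((m.factorial:ℂ) * Complex.Gamma ((m:ℂ)+ν+1))
    with hS1
  set S2 := ∑' m : ℕ, (-1)^m * ((z/2)^2)^m /
      (Complex.Gamma ((m:ℂ)+3/2) * Complex.Gamma ((m:ℂ)+ν+3/2)) with hS2
  field_simp

theorem stmt_4 (ν z : ℂ) (hν : -1 / 2 < ν.re) (hz : z ∈ Complex.slitPlane) :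
    (besselJ ν z + Complex.I * struveH ν z =
      2 * (z / 2) ^ ν / ((Real.sqrt Real.pi : ℂ) * Complex.Gamma (ν + 1 / 2)) *
        ∫ t in (0 : ℝ)..1,
          Complex.exp (Complex.I * z * t) *
            Complex.exp ((ν - 1 / 2) * (Real.log (1 - t ^ 2) : ℂ))) ∧
    (besselJ ν z - Complex.I * struveH ν z =
      2 * (z / 2) ^ ν / ((Real.sqrt Real.pi : ℂ) * Complex.Gamma (ν + 1 / 2)) *
        ∫ t in (0 : ℝ)..1,
          Complex.exp (-(Complex.I * z * t)) *
            Complex.exp ((ν - 1 / 2) * (Real.log (1 - t ^ 2) : ℂ))) := by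
  constructor
  · have h := key ν z hν hz 1 (by norm_num)
    simpa [wfun] using h
  · have h := key ν z hν hz (-1) (by norm_num)
    simpa [wfun, neg_mul, sub_eq_add_neg] using h
end

section
/- Let ν ∈ ℂ with Re(ν) > −1/2 and z ∈ ℂ ∖ (−∞,0]. Then H_ν(z) = (2 (z/2)^ν /(√π · Γ(ν+1/2))) · ∫₀^1 sin(zt) (1−t²)^{ν−1/2} dt, where for 0 < t < 1 one sets (1−t²)^{ν−1/2} = exp((ν−1/2) ln(1−t²)) with the real logarithm, sin is the complex sine, and (z/2)^ν is the principal branch. -/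
open Complex MeasureTheory Set intervalIntegral
open scoped Nat


lemma gamma_dup (n : ℕ) :
    ((n : ℕ)! : ℂ) * Complex.Gamma ((n : ℂ) + 3 / 2) * 2 ^ (2 * n + 1) =
      (Real.sqrt Real.pi : ℂ) * ((2 * n + 1)! : ℂ) := by
  have h := Complex.Gamma_mul_Gamma_add_half ((n : ℂ) + 1)
  rw [show (n : ℂ) + 1 + 1 / 2 = (n : ℂ) + 3 / 2 by ring] at h
  rw [show (2 : ℂ) * ((n : ℂ) + 1) = ((2 * n + 1 : ℕ) : ℂ) + 1 by push_cast; ring] at h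
  rw [Complex.Gamma_nat_eq_factorial, Complex.Gamma_nat_eq_factorial] at h
  rw [show (1 : ℂ) - (((2 * n + 1 : ℕ) : ℂ) + 1) = -((2 * n + 1 : ℕ) : ℂ) by push_cast; ring,
    Complex.cpow_neg, Complex.cpow_natCast] at h
  have h2 : ((2 : ℂ) ^ (2 * n + 1)) ≠ 0 := pow_ne_zero _ two_ne_zero
  field_simp at h
  rw [show ((n : ℂ) * 2 + 3) / 2 = (n : ℂ) + 3 / 2 by ring] at h
  linear_combination h

lemma struve_beta {ν : ℂ} (hν : -1 / 2 < ν.re) (n : ℕ) :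
    ∫ t in Ioo (0 : ℝ) 1, (t : ℂ) ^ (2 * n + 1) *
        Complex.exp ((ν - 1 / 2) * (Real.log (1 - t ^ 2) : ℂ)) =
      ((n : ℕ)! : ℂ) * Complex.Gamma (ν + 1 / 2) /
        (2 * Complex.Gamma ((n : ℂ) + ν + 3 / 2)) := by
  set g : ℝ → ℂ := fun s => (s : ℂ) ^ n * Complex.exp ((ν - 1 / 2) * (Real.log (1 - s) : ℂ))
    with hg
  have himg : (fun t : ℝ => t ^ 2) '' Ioo 0 1 = Ioo 0 1 := by
    ext x
    constructor
    · rintro ⟨t, ht, rfl⟩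
      exact ⟨pow_pos ht.1 2, pow_lt_one₀ ht.1.le ht.2 two_ne_zero⟩
    · rintro ⟨hx0, hx1⟩
      exact ⟨Real.sqrt x, ⟨Real.sqrt_pos.mpr hx0, by simpa using Real.sqrt_lt_sqrt hx0.le hx1⟩,
        Real.sq_sqrt hx0.le⟩
  have hderiv : ∀ x ∈ Ioo (0 : ℝ) 1,
      HasDerivWithinAt (fun t : ℝ => t ^ 2) (2 * x) (Ioo 0 1) x := by
    intro x _
    simpa using (hasDerivAt_pow 2 x).hasDerivWithinAt
  have hinj : InjOn (fun t : ℝ => t ^ 2) (Ioo 0 1) := by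
    intro a ha b hb hab
    simp only at hab
    nlinarith [ha.1, hb.1]
  have key := integral_image_eq_integral_abs_deriv_smul measurableSet_Ioo hderiv hinj g
  rw [himg] at key
  have key2 : ∫ x in Ioo (0:ℝ) 1, g x =
      2 * ∫ t in Ioo (0 : ℝ) 1, (t : ℂ) ^ (2 * n + 1) *
        Complex.exp ((ν - 1 / 2) * (Real.log (1 - t ^ 2) : ℂ)) := by
    rw [key, ← MeasureTheory.integral_const_mul]
    refine setIntegral_congr_fun measurableSet_Ioo fun t ht => ?_
    have h2t : |2 * t| = 2 * t := abs_of_pos (by linarith [ht.1])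
    rw [h2t, hg]
    simp only [real_smul]
    push_cast
    ring
  have hbeta : Complex.betaIntegral ((n : ℂ) + 1) (ν + 1 / 2) = ∫ x in Ioo (0:ℝ) 1, g x := by
    rw [Complex.betaIntegral, intervalIntegral.integral_of_le zero_le_one,
      integral_Ioc_eq_integral_Ioo]
    refine setIntegral_congr_fun measurableSet_Ioo fun x hx => ?_
    obtain ⟨hx0, hx1⟩ := hx
    have h1x : (0 : ℝ) < 1 - x := by linarith
    rw [hg]
    congr 1
    · rw [add_sub_cancel_right, Complex.cpow_natCast]
    · rw [show (1 : ℂ) - (x : ℂ) = ((1 - x : ℝ) : ℂ) by push_cast; ring,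
        Complex.cpow_def_of_ne_zero (by exact_mod_cast h1x.ne' : ((1 - x : ℝ) : ℂ) ≠ 0),
        ← Complex.ofReal_log h1x.le]
      congr 1
      ring
  have hre1 : 0 < ((n : ℂ) + 1).re := by
    simp only [add_re, natCast_re, one_re]
    positivity
  have hre2 : 0 < (ν + 1 / 2).re := by
    have : ((1 / 2 : ℂ)).re = 1 / 2 := by norm_num
    rw [add_re, this]
    linarith
  have hG := Complex.Gamma_mul_Gamma_eq_betaIntegral hre1 hre2
  rw [show (n : ℂ) + 1 + (ν + 1 / 2) = (n : ℂ) + ν + 3 / 2 by ring] at hG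
  have hGne : Complex.Gamma ((n : ℂ) + ν + 3 / 2) ≠ 0 := by
    apply Complex.Gamma_ne_zero_of_re_pos
    rw [add_re, add_re]
    have : (0:ℝ) ≤ ((n : ℂ)).re := by simp
    simp only [natCast_re]
    have h32 : ((3 / 2 : ℂ)).re = 3 / 2 := by norm_num
    rw [h32]
    have : (0:ℝ) ≤ (n:ℝ) := Nat.cast_nonneg n
    linarith
  rw [Complex.Gamma_nat_eq_factorial, hbeta, key2] at hG
  rw [eq_div_iff (mul_ne_zero two_ne_zero hGne)]
  linear_combination -hG


set_option maxHeartbeats 1000000 in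
theorem stmt_5 (ν z : ℂ) (hν : -1 / 2 < ν.re) (hz : z ∈ Complex.slitPlane) :
    struveH ν z =
      2 * (z / 2) ^ ν / ((Real.sqrt Real.pi : ℂ) * Complex.Gamma (ν + 1 / 2)) *
        ∫ t in (0 : ℝ)..1,
          Complex.sin (z * t) * Complex.exp ((ν - 1 / 2) * (Real.log (1 - t ^ 2) : ℂ)) := by
  have hz0 : z ≠ 0 := Complex.slitPlane_ne_zero hz
  set E : ℝ → ℂ := fun t => Complex.exp ((ν - 1 / 2) * (Real.log (1 - t ^ 2) : ℂ)) with hEdef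
  have hEmeas : Measurable E := by
    rw [hEdef]
    exact Complex.measurable_exp.comp (measurable_const.mul
      (Complex.measurable_ofReal.comp (Real.measurable_log.comp
        (measurable_const.sub (measurable_id.pow_const 2)))))
  have hnormE : ∀ t : ℝ, ‖E t‖ = Real.exp ((ν.re - 1 / 2) * Real.log (1 - t ^ 2)) := by
    intro t
    rw [hEdef]
    simp only [Complex.norm_exp]
    congr 1
    have h12 : (ν - 1 / 2 : ℂ) = ν - ((1 / 2 : ℝ) : ℂ) := by norm_num
    simp [h12, Complex.mul_re, Complex.sub_re]
  have ha : (-1 : ℝ) < ν.re - 1 / 2 := by linarith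
  have hIg : IntegrableOn (fun t : ℝ => 1 + (1 - t) ^ (ν.re - 1 / 2)) (Ioc (0 : ℝ) 1) := by
    apply Integrable.add
    · exact integrableOn_const measure_Ioc_lt_top.ne
    · have h1 := (intervalIntegral.intervalIntegrable_rpow' (r := ν.re - 1 / 2)
        (a := 0) (b := 1) ha).comp_sub_left 1
      simp only [sub_self, sub_zero] at h1
      exact h1.2
  have hEb : ∀ᵐ t ∂(volume.restrict (Ioc (0 : ℝ) 1)),
      ‖E t‖ ≤ 1 + (1 - t) ^ (ν.re - 1 / 2) := by
    filter_upwards [ae_restrict_mem measurableSet_Ioc] with t ht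
    rw [hnormE]
    rcases eq_or_lt_of_le ht.2 with h1 | h1
    · subst h1
      rw [show (1 : ℝ) - 1 ^ 2 = 0 by norm_num, Real.log_zero, mul_zero, Real.exp_zero,
        show (1 : ℝ) - 1 = 0 by norm_num]
      exact le_add_of_nonneg_right (Real.rpow_nonneg le_rfl _)
    · have h0 : (0 : ℝ) < 1 - t ^ 2 := by nlinarith [ht.1]
      rw [mul_comm, ← Real.rpow_def_of_pos h0]
      rcases le_or_gt 0 (ν.re - 1 / 2) with hc | hc
      · have hle := Real.rpow_le_one (show (0:ℝ) ≤ 1 - t ^ 2 by nlinarith [ht.1])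
          (show (1:ℝ) - t ^ 2 ≤ 1 by nlinarith [ht.1]) hc
        have h2 := Real.rpow_nonneg (show (0 : ℝ) ≤ 1 - t by linarith) (ν.re - 1 / 2)
        linarith
      · have hfact : (1 - t ^ 2 : ℝ) = (1 - t) * (1 + t) := by ring
        rw [hfact, Real.mul_rpow (by linarith) (by linarith [ht.1])]
        have h2 : (1 + t) ^ (ν.re - 1 / 2) ≤ 1 :=
          Real.rpow_le_one_of_one_le_of_nonpos (by linarith [ht.1]) hc.le
        have h3 := Real.rpow_nonneg (show (0 : ℝ) ≤ 1 - t by linarith) (ν.re - 1 / 2)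
        have h4 := Real.rpow_nonneg (show (0 : ℝ) ≤ 1 + t by linarith [ht.1]) (ν.re - 1 / 2)
        nlinarith
  have hEint : IntegrableOn E (Ioc (0 : ℝ) 1) :=
    Integrable.mono' hIg hEmeas.aestronglyMeasurable.restrict hEb
  set F : ℕ → ℝ → ℂ := fun n t =>
    ((-1) ^ n * z ^ (2 * n + 1) / ((2 * n + 1)! : ℂ)) * ((t : ℂ) ^ (2 * n + 1) * E t) with hFdef
  have hcn : ∀ n : ℕ, ‖(-1 : ℂ) ^ n * z ^ (2 * n + 1) / ((2 * n + 1)! : ℂ)‖ =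
      ‖z‖ ^ (2 * n + 1) / ((2 * n + 1)! : ℝ) := by
    intro n
    rw [norm_div, norm_mul, norm_pow, norm_pow]
    simp
  have hFle : ∀ n : ℕ, ∀ᵐ t ∂(volume.restrict (Ioc (0 : ℝ) 1)),
      ‖F n t‖ ≤ ‖z‖ ^ (2 * n + 1) / ((2 * n + 1)! : ℝ) * ‖E t‖ := by
    intro n
    filter_upwards [ae_restrict_mem measurableSet_Ioc] with t ht
    rw [hFdef]
    simp only
    rw [norm_mul, hcn, norm_mul, norm_pow]
    have h1 : ‖(t : ℂ)‖ ≤ 1 := by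
      rw [Complex.norm_real, Real.norm_eq_abs, abs_of_pos ht.1]
      exact ht.2
    have hp : ‖(t : ℂ)‖ ^ (2 * n + 1) ≤ 1 := pow_le_one₀ (norm_nonneg _) h1
    have hcnn : (0:ℝ) ≤ ‖z‖ ^ (2 * n + 1) / ((2 * n + 1)! : ℝ) := by positivity
    have hEnn : (0:ℝ) ≤ ‖E t‖ := norm_nonneg _
    have := mul_le_of_le_one_left hEnn hp
    nlinarith
  have hFmeas : ∀ n : ℕ, AEStronglyMeasurable (F n) (volume.restrict (Ioc (0 : ℝ) 1)) := by
    intro n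
    refine (Measurable.aestronglyMeasurable ?_).restrict
    rw [hFdef]
    exact (measurable_const.mul
      ((Complex.measurable_ofReal.pow_const _).mul hEmeas))
  have hFint : ∀ n : ℕ, Integrable (F n) (volume.restrict (Ioc (0 : ℝ) 1)) := fun n =>
    Integrable.mono' ((hEint.norm).const_mul _) (hFmeas n) (hFle n)
  have hsum : Summable fun n : ℕ => ∫ t in Ioc (0 : ℝ) 1, ‖F n t‖ := by
    have h1 : Summable (fun n : ℕ => ‖z‖ ^ n / (n ! : ℝ)) := Real.summable_pow_div_factorial ‖z‖
    have h2 : Summable (fun n : ℕ => ‖z‖ ^ (2 * n + 1) / ((2 * n + 1)! : ℝ)) :=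
      h1.comp_injective (fun a b hab => by simp only at hab; omega :
        Function.Injective fun n : ℕ => 2 * n + 1)
    refine Summable.of_nonneg_of_le (fun n => integral_nonneg fun t => norm_nonneg _)
      (fun n => ?_) (h2.mul_right (∫ t in Ioc (0 : ℝ) 1, ‖E t‖))
    calc (∫ t in Ioc (0 : ℝ) 1, ‖F n t‖)
        ≤ ∫ t in Ioc (0 : ℝ) 1, ‖z‖ ^ (2 * n + 1) / ((2 * n + 1)! : ℝ) * ‖E t‖ :=
          integral_mono_ae (hFint n).norm ((hEint.norm).const_mul _) (hFle n)
      _ = ‖z‖ ^ (2 * n + 1) / ((2 * n + 1)! : ℝ) * ∫ t in Ioc (0 : ℝ) 1, ‖E t‖ :=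
          MeasureTheory.integral_const_mul _ _
  have hkey := MeasureTheory.hasSum_integral_of_summable_integral_norm hFint hsum
  have htsum : ∀ t : ℝ, ∑' n : ℕ, F n t = Complex.sin (z * (t : ℂ)) * E t := by
    intro t
    have hs := (Complex.hasSum_sin (z * (t : ℂ))).mul_right (E t)
    have heq : (fun n : ℕ => ((-1) ^ n * (z * (t : ℂ)) ^ (2 * n + 1) / ((2 * n + 1)! : ℂ)) * E t)
        = fun n : ℕ => F n t := by
      funext n
      rw [hFdef]
      simp only
      rw [mul_pow]
      ring
    exact (heq ▸ hs).tsum_eq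
  have hIoc : (∫ t in (0:ℝ)..1, Complex.sin (z * (t : ℂ)) * E t)
      = ∑' n : ℕ, ∫ t in Ioc (0 : ℝ) 1, F n t := by
    rw [intervalIntegral.integral_of_le zero_le_one]
    calc (∫ t in Ioc (0 : ℝ) 1, Complex.sin (z * (t : ℂ)) * E t)
        = ∫ t in Ioc (0 : ℝ) 1, ∑' n : ℕ, F n t :=
          setIntegral_congr_fun measurableSet_Ioc fun t _ => (htsum t).symm
      _ = ∑' n : ℕ, ∫ t in Ioc (0 : ℝ) 1, F n t := hkey.tsum_eq.symm
  have hFn_eq : ∀ n : ℕ, (∫ t in Ioc (0 : ℝ) 1, F n t)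
      = ((-1) ^ n * z ^ (2 * n + 1) / ((2 * n + 1)! : ℂ)) *
        (((n : ℕ)! : ℂ) * Complex.Gamma (ν + 1 / 2) /
          (2 * Complex.Gamma ((n : ℂ) + ν + 3 / 2))) := by
    intro n
    rw [hFdef]
    simp only
    rw [MeasureTheory.integral_const_mul, integral_Ioc_eq_integral_Ioo, struve_beta hν n]
  have hInt : (∫ t in (0:ℝ)..1, Complex.sin (z * (t : ℂ)) *
        Complex.exp ((ν - 1 / 2) * (Real.log (1 - t ^ 2) : ℂ)))
      = ∑' n : ℕ, ((-1) ^ n * z ^ (2 * n + 1) / ((2 * n + 1)! : ℂ)) *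
        (((n : ℕ)! : ℂ) * Complex.Gamma (ν + 1 / 2) /
          (2 * Complex.Gamma ((n : ℂ) + ν + 3 / 2))) := by
    calc (∫ t in (0:ℝ)..1, Complex.sin (z * (t : ℂ)) *
          Complex.exp ((ν - 1 / 2) * (Real.log (1 - t ^ 2) : ℂ)))
        = ∑' n : ℕ, ∫ t in Ioc (0 : ℝ) 1, F n t := hIoc
      _ = _ := tsum_congr hFn_eq
  rw [struveH, struveG, hInt, ← tsum_mul_left, ← tsum_mul_left]
  refine tsum_congr fun n => ?_
  have hz2 : (z / 2 : ℂ) ≠ 0 := div_ne_zero hz0 two_ne_zero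
  have hdup := gamma_dup n
  have hG1 : Complex.Gamma ((n : ℂ) + 3 / 2) ≠ 0 := by
    apply Complex.Gamma_ne_zero_of_re_pos
    rw [show ((n : ℂ) + 3 / 2) = ((n : ℂ) + ((3 / 2 : ℝ) : ℂ)) by norm_num, add_re, ofReal_re,
      natCast_re]
    positivity
  have hG2 : Complex.Gamma ((n : ℂ) + ν + 3 / 2) ≠ 0 := by
    apply Complex.Gamma_ne_zero_of_re_pos
    rw [show ((n : ℂ) + ν + 3 / 2) = ((n : ℂ) + ν + ((3 / 2 : ℝ) : ℂ)) by norm_num, add_re,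
      add_re, ofReal_re, natCast_re]
    have : (0 : ℝ) ≤ (n : ℝ) := Nat.cast_nonneg n
    linarith
  have hGh : Complex.Gamma (ν + 1 / 2) ≠ 0 := by
    apply Complex.Gamma_ne_zero_of_re_pos
    rw [show (ν + 1 / 2 : ℂ) = ν + ((1 / 2 : ℝ) : ℂ) by norm_num, add_re, ofReal_re]
    linarith
  have hpi : ((Real.sqrt Real.pi : ℝ) : ℂ) ≠ 0 :=
    ofReal_ne_zero.mpr (ne_of_gt (Real.sqrt_pos.mpr Real.pi_pos))
  have hfac : ((2 * n + 1)! : ℂ) ≠ 0 := Nat.cast_ne_zero.mpr (Nat.factorial_ne_zero _)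
  rw [Complex.cpow_add _ _ hz2, Complex.cpow_one,
    show z ^ (2 * n + 1) = 2 ^ (2 * n + 1) * (z / 2) ^ (2 * n + 1) by
      rw [← mul_pow]; congr 1; ring,
    show ((z / 2) ^ 2) ^ n = (z / 2) ^ (2 * n) from (pow_mul _ 2 n).symm]
  generalize hA : Complex.Gamma ((n : ℂ) + 3 / 2) = G1 at hG1 hdup
  generalize hB : Complex.Gamma ((n : ℂ) + ν + 3 / 2) = G2 at hG2
  generalize hC : Complex.Gamma (ν + 1 / 2) = Gh at hGh
  generalize hD : ((Real.sqrt Real.pi : ℝ) : ℂ) = P at hpi hdup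
  field_simp
  linear_combination ((-2) * (z / 2) ^ ν * (z / 2) ^ (2 * n + 1)) * hdup
end

section
/- Let q ∈ ℂ. There exist r > 0 and a holomorphic function U on the open ball B(0,r) ⊂ ℂ with U(0) = 0, 1+U(t)² ∉ (−∞,0] for all t ∈ B(0,r), and U(t) − q·Log(1+U(t)²) = t for all t ∈ B(0,r) (i.e. U is a local inverse of τ_q at 0). Moreover the holomorphic function φ(t) = U'(t) · (1+U(t)²)^{−1/2} (principal branch) satisfies φ(0) = 1, φ'(0) = 2q, and φ''(0) = 12q² − 1. (Thus the coefficients c_k(q) of the expansion (1+u²)^{−1/2} du/dτ = Σ c_k(q) τ^k satisfy c₀ = 1, c₁ = 2q, c₂ = 6q² − 1/2.) -/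
open Complex

namespace Stmt12Aux

open Filter Topology

noncomputable section

/-- the phase function -/
def f (q : ℂ) (z : ℂ) : ℂ := z - q * Complex.log (1 + z ^ 2)

/-- derivative of the local inverse, as a function of `U t` -/
def g (q : ℂ) (z : ℂ) : ℂ := (1 + z ^ 2) / (1 + z ^ 2 - 2 * q * z)

/-- the function `φ ∘ U⁻¹` -/
def G (q : ℂ) (z : ℂ) : ℂ := (1 + z ^ 2) ^ ((1 : ℂ) / 2) / (1 + z ^ 2 - 2 * q * z)

/-- derivative of `G` -/
def G1 (q : ℂ) (z : ℂ) : ℂ :=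
  (z * (1 + z ^ 2) ^ (-(1 / 2) : ℂ) * (1 + z ^ 2 - 2 * q * z)
    - (1 + z ^ 2) ^ ((1 : ℂ) / 2) * (2 * z - 2 * q)) / (1 + z ^ 2 - 2 * q * z) ^ 2

lemma Dn' (z : ℂ) : HasStrictDerivAt (fun z : ℂ => 1 + z ^ 2) (2 * z) z := by
  simpa using (hasStrictDerivAt_pow 2 z).const_add 1

lemma Dn (z : ℂ) : HasDerivAt (fun z : ℂ => 1 + z ^ 2) (2 * z) z := (Dn' z).hasDerivAt

lemma Dd (q z : ℂ) :
    HasDerivAt (fun z : ℂ => 1 + z ^ 2 - 2 * q * z) (2 * z - 2 * q) z := by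
  exact ((Dn z).sub ((hasDerivAt_id z).const_mul (2 * q))).congr_deriv (by ring)

lemma Dhalf (z : ℂ) (h : 1 + z ^ 2 ∈ slitPlane) :
    HasDerivAt (fun z : ℂ => (1 + z ^ 2) ^ ((1 : ℂ) / 2))
      (z * (1 + z ^ 2) ^ (-(1 / 2) : ℂ)) z := by
  have h2 : ((1 : ℂ) / 2 - 1) = (-(1 / 2) : ℂ) := by norm_num
  have := (Dn z).cpow_const (c := (1 : ℂ) / 2) h
  rw [h2] at this
  convert this using 1
  ring

lemma Dneghalf (z : ℂ) (h : 1 + z ^ 2 ∈ slitPlane) :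
    HasDerivAt (fun z : ℂ => (1 + z ^ 2) ^ (-(1 / 2) : ℂ))
      (-(z * (1 + z ^ 2) ^ (-(3 / 2) : ℂ))) z := by
  have h2 : ((-(1 / 2) : ℂ) - 1) = (-(3 / 2) : ℂ) := by norm_num
  have := (Dn z).cpow_const (c := (-(1 / 2) : ℂ)) h
  rw [h2] at this
  convert this using 1
  ring

lemma Dg (q z : ℂ) (hd0 : 1 + z ^ 2 - 2 * q * z ≠ 0) :
    HasDerivAt (g q)
      ((2 * z * (1 + z ^ 2 - 2 * q * z) - (1 + z ^ 2) * (2 * z - 2 * q)) /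
        (1 + z ^ 2 - 2 * q * z) ^ 2) z :=
  (Dn z).div (Dd q z) hd0

lemma DG (q z : ℂ) (hsl : 1 + z ^ 2 ∈ slitPlane) (hd0 : 1 + z ^ 2 - 2 * q * z ≠ 0) :
    HasDerivAt (G q) (G1 q z) z := by
  have := (Dhalf z hsl).div (Dd q z) hd0
  exact this

lemma slit0 : (1 : ℂ) + (0 : ℂ) ^ 2 ∈ slitPlane := by
  norm_num

lemma Dg0 (q : ℂ) : HasDerivAt (g q) (2 * q) 0 := by
  have := Dg q 0 (by norm_num)
  convert this using 1
  norm_num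

lemma DG1_0 (q : ℂ) : HasDerivAt (G1 q) (8 * q ^ 2 - 1) 0 := by
  have hsl : (1 : ℂ) + (0 : ℂ) ^ 2 ∈ slitPlane := slit0
  have h1 : HasDerivAt
      (fun z : ℂ => z * (1 + z ^ 2) ^ (-(1 / 2) : ℂ) * (1 + z ^ 2 - 2 * q * z))
      ((1 * ((1 : ℂ) + 0 ^ 2) ^ (-(1 / 2) : ℂ) +
          0 * -(0 * ((1 : ℂ) + 0 ^ 2) ^ (-(3 / 2) : ℂ))) * (1 + 0 ^ 2 - 2 * q * 0) +
        0 * ((1 : ℂ) + 0 ^ 2) ^ (-(1 / 2) : ℂ) * (2 * 0 - 2 * q)) 0 :=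
    ((hasDerivAt_id 0).mul (Dneghalf 0 hsl)).mul (Dd q 0)
  have h2 : HasDerivAt
      (fun z : ℂ => (1 + z ^ 2) ^ ((1 : ℂ) / 2) * (2 * z - 2 * q))
      (0 * ((1 : ℂ) + 0 ^ 2) ^ (-(1 / 2) : ℂ) * (2 * 0 - 2 * q) +
        ((1 : ℂ) + 0 ^ 2) ^ ((1 : ℂ) / 2) * (2 - 0)) 0 := by
    have hlin : HasDerivAt (fun z : ℂ => 2 * z - 2 * q) (2 - 0) 0 := by
      simpa using ((hasDerivAt_id (0 : ℂ)).const_mul 2).sub_const (2 * q)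
    exact (Dhalf 0 hsl).mul hlin
  have hden : HasDerivAt (fun z : ℂ => (1 + z ^ 2 - 2 * q * z) ^ 2)
      (2 * ((1 : ℂ) + 0 ^ 2 - 2 * q * 0) ^ 1 * (2 * 0 - 2 * q)) 0 := (Dd q 0).pow 2
  have hden0 : ((1 : ℂ) + 0 ^ 2 - 2 * q * 0) ^ 2 ≠ 0 := by norm_num
  have := (h1.sub h2).div hden hden0
  refine this.congr_deriv ?_
  norm_num [Complex.one_cpow]
  ring

lemma n_mul_neghalf (z : ℂ) (hn0 : (1 : ℂ) + z ^ 2 ≠ 0) :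
    (1 + z ^ 2) * (1 + z ^ 2) ^ (-(1 / 2) : ℂ) = (1 + z ^ 2) ^ ((1 : ℂ) / 2) := by
  have h := (Complex.cpow_add (x := 1 + z ^ 2) 1 (-(1 / 2) : ℂ) hn0).symm
  calc (1 + z ^ 2) * (1 + z ^ 2) ^ (-(1 / 2) : ℂ)
      = (1 + z ^ 2) ^ (1 : ℂ) * (1 + z ^ 2) ^ (-(1 / 2) : ℂ) := by
        rw [Complex.cpow_one]
    _ = (1 + z ^ 2) ^ ((1 : ℂ) + (-(1 / 2) : ℂ)) := h
    _ = (1 + z ^ 2) ^ ((1 : ℂ) / 2) := by norm_num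

end

end Stmt12Aux

open Stmt12Aux Filter Topology

theorem stmt_12 (q : ℂ) :
    ∃ r > (0 : ℝ), ∃ U : ℂ → ℂ,
      DifferentiableOn ℂ U (Metric.ball (0 : ℂ) r) ∧
      U 0 = 0 ∧
      (∀ t ∈ Metric.ball (0 : ℂ) r, 1 + U t ^ 2 ∈ Complex.slitPlane) ∧
      (∀ t ∈ Metric.ball (0 : ℂ) r, U t - q * Complex.log (1 + U t ^ 2) = t) ∧
      (fun t => deriv U t * (1 + U t ^ 2) ^ (-(1 / 2) : ℂ)) 0 = 1 ∧
      deriv (fun t => deriv U t * (1 + U t ^ 2) ^ (-(1 / 2) : ℂ)) 0 = 2 * q ∧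
      deriv (deriv (fun t => deriv U t * (1 + U t ^ 2) ^ (-(1 / 2) : ℂ))) 0 =
        12 * q ^ 2 - 1 := by
  classical
  -- strict derivative of f at 0
  have hf0 : HasStrictDerivAt (f q) 1 0 := by
    have hlog : HasStrictDerivAt (fun z : ℂ => Complex.log (1 + z ^ 2))
        (2 * 0 / (1 + (0 : ℂ) ^ 2)) 0 := (Dn' 0).clog slit0
    have := (hasStrictDerivAt_id (0 : ℂ)).sub (hlog.const_mul q)
    exact this.congr_deriv (by simp)
  have hF := hf0.hasStrictFDerivAt_equiv one_ne_zero
  have hfq0 : f q 0 = 0 := by simp [f]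
  obtain ⟨U, hU0, hUcc, hright, hleft⟩ :
      ∃ U : ℂ → ℂ, U 0 = 0 ∧ ContinuousAt U 0 ∧
        (∀ᶠ y in 𝓝 (0 : ℂ), f q (U y) = y) ∧ (∀ᶠ x in 𝓝 (0 : ℂ), U (f q x) = x) := by
    refine ⟨hF.localInverse (f q) _ 0, ?_, ?_, ?_, ?_⟩
    · have := hF.localInverse_apply_image
      rwa [hfq0] at this
    · have := hF.localInverse_continuousAt
      rwa [hfq0] at this
    · have := hF.eventually_right_inverse
      rwa [hfq0] at this
    · exact hF.eventually_left_inverse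
  have hUc : Filter.Tendsto U (𝓝 0) (𝓝 0) := by
    have := hUcc.tendsto
    rwa [hU0] at this
  -- good set
  have hgood : ∀ᶠ z in 𝓝 (0 : ℂ),
      1 + z ^ 2 ∈ Complex.slitPlane ∧ 1 + z ^ 2 - 2 * q * z ≠ 0 := by
    have c1 : ContinuousAt (fun z : ℂ => 1 + z ^ 2) 0 := by fun_prop
    have c2 : ContinuousAt (fun z : ℂ => 1 + z ^ 2 - 2 * q * z) 0 := by fun_prop
    have e1 : ∀ᶠ z in 𝓝 (0 : ℂ), 1 + z ^ 2 ∈ Complex.slitPlane := by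
      apply c1.eventually_mem
      show Complex.slitPlane ∈ 𝓝 ((1 : ℂ) + 0 ^ 2)
      rw [show (1 : ℂ) + 0 ^ 2 = 1 by norm_num]
      exact Complex.isOpen_slitPlane.mem_nhds Complex.one_mem_slitPlane
    have e2 : ∀ᶠ z in 𝓝 (0 : ℂ), 1 + z ^ 2 - 2 * q * z ≠ 0 := by
      apply c2.eventually_ne
      norm_num
    exact e1.and e2
  have hEv : ∀ᶠ y in 𝓝 (0 : ℂ),
      ((1 + U y ^ 2 ∈ Complex.slitPlane ∧ 1 + U y ^ 2 - 2 * q * U y ≠ 0) ∧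
        (∀ᶠ x in 𝓝 (U y), U (f q x) = x)) ∧ f q (U y) = y := by
    have A := hUc.eventually hgood
    have B := hUc.eventually hleft.eventually_nhds
    exact (A.and B).and hright
  rw [Metric.eventually_nhds_iff_ball] at hEv
  obtain ⟨r, hr, hball⟩ := hEv
  -- derivative of U on the ball
  have hUder : ∀ y ∈ Metric.ball (0 : ℂ) r, HasDerivAt U (g q (U y)) y := by
    intro y hy
    obtain ⟨⟨⟨hsl, hd0⟩, hlf⟩, hfy⟩ := hball y hy
    have hn0 : (1 : ℂ) + U y ^ 2 ≠ 0 := Complex.slitPlane_ne_zero hsl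
    have hfd : HasStrictDerivAt (f q) (1 - q * (2 * U y / (1 + U y ^ 2))) (U y) := by
      have hlog : HasStrictDerivAt (fun z : ℂ => Complex.log (1 + z ^ 2))
          (2 * U y / (1 + U y ^ 2)) (U y) := (Dn' (U y)).clog hsl
      exact (hasStrictDerivAt_id (U y)).sub (hlog.const_mul q)
    have hratio : 1 - q * (2 * U y / (1 + U y ^ 2)) =
        (1 + U y ^ 2 - 2 * q * U y) / (1 + U y ^ 2) := by
      field_simp
    have hfd0 : 1 - q * (2 * U y / (1 + U y ^ 2)) ≠ 0 := by
      rw [hratio]; exact div_ne_zero hd0 hn0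
    have h := hfd.to_local_left_inverse hfd0 hlf
    rw [hfy] at h
    have hinv : (1 - q * (2 * U y / (1 + U y ^ 2)))⁻¹ = g q (U y) := by
      rw [hratio, g, inv_div]
    rw [hinv] at h
    exact h.hasDerivAt
  have h0mem : (0 : ℂ) ∈ Metric.ball (0 : ℂ) r := by simpa using hr
  obtain ⟨⟨⟨hsl0', hd0'⟩, _⟩, _⟩ := hball 0 h0mem
  -- φ = G ∘ U on the ball
  set φ : ℂ → ℂ := fun t => deriv U t * (1 + U t ^ 2) ^ (-(1 / 2) : ℂ) with hφdef
  have hφG : ∀ y ∈ Metric.ball (0 : ℂ) r, φ y = G q (U y) := by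
    intro y hy
    obtain ⟨⟨⟨hsl, hd0⟩, _⟩, _⟩ := hball y hy
    have hn0 : (1 : ℂ) + U y ^ 2 ≠ 0 := Complex.slitPlane_ne_zero hsl
    have hder := (hUder y hy).deriv
    rw [hφdef]
    simp only
    rw [hder, g, G, div_mul_eq_mul_div, n_mul_neghalf _ hn0]
  have hφder : ∀ y ∈ Metric.ball (0 : ℂ) r,
      HasDerivAt φ (G1 q (U y) * g q (U y)) y := by
    intro y hy
    obtain ⟨⟨⟨hsl, hd0⟩, _⟩, _⟩ := hball y hy
    have hcomp : HasDerivAt (fun t => G q (U t)) (G1 q (U y) * g q (U y)) y :=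
      (DG q (U y) hsl hd0).comp y (hUder y hy)
    have hEq : (fun t => G q (U t)) =ᶠ[𝓝 y] φ :=
      eventually_of_mem (Metric.isOpen_ball.mem_nhds hy)
        (fun t ht => (hφG t ht).symm)
    exact hcomp.congr_of_eventuallyEq hEq.symm
  refine ⟨r, hr, U, ?_, hU0, ?_, ?_, ?_, ?_, ?_⟩
  · exact fun y hy => ((hUder y hy).differentiableAt).differentiableWithinAt
  · intro t ht
    exact (hball t ht).1.1.1
  · intro t ht
    exact (hball t ht).2
  · show φ 0 = 1
    rw [hφG 0 h0mem, hU0, G]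
    norm_num
  · show deriv φ 0 = 2 * q
    rw [(hφder 0 h0mem).deriv, hU0, G1, g]
    norm_num
  · show deriv (deriv φ) 0 = 12 * q ^ 2 - 1
    have hEq2 : deriv φ =ᶠ[𝓝 0] fun y => G1 q (U y) * g q (U y) :=
      eventually_of_mem (Metric.isOpen_ball.mem_nhds h0mem)
        (fun y hy => (hφder y hy).deriv)
    rw [hEq2.deriv_eq]
    have hH : HasDerivAt (fun z => G1 q z * g q z)
        ((8 * q ^ 2 - 1) * g q 0 + G1 q 0 * (2 * q)) 0 := (DG1_0 q).mul (Dg0 q)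
    have hH' : HasDerivAt (fun z => G1 q z * g q z)
        ((8 * q ^ 2 - 1) * g q 0 + G1 q 0 * (2 * q)) (U 0) := by rwa [hU0]
    have hc := hH'.comp 0 (hUder 0 h0mem)
    simp only [Function.comp_def] at hc
    rw [hc.deriv, hU0, G1, g]
    norm_num
    ring
end

section
/- Let q ∈ (0,1) be fixed. Then as x → +∞ through real values, ∫₀^∞ e^{−xu} (1+u²)^{qx−1/2} du = 1/x + 2q/x² + (12q² − 1)/x³ + O(x^{−4}), where for u ≥ 0 one sets (1+u²)^{qx−1/2} = exp((qx−1/2) ln(1+u²)) with the real logarithm. (These are the first three terms of the asymptotic expansion Σ_{k≥0} c_k(q) k!/x^{k+1} with c₀ = 1, c₁ = 2q, c₂ = 6q² − 1/2.) -/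
open MeasureTheory Real Set

-- H2: integrability
lemma aux_intOn_pow_exp (n : ℕ) {c : ℝ} (hc : 0 < c) :
    IntegrableOn (fun u : ℝ => u ^ n * Real.exp (-(c * u))) (Set.Ioi 0) := by
  have h := integrableOn_rpow_mul_exp_neg_mul_rpow (p := 1) (s := n) (by exact lt_of_lt_of_le neg_one_lt_zero (Nat.cast_nonneg n)) (by norm_num) hc
  refine h.congr_fun (fun u hu => ?_) measurableSet_Ioi
  dsimp only
  rw [Real.rpow_natCast, Real.rpow_one, neg_mul]

-- H1: exact value
lemma aux_int_pow_exp (n : ℕ) {c : ℝ} (hc : 0 < c) :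
    ∫ u in Set.Ioi (0:ℝ), u ^ n * Real.exp (-(c * u)) = n.factorial / c ^ (n + 1) := by
  have h := Real.integral_rpow_mul_exp_neg_mul_Ioi (a := n + 1) (r := c) (by positivity) hc
  have h2 : ∫ u in Set.Ioi (0:ℝ), u ^ n * Real.exp (-(c * u))
      = ∫ t in Set.Ioi (0:ℝ), t ^ ((n : ℝ) + 1 - 1) * Real.exp (-(c * t)) := by
    refine setIntegral_congr_fun measurableSet_Ioi (fun t ht => ?_)
    rw [add_sub_cancel_right, Real.rpow_natCast]
  rw [h2, h, Real.Gamma_nat_eq_factorial, one_div, ← Real.rpow_natCast c (n+1)]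
  push_cast
  rw [Real.inv_rpow hc.le, inv_mul_eq_div]

-- t^n/n! ≤ e^t
lemma aux_pow_le_exp {t : ℝ} (ht : 0 ≤ t) (n : ℕ) : t ^ n / n.factorial ≤ Real.exp t := by
  have h := Real.sum_le_exp_of_nonneg ht (n + 1)
  refine le_trans ?_ h
  have : (t ^ n / n.factorial) = ∑ i ∈ {n}, t ^ i / i.factorial := by simp
  rw [this]
  refine Finset.sum_le_sum_of_subset_of_nonneg ?_ (fun i _ _ => by positivity)
  simp [Finset.singleton_subset_iff, Finset.mem_range]

-- log(1+u^2) ≤ u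
lemma aux_log_le {u : ℝ} (hu : 0 ≤ u) : Real.log (1 + u ^ 2) ≤ u := by
  rw [Real.log_le_iff_le_exp (by positivity)]
  have h := Real.sum_le_exp_of_nonneg hu 4
  have hs : ∑ i ∈ Finset.range 4, u ^ i / i.factorial
      = 1 + u + u ^ 2 / 2 + u ^ 3 / 6 := by
    norm_num [Finset.sum_range_succ, Nat.factorial]
  nlinarith [sq_nonneg (u - 3), sq_nonneg u, pow_nonneg hu 3]

set_option maxHeartbeats 1000000 in
lemma aux_key {q x u : ℝ} (hq0 : 0 < q) (hq1 : q < 1) (hx4 : 4 ≤ x)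
    (hA : 1 ≤ q * x - 1/2) (hu : 0 ≤ u) (hu2 : u ^ 2 ≤ 1 / x) :
    |Real.exp ((q * x - 1/2) * Real.log (1 + u ^ 2)) -
      (1 + (q * x - 1/2) * u ^ 2 + ((q * x - 1/2) ^ 2 - (q * x - 1/2)) / 2 * u ^ 4)|
      ≤ 3 * x ^ 3 * u ^ 6 := by
  have hx0 : (0:ℝ) < x := by linarith
  set A : ℝ := q * x - 1/2 with hAdef
  set s : ℝ := u ^ 2 with hsdef
  have hs0 : 0 ≤ s := by positivity
  have hsq : s ≤ 1/4 := le_trans hu2 (by rw [div_le_div_iff₀ hx0 (by norm_num)] ; linarith)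
  set L : ℝ := Real.log (1 + s) with hLdef
  have hL0 : 0 ≤ L := by rw [hLdef]; exact Real.log_nonneg (by linarith)
  have hLs : L ≤ s := by
    have h := Real.log_le_sub_one_of_pos (show (0:ℝ) < 1 + s by linarith)
    rw [hLdef]; linarith
  clear_value A s L
  -- Taylor bound for log
  have hT : |L - (s - s ^ 2 / 2)| ≤ (4/3) * s ^ 3 := by
    have habs : |(-s)| < 1 := by rw [abs_neg, abs_of_nonneg hs0]; linarith
    have h := Real.abs_log_sub_add_sum_range_le habs 2
    rw [abs_neg, abs_of_nonneg hs0, sub_neg_eq_add, ← hLdef] at h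
    have hsum : (∑ i ∈ Finset.range 2, (-s) ^ (i + 1) / (i + 1)) = -s + s ^ 2 / 2 := by
      norm_num [Finset.sum_range_succ]
    rw [hsum] at h
    have h2 : |L - (s - s ^ 2 / 2)| = |(-s + s ^ 2 / 2) + L| := by congr 1; ring
    rw [h2]
    refine h.trans ?_
    rw [div_le_iff₀ (by linarith)]
    have h3 : s ^ (2 + 1) = s ^ 3 := by norm_num
    rw [h3]
    nlinarith [pow_nonneg hs0 3]
  have hAx : A ≤ x := by
    rw [hAdef]; nlinarith [mul_pos (show (0:ℝ) < 1 - q by linarith) hx0]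
  have hAq : A ≤ q * x := by rw [hAdef]; linarith
  have hALq : A * L ≤ q := by
    calc A * L ≤ (q * x) * s := by
          apply mul_le_mul hAq hLs hL0 (by positivity)
      _ ≤ (q * x) * (1/x) := by
          apply mul_le_mul_of_nonneg_left hu2 (by positivity)
      _ = q := by field_simp
  have hAL0 : 0 ≤ A * L := mul_nonneg (by linarith) hL0
  have hy1 : |A * L| ≤ 1 := by rw [abs_of_nonneg hAL0]; linarith
  have hexp := Real.exp_bound hy1 (n := 3) (by norm_num)
  have hsum3 : (∑ m ∈ Finset.range 3, (A * L) ^ m / m.factorial)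
      = 1 + A * L + (A * L) ^ 2 / 2 := by
    norm_num [Finset.sum_range_succ, Nat.factorial]
  rw [hsum3, abs_of_nonneg hAL0] at hexp
  norm_num [Nat.factorial] at hexp
  -- |L - s| ≤ s^2, |L + s| ≤ 2 s
  have hLsub : |L - s| ≤ s ^ 2 := by
    rw [abs_of_nonpos (by linarith)]
    have := abs_le.mp hT
    nlinarith
  have hL2 : |L ^ 2 - s ^ 2| ≤ 2 * s ^ 3 := by
    have : L ^ 2 - s ^ 2 = (L - s) * (L + s) := by ring
    rw [this, abs_mul, abs_of_nonneg (by linarith : (0:ℝ) ≤ L + s)]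
    nlinarith [abs_nonneg (L - s)]
  -- triangle
  have hdecomp : Real.exp (A * L) - (1 + A * s + (A ^ 2 - A) / 2 * s ^ 2)
      = (Real.exp (A * L) - (1 + A * L + (A * L) ^ 2 / 2))
        + A * (L - (s - s ^ 2 / 2)) + A ^ 2 / 2 * (L ^ 2 - s ^ 2) := by ring
  have hAL3 : (A * L) ^ 3 ≤ A ^ 3 * s ^ 3 := by
    have h1 : A * L ≤ A * s := mul_le_mul_of_nonneg_left hLs (by linarith)
    calc (A * L) ^ 3 ≤ (A * s) ^ 3 := by
          exact pow_le_pow_left₀ hAL0 h1 3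
      _ = A ^ 3 * s ^ 3 := by rw [mul_pow]
  have habs : |Real.exp (A * L) - (1 + A * s + (A ^ 2 - A) / 2 * s ^ 2)|
      ≤ (2/9) * (A ^ 3 * s ^ 3) + A * ((4/3) * s ^ 3) + A ^ 2 / 2 * (2 * s ^ 3) := by
    rw [hdecomp]
    refine (abs_add_le _ _).trans ?_
    refine add_le_add (le_trans (abs_add_le _ _) (add_le_add ?_ ?_)) ?_
    · refine hexp.trans ?_
      linarith [hAL3]
    · rw [abs_mul, abs_of_nonneg (by linarith : (0:ℝ) ≤ A)]
      exact mul_le_mul_of_nonneg_left hT (by linarith)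
    · rw [abs_mul, abs_of_nonneg (by positivity : (0:ℝ) ≤ A ^ 2 / 2)]
      exact mul_le_mul_of_nonneg_left hL2 (by positivity)
  have hs3 : (0:ℝ) ≤ s ^ 3 := pow_nonneg hs0 3
  have hA3 : A ^ 3 ≤ x ^ 3 := pow_le_pow_left₀ (by linarith) hAx 3
  have hxx : x ≤ x ^ 3 := le_self_pow₀ (by linarith) (by norm_num)
  have hA2 : A ^ 2 ≤ x ^ 3 :=
    le_trans (pow_le_pow_left₀ (by linarith) hAx 2)
      (pow_le_pow_right₀ (by linarith) (by norm_num))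
  have hA1 : A ≤ x ^ 3 := hAx.trans hxx
  have hfin : (2/9) * (A ^ 3 * s ^ 3) + A * ((4/3) * s ^ 3) + A ^ 2 / 2 * (2 * s ^ 3)
      ≤ 3 * x ^ 3 * s ^ 3 := by
    have m1 := mul_le_mul_of_nonneg_right hA3 hs3
    have m2 := mul_le_mul_of_nonneg_right hA2 hs3
    have m3 := mul_le_mul_of_nonneg_right hA1 hs3
    nlinarith [m1, m2, m3]
  have hu4 : u ^ 4 = s ^ 2 := by rw [hsdef]; ring
  have hu6 : u ^ 6 = s ^ 3 := by rw [hsdef]; ring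
  rw [hu4, hu6]
  exact habs.trans hfin

-- integrand ≤ exp(-(1-q)xu)
lemma aux_f_le {q x u : ℝ} (hq0 : 0 ≤ q) (hu : 0 ≤ u) (hx : 0 ≤ x)
    (aux_log_le : Real.log (1 + u ^ 2) ≤ u) :
    Real.exp (-x * u) * Real.exp ((q * x - 1/2) * Real.log (1 + u ^ 2))
      ≤ Real.exp (-((1 - q) * x * u)) := by
  rw [← Real.exp_add, Real.exp_le_exp]
  have hlog0 : 0 ≤ Real.log (1 + u ^ 2) := Real.log_nonneg (by nlinarith)
  have h1 : (q * x - 1/2) * Real.log (1 + u ^ 2) ≤ (q * x) * Real.log (1 + u ^ 2) := by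
    nlinarith
  have h2 : (q * x) * Real.log (1 + u ^ 2) ≤ (q * x) * u :=
    mul_le_mul_of_nonneg_left aux_log_le (by positivity)
  nlinarith

-- polynomial bound
lemma aux_P_le {x A B u : ℝ} (hx1 : 1 ≤ x) (hA1 : 1 ≤ A) (hAx : A ≤ x)
    (hB0 : 0 ≤ B) (hBx : B ≤ x ^ 2 / 2) (hu : 0 ≤ u) :
    1 + A * u ^ 2 + B * u ^ 4 ≤ 3 * x ^ 2 * (1 + u ^ 6) := by
  have hkey : u ^ 4 + u ^ 2 ≤ 1 + u ^ 6 := by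
    nlinarith [sq_nonneg (u ^ 3 - u), sq_nonneg (u ^ 2 - 1)]
  have h6 : (0:ℝ) ≤ u ^ 6 := by positivity
  have h2 : (0:ℝ) ≤ u ^ 2 := by positivity
  have h4 : (0:ℝ) ≤ u ^ 4 := by positivity
  have m2 : A * u ^ 2 ≤ x * (1 + u ^ 6) := by nlinarith
  have m4 : B * u ^ 4 ≤ (x ^ 2 / 2) * (1 + u ^ 6) := by nlinarith
  nlinarith [mul_le_mul_of_nonneg_right (show x ≤ x ^ 2 by nlinarith)
    (show (0:ℝ) ≤ 1 + u ^ 6 by linarith)]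

lemma aux_pow_le_exp' {t : ℝ} (ht : 0 ≤ t) (n : ℕ) : t ^ n / n.factorial ≤ Real.exp t := by
  have h := Real.sum_le_exp_of_nonneg ht (n + 1)
  refine le_trans ?_ h
  have : (t ^ n / n.factorial) = ∑ i ∈ {n}, t ^ i / i.factorial := by simp
  rw [this]
  refine Finset.sum_le_sum_of_subset_of_nonneg ?_ (fun i _ _ => by positivity)
  simp [Finset.singleton_subset_iff, Finset.mem_range]

lemma aux_exp_neg_le {t : ℝ} (ht : 0 < t) (n : ℕ) :
    Real.exp (-t) ≤ n.factorial / t ^ n := by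
  have h := aux_pow_le_exp' ht.le n
  have h2 : (0:ℝ) < t ^ n / n.factorial := by positivity
  rw [Real.exp_neg]
  calc (Real.exp t)⁻¹ ≤ (t ^ n / n.factorial)⁻¹ := by
        exact inv_anti₀ h2 h
    _ = n.factorial / t ^ n := by rw [inv_div]
lemma aux_intOn_exp {c : ℝ} (hc : 0 < c) :
    IntegrableOn (fun u : ℝ => Real.exp (-(c * u))) (Set.Ioi 0) := by
  have h := aux_intOn_pow_exp 0 hc
  simpa using h

lemma aux_int_h {x A B : ℝ} (hx : 0 < x) :
    IntegrableOn (fun u : ℝ => Real.exp (-(x * u)) * (1 + A * u ^ 2 + B * u ^ 4)) (Set.Ioi 0) ∧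
    ∫ u in Set.Ioi (0:ℝ), Real.exp (-(x * u)) * (1 + A * u ^ 2 + B * u ^ 4)
      = 1 / x + 2 * A / x ^ 3 + 24 * B / x ^ 5 := by
  have e0 := aux_intOn_pow_exp 0 hx
  have e2 := aux_intOn_pow_exp 2 hx
  have e4 := aux_intOn_pow_exp 4 hx
  have hfun : (fun u : ℝ => Real.exp (-(x * u)) * (1 + A * u ^ 2 + B * u ^ 4))
      = fun u : ℝ => (u ^ 0 * Real.exp (-(x * u)) + A * (u ^ 2 * Real.exp (-(x * u))))
          + B * (u ^ 4 * Real.exp (-(x * u))) := by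
    funext u; simp only [pow_zero, one_mul]; ring
  constructor
  · rw [hfun]; exact (e0.add (e2.const_mul A)).add (e4.const_mul B)
  · rw [hfun]
    have h1 := integral_add (μ := volume.restrict (Set.Ioi 0))
      (e0.add (e2.const_mul A)) (e4.const_mul B)
    simp only [Pi.add_apply] at h1
    rw [h1]
    have h2 := integral_add (μ := volume.restrict (Set.Ioi 0)) e0 (e2.const_mul A)
    rw [h2, integral_const_mul, integral_const_mul,
      aux_int_pow_exp 0 hx, aux_int_pow_exp 2 hx, aux_int_pow_exp 4 hx]
    norm_num [Nat.factorial]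
    ring

lemma aux_int_exp {c : ℝ} (hc : 0 < c) :
    ∫ u in Set.Ioi (0:ℝ), Real.exp (-(c * u)) = 1 / c := by
  have h := aux_int_pow_exp 0 hc
  simpa using h

set_option maxHeartbeats 1000000 in
lemma aux_main {q x : ℝ} (hq0 : 0 < q) (hq1 : q < 1) (hx4 : 4 ≤ x) (hqx2 : 2 ≤ q * x) :
    |(∫ u in Set.Ioi (0:ℝ),
        Real.exp (-x * u) * Real.exp ((q * x - 1/2) * Real.log (1 + u ^ 2)))
      - (1 / x + 2 * q / x ^ 2 + (12 * q ^ 2 - 1) / x ^ 3)|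
      ≤ (2160 + 33 + 1027391894323200) / x ^ 4 + 20643840 / ((1 - q) ^ 9 * x ^ 4) := by
  have hx0 : (0:ℝ) < x := by linarith
  have hx1 : (1:ℝ) ≤ x := by linarith
  have hε0 : (0:ℝ) < 1 - q := by linarith
  have hA1 : 1 ≤ q * x - 1/2 := by linarith
  have hAx : q * x - 1/2 ≤ x := by nlinarith
  have hB0 : (0:ℝ) ≤ ((q * x - 1/2) ^ 2 - (q * x - 1/2)) / 2 := by nlinarith
  have hBx : ((q * x - 1/2) ^ 2 - (q * x - 1/2)) / 2 ≤ x ^ 2 / 2 := by nlinarith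
  -- sqrt facts
  have hr2 : 2 ≤ Real.sqrt x := by
    have h := Real.sqrt_le_sqrt hx4
    rwa [show (4:ℝ) = 2 ^ 2 by norm_num, Real.sqrt_sq (by norm_num : (0:ℝ) ≤ 2)] at h
  set r : ℝ := Real.sqrt x with hrdef
  have hr0 : (0:ℝ) < r := by linarith
  have hr2x : r ^ 2 = x := Real.sq_sqrt hx0.le
  set δ : ℝ := r⁻¹ with hδdef
  have hδ0 : (0:ℝ) < δ := by positivity
  have hδsq : δ ^ 2 = 1 / x := by rw [hδdef, inv_pow, hr2x, one_div]
  have hxδ : x * δ = r := by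
    rw [hδdef]
    field_simp
    rw [← hr2x]
  -- integrability of F
  have hcont : Continuous (fun u : ℝ =>
      Real.exp (-x * u) * Real.exp ((q * x - 1/2) * Real.log (1 + u ^ 2))) := by
    apply Continuous.mul
    · exact Real.continuous_exp.comp (by continuity)
    · apply Real.continuous_exp.comp
      apply Continuous.mul continuous_const
      apply Continuous.log (by continuity)
      intro u; positivity
  have hFpos : ∀ u : ℝ,
      0 < Real.exp (-x * u) * Real.exp ((q * x - 1/2) * Real.log (1 + u ^ 2)) :=
    fun u => by positivity
  have hFint : IntegrableOn (fun u : ℝ =>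
      Real.exp (-x * u) * Real.exp ((q * x - 1/2) * Real.log (1 + u ^ 2))) (Set.Ioi 0) := by
    refine Integrable.mono' (aux_intOn_exp (show (0:ℝ) < (1 - q) * x by positivity))
      hcont.aestronglyMeasurable ?_
    rw [ae_restrict_iff' measurableSet_Ioi]
    refine ae_of_all _ fun u hu => ?_
    rw [Real.norm_eq_abs, abs_of_pos (hFpos u)]
    exact aux_f_le hq0.le (le_of_lt hu) hx0.le (aux_log_le (le_of_lt hu))
  have hhint := (aux_int_h (x := x) (A := q * x - 1/2)
    (B := ((q * x - 1/2) ^ 2 - (q * x - 1/2)) / 2) hx0).1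
  have hhval := (aux_int_h (x := x) (A := q * x - 1/2)
    (B := ((q * x - 1/2) ^ 2 - (q * x - 1/2)) / 2) hx0).2
  set F : ℝ → ℝ := fun u =>
    Real.exp (-x * u) * Real.exp ((q * x - 1/2) * Real.log (1 + u ^ 2)) with hFdef
  set H : ℝ → ℝ := fun u => Real.exp (-(x * u)) *
    (1 + (q * x - 1/2) * u ^ 2 + ((q * x - 1/2) ^ 2 - (q * x - 1/2)) / 2 * u ^ 4) with hHdef
  set S : ℝ := 1 / x + 2 * (q * x - 1/2) / x ^ 3
      + 24 * (((q * x - 1/2) ^ 2 - (q * x - 1/2)) / 2) / x ^ 5 with hSdef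
  have hsub : (∫ u in Set.Ioi (0:ℝ), F u) - S = ∫ u in Set.Ioi (0:ℝ), (F u - H u) := by
    rw [integral_sub hFint hhint, hhval]
  have habs1 : |∫ u in Set.Ioi (0:ℝ), (F u - H u)| ≤ ∫ u in Set.Ioi (0:ℝ), |F u - H u| := by
    have h := norm_integral_le_integral_norm (μ := volume.restrict (Set.Ioi 0))
      (fun u => F u - H u)
    simpa [Real.norm_eq_abs] using h
  have key1 : |(∫ u in Set.Ioi (0:ℝ), F u) - S| ≤ ∫ u in Set.Ioi (0:ℝ), |F u - H u| := by
    rw [hsub]; exact habs1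
  have hFH : IntegrableOn (fun u => |F u - H u|) (Set.Ioi 0) := (hFint.sub hhint).abs
  have hsplit : ∫ u in Set.Ioi (0:ℝ), |F u - H u|
      = (∫ u in Set.Ioc (0:ℝ) δ, |F u - H u|) + ∫ u in Set.Ioi δ, |F u - H u| := by
    rw [← Ioc_union_Ioi_eq_Ioi hδ0.le,
      setIntegral_union (Ioc_disjoint_Ioi le_rfl) measurableSet_Ioi
        (hFH.mono_set Ioc_subset_Ioi_self) (hFH.mono_set (Ioi_subset_Ioi hδ0.le))]
  -- piece 1
  have hP1 : ∫ u in Set.Ioc (0:ℝ) δ, |F u - H u| ≤ 2160 / x ^ 4 := by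
    have hbint : IntegrableOn (fun u : ℝ => 3 * x ^ 3 * (u ^ 6 * Real.exp (-(x * u))))
        (Set.Ioi 0) := (aux_intOn_pow_exp 6 hx0).const_mul _
    have hstep1 : ∫ u in Set.Ioc (0:ℝ) δ, |F u - H u|
        ≤ ∫ u in Set.Ioc (0:ℝ) δ, 3 * x ^ 3 * (u ^ 6 * Real.exp (-(x * u))) := by
      refine setIntegral_mono_on (hFH.mono_set Ioc_subset_Ioi_self)
        (hbint.mono_set Ioc_subset_Ioi_self) measurableSet_Ioc ?_
      rintro u ⟨hu0, hud⟩
      have hu2 : u ^ 2 ≤ 1 / x := by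
        rw [← hδsq]; exact pow_le_pow_left₀ hu0.le hud 2
      have hkey := aux_key hq0 hq1 hx4 hA1 hu0.le hu2
      have hfh : F u - H u = Real.exp (-x * u) *
          (Real.exp ((q * x - 1/2) * Real.log (1 + u ^ 2))
            - (1 + (q * x - 1/2) * u ^ 2
              + ((q * x - 1/2) ^ 2 - (q * x - 1/2)) / 2 * u ^ 4)) := by
        rw [hFdef, hHdef]
        simp only [neg_mul]
        ring
      calc |F u - H u| = Real.exp (-x * u) *
            |Real.exp ((q * x - 1/2) * Real.log (1 + u ^ 2))
            - (1 + (q * x - 1/2) * u ^ 2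
              + ((q * x - 1/2) ^ 2 - (q * x - 1/2)) / 2 * u ^ 4)| := by
            rw [hfh, abs_mul, abs_of_pos (Real.exp_pos _)]
        _ ≤ Real.exp (-x * u) * (3 * x ^ 3 * u ^ 6) :=
            mul_le_mul_of_nonneg_left hkey (Real.exp_pos _).le
        _ = 3 * x ^ 3 * (u ^ 6 * Real.exp (-(x * u))) := by
            rw [neg_mul]; ring
    have hstep2 : ∫ u in Set.Ioc (0:ℝ) δ, 3 * x ^ 3 * (u ^ 6 * Real.exp (-(x * u)))
        ≤ ∫ u in Set.Ioi (0:ℝ), 3 * x ^ 3 * (u ^ 6 * Real.exp (-(x * u))) := by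
      refine setIntegral_mono_set hbint ?_
        (HasSubset.Subset.eventuallyLE Ioc_subset_Ioi_self)
      exact ae_of_all _ fun u => by positivity
    have hval : ∫ u in Set.Ioi (0:ℝ), 3 * x ^ 3 * (u ^ 6 * Real.exp (-(x * u)))
        = 3 * x ^ 3 * (720 / x ^ 7) := by
      rw [integral_const_mul, aux_int_pow_exp 6 hx0]
      norm_num [Nat.factorial]
    have heq : 3 * x ^ 3 * (720 / x ^ 7) = 2160 / x ^ 4 := by
      field_simp; ring
    linarith [hstep1, hstep2, hval.le, hval.ge]
  -- piece 2
  have hc : (0:ℝ) < (1 - q) * x / 2 := by positivity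
  have hx2 : (0:ℝ) < x / 2 := by positivity
  set c1 : ℝ := Real.exp (-((1 - q) * r / 2)) with hc1def
  set c2 : ℝ := Real.exp (-(r / 2)) with hc2def
  set G : ℝ → ℝ := fun u => c1 * Real.exp (-((1 - q) * x / 2 * u))
      + c2 * (3 * x ^ 2) * (u ^ 0 * Real.exp (-(x / 2 * u))
        + u ^ 6 * Real.exp (-(x / 2 * u))) with hGdef
  have hGint : IntegrableOn G (Set.Ioi 0) := by
    rw [hGdef]
    exact ((aux_intOn_exp hc).const_mul c1).add
      (((aux_intOn_pow_exp 0 hx2).add (aux_intOn_pow_exp 6 hx2)).const_mul _)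
  have hpoint : ∀ u ∈ Set.Ioi δ, |F u - H u| ≤ G u := by
    intro u hud
    rw [Set.mem_Ioi] at hud
    have hu0 : 0 < u := lt_trans hδ0 hud
    have hxu : r ≤ x * u := by
      rw [← hxδ]; exact mul_le_mul_of_nonneg_left hud.le hx0.le
    have hFb : F u ≤ c1 * Real.exp (-((1 - q) * x / 2 * u)) := by
      have h1 : F u ≤ Real.exp (-((1 - q) * x * u)) := by
        rw [hFdef]
        exact aux_f_le hq0.le hu0.le hx0.le (aux_log_le hu0.le)
      refine h1.trans ?_
      rw [hc1def, ← Real.exp_add, Real.exp_le_exp]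
      nlinarith [mul_le_mul_of_nonneg_left hxu hε0.le]
    have hexpb : Real.exp (-(x * u)) ≤ c2 * Real.exp (-(x / 2 * u)) := by
      rw [hc2def, ← Real.exp_add, Real.exp_le_exp]
      linarith
    have hHb : H u ≤ c2 * (3 * x ^ 2) * (u ^ 0 * Real.exp (-(x / 2 * u))
        + u ^ 6 * Real.exp (-(x / 2 * u))) := by
      rw [hHdef]
      calc Real.exp (-(x * u)) * (1 + (q * x - 1/2) * u ^ 2
              + ((q * x - 1/2) ^ 2 - (q * x - 1/2)) / 2 * u ^ 4)
          ≤ Real.exp (-(x * u)) * (3 * x ^ 2 * (1 + u ^ 6)) :=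
            mul_le_mul_of_nonneg_left (aux_P_le hx1 hA1 hAx hB0 hBx hu0.le)
              (Real.exp_pos _).le
        _ ≤ (c2 * Real.exp (-(x / 2 * u))) * (3 * x ^ 2 * (1 + u ^ 6)) :=
            mul_le_mul_of_nonneg_right hexpb (by positivity)
        _ = c2 * (3 * x ^ 2) * (u ^ 0 * Real.exp (-(x / 2 * u))
              + u ^ 6 * Real.exp (-(x / 2 * u))) := by ring
    have hH0 : 0 ≤ H u := by
      rw [hHdef]
      have h1 : 0 ≤ (q * x - 1/2) * u ^ 2 :=
        mul_nonneg (by linarith) (sq_nonneg u)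
      have h2 : 0 ≤ ((q * x - 1/2) ^ 2 - (q * x - 1/2)) / 2 * u ^ 4 :=
        mul_nonneg hB0 (by positivity)
      have h3 : (0:ℝ) < Real.exp (-(x * u)) := Real.exp_pos _
      nlinarith
    have hF0 : 0 < F u := hFpos u
    calc |F u - H u| ≤ |F u| + |H u| := by
          rw [sub_eq_add_neg]
          exact (abs_add_le _ _).trans (by rw [abs_neg])
      _ = F u + H u := by rw [abs_of_pos hF0, abs_of_nonneg hH0]
      _ ≤ G u := by rw [hGdef]; exact add_le_add hFb hHb
  have hstep3 : ∫ u in Set.Ioi δ, |F u - H u| ≤ ∫ u in Set.Ioi δ, G u :=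
    setIntegral_mono_on (hFH.mono_set (Ioi_subset_Ioi hδ0.le))
      (hGint.mono_set (Ioi_subset_Ioi hδ0.le)) measurableSet_Ioi hpoint
  have hstep4 : ∫ u in Set.Ioi δ, G u ≤ ∫ u in Set.Ioi (0:ℝ), G u := by
    refine setIntegral_mono_set hGint ?_
      (HasSubset.Subset.eventuallyLE (Ioi_subset_Ioi hδ0.le))
    refine ae_of_all _ fun u => ?_
    rw [hGdef]
    positivity
  have hGval : ∫ u in Set.Ioi (0:ℝ), G u
      = c1 * (1 / ((1 - q) * x / 2))
        + c2 * (3 * x ^ 2) * (1 / (x / 2) + 720 / (x / 2) ^ 7) := by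
    rw [hGdef]
    have h1 := integral_add (μ := volume.restrict (Set.Ioi 0))
      ((aux_intOn_exp hc).const_mul c1)
      (((aux_intOn_pow_exp 0 hx2).add (aux_intOn_pow_exp 6 hx2)).const_mul
        (c2 * (3 * x ^ 2)))
    simp only [Pi.add_apply] at h1
    rw [h1, integral_const_mul, integral_const_mul, aux_int_exp hc]
    have h2 := integral_add (μ := volume.restrict (Set.Ioi 0))
      (aux_intOn_pow_exp 0 hx2) (aux_intOn_pow_exp 6 hx2)
    rw [h2, aux_int_pow_exp 0 hx2, aux_int_pow_exp 6 hx2]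
    norm_num [Nat.factorial]
  -- decay bounds
  have hc1b : c1 ≤ 10321920 / ((1 - q) ^ 8 * x ^ 4) := by
    have h := aux_exp_neg_le (show (0:ℝ) < (1 - q) * r / 2 by positivity) 8
    have hr8 : r ^ 8 = x ^ 4 := by rw [show (8:ℕ) = 2 * 4 from rfl, pow_mul, hr2x]
    have ht8 : ((1 - q) * r / 2) ^ 8 = (1 - q) ^ 8 * x ^ 4 / 256 := by
      rw [div_pow, mul_pow, hr8]; norm_num
    rw [ht8, div_div_eq_mul_div] at h
    rw [hc1def]
    refine h.trans (le_of_eq ?_)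
    norm_num [Nat.factorial]
  have hc2b : c2 ≤ 3715891200 / x ^ 5 := by
    have h := aux_exp_neg_le (show (0:ℝ) < r / 2 by positivity) 10
    have hr10 : r ^ 10 = x ^ 5 := by rw [show (10:ℕ) = 2 * 5 from rfl, pow_mul, hr2x]
    have ht10 : (r / 2) ^ 10 = x ^ 5 / 1024 := by rw [div_pow, hr10]; norm_num
    rw [ht10, div_div_eq_mul_div] at h
    rw [hc2def]
    refine h.trans (le_of_eq ?_)
    norm_num [Nat.factorial]
  have hc10 : 0 < c1 := Real.exp_pos _
  have hc20 : 0 < c2 := Real.exp_pos _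
  have t1 : c1 * (1 / ((1 - q) * x / 2)) ≤ 20643840 / ((1 - q) ^ 9 * x ^ 4) := by
    calc c1 * (1 / ((1 - q) * x / 2))
        ≤ (10321920 / ((1 - q) ^ 8 * x ^ 4)) * (1 / ((1 - q) * x / 2)) :=
          mul_le_mul_of_nonneg_right hc1b (by positivity)
      _ = 20643840 / ((1 - q) ^ 9 * x ^ 5) := by
          field_simp; ring
      _ ≤ 20643840 / ((1 - q) ^ 9 * x ^ 4) := by
          refine div_le_div_of_nonneg_left (by norm_num) (by positivity) ?_
          refine mul_le_mul_of_nonneg_left ?_ (by positivity)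
          exact pow_le_pow_right₀ hx1 (by norm_num)
  have t2 : c2 * (3 * x ^ 2) * (1 / (x / 2) + 720 / (x / 2) ^ 7)
      ≤ 1027391894323200 / x ^ 4 := by
    have hsum : 1 / (x / 2) + 720 / (x / 2) ^ 7 = 2 / x + 92160 / x ^ 7 := by
      rw [one_div_div, div_pow, div_div_eq_mul_div]
      norm_num
    have hsum2 : 2 / x + 92160 / x ^ 7 ≤ 92162 / x := by
      have hxx7 : x ≤ x ^ 7 := le_self_pow₀ hx1 (by norm_num)
      have : 92160 / x ^ 7 ≤ 92160 / x :=
        div_le_div_of_nonneg_left (by norm_num) hx0 hxx7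
      have h2 : 2 / x + 92160 / x ^ 7 ≤ 2 / x + 92160 / x := by linarith
      refine h2.trans (le_of_eq ?_)
      field_simp; ring
    have hmul1 : c2 * (3 * x ^ 2) ≤ (3715891200 / x ^ 5) * (3 * x ^ 2) :=
      mul_le_mul_of_nonneg_right hc2b (by positivity)
    have hmul1' : (3715891200 / x ^ 5) * (3 * x ^ 2) = 11147673600 / x ^ 3 := by
      field_simp; ring
    calc c2 * (3 * x ^ 2) * (1 / (x / 2) + 720 / (x / 2) ^ 7)
        ≤ (11147673600 / x ^ 3) * (92162 / x) := by
          rw [hsum]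
          refine mul_le_mul (hmul1.trans (le_of_eq hmul1')) hsum2 (by positivity)
            (by positivity)
      _ = 1027391894323200 / x ^ 4 := by
          field_simp; ring
  have hP2 : ∫ u in Set.Ioi δ, |F u - H u|
      ≤ 20643840 / ((1 - q) ^ 9 * x ^ 4) + 1027391894323200 / x ^ 4 := by
    refine (hstep3.trans hstep4).trans ?_
    rw [hGval]
    exact add_le_add t1 t2
  -- S vs target
  have hST : |S - (1 / x + 2 * q / x ^ 2 + (12 * q ^ 2 - 1) / x ^ 3)| ≤ 33 / x ^ 4 := by
    have he : S - (1 / x + 2 * q / x ^ 2 + (12 * q ^ 2 - 1) / x ^ 3)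
        = (9 - 24 * q * x) / x ^ 5 := by
      rw [hSdef]; field_simp; ring
    rw [he, abs_div, abs_of_pos (show (0:ℝ) < x ^ 5 by positivity)]
    have hnum : |9 - 24 * q * x| ≤ 33 * x := by
      rw [abs_le]; constructor <;> nlinarith
    calc |9 - 24 * q * x| / x ^ 5 ≤ (33 * x) / x ^ 5 := by
          exact div_le_div_of_nonneg_right hnum (by positivity)
      _ = 33 / x ^ 4 := by field_simp
  -- final
  calc |(∫ u in Set.Ioi (0:ℝ), F u) - (1 / x + 2 * q / x ^ 2 + (12 * q ^ 2 - 1) / x ^ 3)|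
      ≤ |(∫ u in Set.Ioi (0:ℝ), F u) - S|
        + |S - (1 / x + 2 * q / x ^ 2 + (12 * q ^ 2 - 1) / x ^ 3)| := abs_sub_le _ _ _
    _ ≤ (∫ u in Set.Ioi (0:ℝ), |F u - H u|) + 33 / x ^ 4 := add_le_add key1 hST
    _ ≤ (2160 / x ^ 4 + (20643840 / ((1 - q) ^ 9 * x ^ 4)
          + 1027391894323200 / x ^ 4)) + 33 / x ^ 4 := by
        rw [hsplit]; exact add_le_add (add_le_add hP1 hP2) le_rfl
    _ = (2160 + 33 + 1027391894323200) / x ^ 4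
          + 20643840 / ((1 - q) ^ 9 * x ^ 4) := by ring

theorem stmt_13 (q : ℝ) (hq : q ∈ Set.Ioo (0 : ℝ) 1) :
    ∃ C > (0 : ℝ), ∃ X > (0 : ℝ), ∀ x : ℝ, X ≤ x →
      |(∫ u in Set.Ioi (0 : ℝ),
          Real.exp (-x * u) * Real.exp ((q * x - 1 / 2) * Real.log (1 + u ^ 2))) -
        (1 / x + 2 * q / x ^ 2 + (12 * q ^ 2 - 1) / x ^ 3)| ≤ C / x ^ 4 := by
  obtain ⟨hq0, hq1⟩ := hq
  have hε0 : (0:ℝ) < 1 - q := by linarith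
  refine ⟨2 ^ 51 / (1 - q) ^ 9, by positivity, max 4 (2 / q),
    lt_of_lt_of_le (by norm_num) (le_max_left _ _), fun x hx => ?_⟩
  have hx4 : (4:ℝ) ≤ x := le_trans (le_max_left _ _) hx
  have hxq : 2 / q ≤ x := le_trans (le_max_right _ _) hx
  have hqx2 : 2 ≤ q * x := by
    rw [div_le_iff₀ hq0] at hxq
    nlinarith
  have hx0 : (0:ℝ) < x := by linarith
  have hε9 : (0:ℝ) < (1 - q) ^ 9 := by positivity
  have hε91 : (1 - q) ^ 9 ≤ 1 := pow_le_one₀ hε0.le (by linarith)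
  have h := aux_main hq0 hq1 hx4 hqx2
  refine h.trans ?_
  have h1 : (2160 + 33 + 1027391894323200 : ℝ) / x ^ 4
      ≤ 1027391894325393 / ((1 - q) ^ 9 * x ^ 4) := by
    rw [div_le_div_iff₀ (by positivity) (by positivity)]
    have hx40 : (0:ℝ) ≤ x ^ 4 := by positivity
    nlinarith [mul_le_of_le_one_left hx40 hε91]
  calc (2160 + 33 + 1027391894323200 : ℝ) / x ^ 4 + 20643840 / ((1 - q) ^ 9 * x ^ 4)
      ≤ 1027391894325393 / ((1 - q) ^ 9 * x ^ 4) + 20643840 / ((1 - q) ^ 9 * x ^ 4) :=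
        add_le_add h1 le_rfl
    _ = 1027391914969233 / ((1 - q) ^ 9 * x ^ 4) := by
        rw [← add_div]; norm_num
    _ ≤ 2 ^ 51 / ((1 - q) ^ 9 * x ^ 4) := by
        gcongr <;> norm_num
    _ = 2 ^ 51 / (1 - q) ^ 9 / x ^ 4 := (div_div _ _ _).symm
end

section
/- Let q ∈ [1,∞) be fixed. Then as x → +∞ through real values, i·∫₀^1 e^{−ixt} (1−t²)^{qx−1/2} dt = 1/x + 2q/x² + (12q² − 1)/x³ + O(x^{−4}), where for 0 < t < 1 one sets (1−t²)^{qx−1/2} = exp((qx−1/2) ln(1−t²)) with the real logarithm. (This is the asymptotic expansion Σ_{k≥0} c_k(q) k!/x^{k+1}, with c₀ = 1, c₁ = 2q, c₂ = 6q² − 1/2, of the integral ∫ over the segment [0,i] of e^{−xu}(1+u²)^{qx−1/2} du obtained by the method of steepest descents.) -/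
open Complex MeasureTheory intervalIntegral

noncomputable def Jf (x : ℝ) (m : ℕ) (a : ℝ) : ℂ :=
  ∫ t in (0:ℝ)..1, Complex.exp (-(Complex.I*x*t)) * ((t^m * (1-t^2)^a : ℝ) : ℂ)

lemma contR (m : ℕ) (a : ℝ) (ha : 0 ≤ a) :
    Continuous (fun t : ℝ => t^m * (1-t^2)^a) :=
  (continuous_pow m).mul
    ((continuous_const.sub (continuous_pow 2)).rpow_const (fun _ => Or.inr ha))

lemma contInt (x : ℝ) (m : ℕ) (a : ℝ) (ha : 0 ≤ a) :
    Continuous (fun t : ℝ => Complex.exp (-(Complex.I*x*t)) * ((t^m * (1-t^2)^a : ℝ) : ℂ)) := by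
  apply Continuous.mul
  · exact Complex.continuous_exp.comp
      (((continuous_const.mul Complex.continuous_ofReal)).neg)
  · exact Complex.continuous_ofReal.comp (contR m a ha)

lemma hasDerivG (m : ℕ) (a : ℝ) (ha : 1 ≤ a) (t : ℝ) :
    HasDerivAt (fun t : ℝ => t^m * (1-t^2)^a)
      ((m : ℝ) * t^(m-1) * (1-t^2)^a + t^m * (-(2*t^1) * a * (1-t^2)^(a-1))) t := by
  have h1 : HasDerivAt (fun t : ℝ => 1 - t^2) (-(2*t^1)) t := by
    simpa using (hasDerivAt_pow 2 t).const_sub 1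
  have h2 := h1.rpow_const (p := a) (Or.inr ha)
  simpa [mul_comm, mul_assoc, mul_left_comm] using (hasDerivAt_pow m t).fun_mul h2

lemma ibp (x : ℝ) (m : ℕ) (a : ℝ) (ha : 2 ≤ a) :
    (Complex.I*x) * Jf x m a
      = (if m = 0 then 1 else 0) + (m : ℂ) * Jf x (m-1) a - 2*a*Jf x (m+1) (a-1) := by
  have ha0 : (0:ℝ) ≤ a := by linarith
  have ha1 : (1:ℝ) ≤ a := by linarith
  have ha10 : (0:ℝ) ≤ a - 1 := by linarith
  set F : ℝ → ℂ := fun t => Complex.exp (-(Complex.I*x*t)) * ((t^m * (1-t^2)^a : ℝ) : ℂ)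
  set F' : ℝ → ℂ := fun t =>
    (-(Complex.I*x)) * (Complex.exp (-(Complex.I*x*t)) * ((t^m * (1-t^2)^a : ℝ) : ℂ))
    + ((m : ℂ) * (Complex.exp (-(Complex.I*x*t)) * ((t^(m-1) * (1-t^2)^a : ℝ) : ℂ))
       - 2*a*(Complex.exp (-(Complex.I*x*t)) * ((t^(m+1) * (1-t^2)^(a-1) : ℝ) : ℂ)))
  have hderiv : ∀ t ∈ Set.uIcc (0:ℝ) 1, HasDerivAt F (F' t) t := by
    intro t _
    have hexp : HasDerivAt (fun t : ℝ => Complex.exp (-(Complex.I*x*t)))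
        (-(Complex.I*x) * Complex.exp (-(Complex.I*x*t))) t := by
      have h := (((hasDerivAt_id (t:ℂ)).const_mul (Complex.I*x)).neg).cexp.comp_ofReal
      simpa [mul_comm] using h
    have hg := (hasDerivG m a ha1 t).ofReal_comp
    have hmul := hexp.fun_mul hg
    refine hmul.congr_deriv (Eq.symm ?_)
    simp only [F']
    push_cast
    rcases Nat.eq_zero_or_pos m with h | h
    · subst h; push_cast; ring
    · obtain ⟨k, rfl⟩ : ∃ k, m = k + 1 := ⟨m-1, (Nat.succ_pred_eq_of_pos h).symm⟩
      simp only [Nat.add_sub_cancel]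
      push_cast
      ring
  have hint : IntervalIntegrable F' volume 0 1 := by
    apply Continuous.intervalIntegrable
    exact (continuous_const.mul (contInt x m a ha0)).add
      ((continuous_const.mul (contInt x (m-1) a ha0)).sub
        (continuous_const.mul (contInt x (m+1) (a-1) ha10)))
  have hFTC := intervalIntegral.integral_eq_sub_of_hasDerivAt hderiv hint
  have hF1 : F 1 = 0 := by
    simp only [F]
    norm_num [Real.zero_rpow (by linarith : a ≠ 0)]
  have hF0 : F 0 = (if m = 0 then 1 else 0) := by
    simp only [F]
    rcases Nat.eq_zero_or_pos m with h | h
    · subst h; norm_num [Real.one_rpow]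
    · rw [if_neg (Nat.pos_iff_ne_zero.mp h)]
      norm_num [zero_pow (Nat.pos_iff_ne_zero.mp h), Real.one_rpow]
  have hsplit : ∫ t in (0:ℝ)..1, F' t
      = (-(Complex.I*x)) * Jf x m a
        + ((m : ℂ) * Jf x (m-1) a - 2*a*Jf x (m+1) (a-1)) := by
    rw [intervalIntegral.integral_add, intervalIntegral.integral_sub,
        intervalIntegral.integral_const_mul, intervalIntegral.integral_const_mul,
        intervalIntegral.integral_const_mul]
    · rfl
    · exact (continuous_const.mul (contInt x (m-1) a ha0)).intervalIntegrable _ _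
    · exact (continuous_const.mul (contInt x (m+1) (a-1) ha10)).intervalIntegrable _ _
    · exact (continuous_const.mul (contInt x m a ha0)).intervalIntegrable _ _
    · exact ((continuous_const.mul (contInt x (m-1) a ha0)).sub
        (continuous_const.mul (contInt x (m+1) (a-1) ha10))).intervalIntegrable _ _
  rw [hsplit, hF1, hF0] at hFTC
  linear_combination -hFTC

lemma ibp0 (x : ℝ) (a : ℝ) (ha : 2 ≤ a) :
    (Complex.I*x) * Jf x 0 a = 1 - 2*(a:ℂ)*Jf x 1 (a-1) := by
  have h := ibp x 0 a ha
  simpa using h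

lemma ibpS (x : ℝ) (m₀ : ℕ) (a : ℝ) (ha : 2 ≤ a) :
    (Complex.I*x) * Jf x (m₀+1) a
      = ((m₀+1 : ℕ):ℂ)*Jf x m₀ a - 2*(a:ℂ)*Jf x (m₀+2) (a-1) := by
  have h := ibp x (m₀+1) a ha
  simpa using h

lemma Rstep (k : ℕ) (a : ℝ) (ha : 1 ≤ a) :
    ∫ t in (0:ℝ)..1, t^(2*k+3)*(1-t^2)^a
      = (((k+1:ℕ)):ℝ)/(a+1) * ∫ t in (0:ℝ)..1, t^(2*k+1)*(1-t^2)^(a+1) := by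
  have ha0 : (0:ℝ) ≤ a := by linarith
  have ha1 : (0:ℝ) ≤ a + 1 := by linarith
  have hane : a + 1 ≠ 0 := by linarith
  set G : ℝ → ℝ := fun t => -(t^(2*k+2) * (1-t^2)^(a+1)/(2*(a+1))) with hG
  have hderiv : ∀ t ∈ Set.uIcc (0:ℝ) 1, HasDerivAt G
      (t^(2*k+3)*(1-t^2)^a - (((k+1:ℕ)):ℝ)/(a+1) * (t^(2*k+1)*(1-t^2)^(a+1))) t := by
    intro t _
    have h := ((hasDerivG (2*k+2) (a+1) (by linarith) t).div_const (2*(a+1))).fun_neg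
    refine h.congr_deriv (Eq.symm ?_)
    rw [show a + 1 - 1 = a by ring, show 2*k+2-1 = 2*k+1 by omega]
    push_cast
    field_simp
    ring
  have hint : IntervalIntegrable (fun t : ℝ =>
      t^(2*k+3)*(1-t^2)^a - (((k+1:ℕ)):ℝ)/(a+1) * (t^(2*k+1)*(1-t^2)^(a+1))) volume 0 1 := by
    apply Continuous.intervalIntegrable
    exact (contR (2*k+3) a ha0).sub (continuous_const.mul (contR (2*k+1) (a+1) ha1))
  have hFTC := intervalIntegral.integral_eq_sub_of_hasDerivAt hderiv hint
  have hG1 : G 1 = 0 := by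
    simp only [hG]
    norm_num [Real.zero_rpow hane]
  have hG0 : G 0 = 0 := by
    simp only [hG]
    norm_num
  rw [hG1, hG0] at hFTC
  have hsplit : ∫ t in (0:ℝ)..1,
      (t^(2*k+3)*(1-t^2)^a - (((k+1:ℕ)):ℝ)/(a+1) * (t^(2*k+1)*(1-t^2)^(a+1)))
      = (∫ t in (0:ℝ)..1, t^(2*k+3)*(1-t^2)^a)
        - (((k+1:ℕ)):ℝ)/(a+1) * ∫ t in (0:ℝ)..1, t^(2*k+1)*(1-t^2)^(a+1) := by
    rw [intervalIntegral.integral_sub, intervalIntegral.integral_const_mul]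
    · exact (contR (2*k+3) a ha0).intervalIntegrable _ _
    · exact (continuous_const.mul (contR (2*k+1) (a+1) ha1)).intervalIntegrable _ _
  rw [hsplit] at hFTC
  linarith [hFTC]

lemma R1 (a : ℝ) (ha : 1 ≤ a) :
    ∫ t in (0:ℝ)..1, t^(1:ℕ)*(1-t^2)^a = 1/(2*(a+1)) := by
  have hane : a + 1 ≠ 0 := by linarith
  set G : ℝ → ℝ := fun t => -((1-t^2)^(a+1)/(2*(a+1))) with hG
  have hderiv : ∀ t ∈ Set.uIcc (0:ℝ) 1, HasDerivAt G (t^(1:ℕ)*(1-t^2)^a) t := by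
    intro t _
    have h1 : HasDerivAt (fun t : ℝ => 1 - t^2) (-(2*t^1)) t := by
      simpa using (hasDerivAt_pow 2 t).const_sub 1
    have h := ((h1.rpow_const (p := a+1) (Or.inr (by linarith))).div_const (2*(a+1))).fun_neg
    refine h.congr_deriv (Eq.symm ?_)
    rw [show a + 1 - 1 = a by ring]
    field_simp
  have hint : IntervalIntegrable (fun t : ℝ => t^(1:ℕ)*(1-t^2)^a) volume 0 1 :=
    (contR 1 a (by linarith)).intervalIntegrable _ _
  have hFTC := intervalIntegral.integral_eq_sub_of_hasDerivAt hderiv hint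
  have hG1 : G 1 = 0 := by
    simp only [hG]; norm_num [Real.zero_rpow hane]
  have hG0 : G 0 = -(1/(2*(a+1))) := by
    simp only [hG]
    norm_num [Real.one_rpow]
  rw [hG1, hG0] at hFTC
  linarith [hFTC]

lemma normJ (x : ℝ) (m : ℕ) (a : ℝ) (ha : 0 ≤ a) :
    ‖Jf x m a‖ ≤ ∫ t in (0:ℝ)..1, t^m*(1-t^2)^a := by
  refine le_trans (intervalIntegral.norm_integral_le_integral_norm zero_le_one) (le_of_eq ?_)
  apply intervalIntegral.integral_congr
  intro t ht
  rw [Set.uIcc_of_le zero_le_one] at ht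
  obtain ⟨ht0, ht1⟩ := ht
  dsimp only
  have h1 : ‖Complex.exp (-(Complex.I*x*t))‖ = 1 := by
    rw [Complex.norm_exp]
    simp
  rw [norm_mul, h1, one_mul, Complex.norm_real, Real.norm_eq_abs]
  have h2 : (0:ℝ) ≤ 1 - t^2 := by nlinarith
  exact abs_of_nonneg (mul_nonneg (pow_nonneg ht0 m) (Real.rpow_nonneg h2 a))

lemma lemI7 : Complex.I^7 = -Complex.I := by
  have h : Complex.I^7 = (Complex.I^2)^3*Complex.I := by ring
  rw [h, Complex.I_sq]
  ring

set_option maxHeartbeats 2000000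

lemma jb1_4 (q x : ℝ) (hq : 1 ≤ q) (hx : 16 ≤ x) : ‖Jf x 1 (q*x-1/2-1-1-1-1)‖ ≤ 2/x^1 := by
  have hx0 : (0:ℝ) < x := by linarith
  have hqx : x ≤ q*x := by nlinarith [mul_nonneg (sub_nonneg.mpr hq) (le_of_lt hx0)]
  have n := normJ x 1 (q*x-1/2-1-1-1-1) (by linarith)
  have r1 : (∫ t in (0:ℝ)..1, t^(1:ℕ)*(1-t^2)^(q*x-1/2-1-1-1-1)) = 1/(2*((q*x-1/2-1-1-1-1)+1)) :=
    R1 (q*x-1/2-1-1-1-1) (by linarith)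
  rw [r1] at n
  refine le_trans n ?_
  have p1 : x/2 ≤ (q*x-1/2-1-1-1-1)+1 := by linarith
  rw [div_le_div_iff₀ (by linarith) (pow_pos hx0 1)]
  nlinarith [hqx]

lemma jb3_5 (q x : ℝ) (hq : 1 ≤ q) (hx : 16 ≤ x) : ‖Jf x 3 (q*x-1/2-1-1-1-1-1)‖ ≤ 8/x^2 := by
  have hx0 : (0:ℝ) < x := by linarith
  have hqx : x ≤ q*x := by nlinarith [mul_nonneg (sub_nonneg.mpr hq) (le_of_lt hx0)]
  have n := normJ x 3 (q*x-1/2-1-1-1-1-1) (by linarith)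
  have r3 : (∫ t in (0:ℝ)..1, t^(3:ℕ)*(1-t^2)^(q*x-1/2-1-1-1-1-1))
      = (((1:ℕ)):ℝ)/((q*x-1/2-1-1-1-1-1)+1) * ∫ t in (0:ℝ)..1, t^(1:ℕ)*(1-t^2)^((q*x-1/2-1-1-1-1-1)+1) :=
    Rstep 0 (q*x-1/2-1-1-1-1-1) (by linarith)
  have r1 : (∫ t in (0:ℝ)..1, t^(1:ℕ)*(1-t^2)^((q*x-1/2-1-1-1-1-1)+1)) = 1/(2*(((q*x-1/2-1-1-1-1-1)+1)+1)) :=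
    R1 ((q*x-1/2-1-1-1-1-1)+1) (by linarith)
  rw [r3, r1] at n
  refine le_trans n ?_
  have p1 : x/2 ≤ (q*x-1/2-1-1-1-1-1)+1 := by linarith
  have p2 : x/2 ≤ ((q*x-1/2-1-1-1-1-1)+1)+1 := by linarith
  have mm1 : (x/2)*(x/2) ≤ ((q*x-1/2-1-1-1-1-1)+1)*(((q*x-1/2-1-1-1-1-1)+1)+1) :=
    mul_le_mul p1 p2 (by linarith) (by linarith)
  rw [div_mul_div_comm, div_le_div_iff₀ (mul_pos (by linarith) (by linarith)) (pow_pos hx0 2)]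
  push_cast
  nlinarith [mm1, pow_nonneg (le_of_lt hx0) 4, sq_nonneg x, hx0]

lemma jb5_6 (q x : ℝ) (hq : 1 ≤ q) (hx : 16 ≤ x) : ‖Jf x 5 (q*x-1/2-1-1-1-1-1-1)‖ ≤ 32/x^3 := by
  have hx0 : (0:ℝ) < x := by linarith
  have hqx : x ≤ q*x := by nlinarith [mul_nonneg (sub_nonneg.mpr hq) (le_of_lt hx0)]
  have n := normJ x 5 (q*x-1/2-1-1-1-1-1-1) (by linarith)
  have r5 : (∫ t in (0:ℝ)..1, t^(5:ℕ)*(1-t^2)^(q*x-1/2-1-1-1-1-1-1))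
      = (((2:ℕ)):ℝ)/((q*x-1/2-1-1-1-1-1-1)+1) * ∫ t in (0:ℝ)..1, t^(3:ℕ)*(1-t^2)^((q*x-1/2-1-1-1-1-1-1)+1) :=
    Rstep 1 (q*x-1/2-1-1-1-1-1-1) (by linarith)
  have r3 : (∫ t in (0:ℝ)..1, t^(3:ℕ)*(1-t^2)^((q*x-1/2-1-1-1-1-1-1)+1))
      = (((1:ℕ)):ℝ)/(((q*x-1/2-1-1-1-1-1-1)+1)+1) * ∫ t in (0:ℝ)..1, t^(1:ℕ)*(1-t^2)^(((q*x-1/2-1-1-1-1-1-1)+1)+1) :=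
    Rstep 0 ((q*x-1/2-1-1-1-1-1-1)+1) (by linarith)
  have r1 : (∫ t in (0:ℝ)..1, t^(1:ℕ)*(1-t^2)^(((q*x-1/2-1-1-1-1-1-1)+1)+1)) = 1/(2*((((q*x-1/2-1-1-1-1-1-1)+1)+1)+1)) :=
    R1 (((q*x-1/2-1-1-1-1-1-1)+1)+1) (by linarith)
  rw [r5, r3, r1] at n
  refine le_trans n ?_
  have p1 : x/2 ≤ (q*x-1/2-1-1-1-1-1-1)+1 := by linarith
  have p2 : x/2 ≤ ((q*x-1/2-1-1-1-1-1-1)+1)+1 := by linarith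
  have p3 : x/2 ≤ (((q*x-1/2-1-1-1-1-1-1)+1)+1)+1 := by linarith
  have mm1 : (x/2)*(x/2) ≤ ((q*x-1/2-1-1-1-1-1-1)+1)*(((q*x-1/2-1-1-1-1-1-1)+1)+1) :=
    mul_le_mul p1 p2 (by linarith) (by linarith)
  have mm2 : ((x/2)*(x/2))*(x/2) ≤ (((q*x-1/2-1-1-1-1-1-1)+1)*(((q*x-1/2-1-1-1-1-1-1)+1)+1))*((((q*x-1/2-1-1-1-1-1-1)+1)+1)+1) :=
    mul_le_mul mm1 p3 (by linarith) (le_trans (by positivity) mm1)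
  rw [div_mul_div_comm, div_mul_div_comm, div_le_div_iff₀ (mul_pos (by linarith) (mul_pos (by linarith) (by linarith))) (pow_pos hx0 3)]
  push_cast
  nlinarith [mm2, pow_nonneg (le_of_lt hx0) 4, sq_nonneg x, hx0]

lemma jb7_7 (q x : ℝ) (hq : 1 ≤ q) (hx : 16 ≤ x) : ‖Jf x 7 (q*x-1/2-1-1-1-1-1-1-1)‖ ≤ 192/x^4 := by
  have hx0 : (0:ℝ) < x := by linarith
  have hqx : x ≤ q*x := by nlinarith [mul_nonneg (sub_nonneg.mpr hq) (le_of_lt hx0)]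
  have n := normJ x 7 (q*x-1/2-1-1-1-1-1-1-1) (by linarith)
  have r7 : (∫ t in (0:ℝ)..1, t^(7:ℕ)*(1-t^2)^(q*x-1/2-1-1-1-1-1-1-1))
      = (((3:ℕ)):ℝ)/((q*x-1/2-1-1-1-1-1-1-1)+1) * ∫ t in (0:ℝ)..1, t^(5:ℕ)*(1-t^2)^((q*x-1/2-1-1-1-1-1-1-1)+1) :=
    Rstep 2 (q*x-1/2-1-1-1-1-1-1-1) (by linarith)
  have r5 : (∫ t in (0:ℝ)..1, t^(5:ℕ)*(1-t^2)^((q*x-1/2-1-1-1-1-1-1-1)+1))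
      = (((2:ℕ)):ℝ)/(((q*x-1/2-1-1-1-1-1-1-1)+1)+1) * ∫ t in (0:ℝ)..1, t^(3:ℕ)*(1-t^2)^(((q*x-1/2-1-1-1-1-1-1-1)+1)+1) :=
    Rstep 1 ((q*x-1/2-1-1-1-1-1-1-1)+1) (by linarith)
  have r3 : (∫ t in (0:ℝ)..1, t^(3:ℕ)*(1-t^2)^(((q*x-1/2-1-1-1-1-1-1-1)+1)+1))
      = (((1:ℕ)):ℝ)/((((q*x-1/2-1-1-1-1-1-1-1)+1)+1)+1) * ∫ t in (0:ℝ)..1, t^(1:ℕ)*(1-t^2)^((((q*x-1/2-1-1-1-1-1-1-1)+1)+1)+1) :=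
    Rstep 0 (((q*x-1/2-1-1-1-1-1-1-1)+1)+1) (by linarith)
  have r1 : (∫ t in (0:ℝ)..1, t^(1:ℕ)*(1-t^2)^((((q*x-1/2-1-1-1-1-1-1-1)+1)+1)+1)) = 1/(2*(((((q*x-1/2-1-1-1-1-1-1-1)+1)+1)+1)+1)) :=
    R1 ((((q*x-1/2-1-1-1-1-1-1-1)+1)+1)+1) (by linarith)
  rw [r7, r5, r3, r1] at n
  refine le_trans n ?_
  have p1 : x/2 ≤ (q*x-1/2-1-1-1-1-1-1-1)+1 := by linarith
  have p2 : x/2 ≤ ((q*x-1/2-1-1-1-1-1-1-1)+1)+1 := by linarith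
  have p3 : x/2 ≤ (((q*x-1/2-1-1-1-1-1-1-1)+1)+1)+1 := by linarith
  have p4 : x/2 ≤ ((((q*x-1/2-1-1-1-1-1-1-1)+1)+1)+1)+1 := by linarith
  have mm1 : (x/2)*(x/2) ≤ ((q*x-1/2-1-1-1-1-1-1-1)+1)*(((q*x-1/2-1-1-1-1-1-1-1)+1)+1) :=
    mul_le_mul p1 p2 (by linarith) (by linarith)
  have mm2 : ((x/2)*(x/2))*(x/2) ≤ (((q*x-1/2-1-1-1-1-1-1-1)+1)*(((q*x-1/2-1-1-1-1-1-1-1)+1)+1))*((((q*x-1/2-1-1-1-1-1-1-1)+1)+1)+1) :=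
    mul_le_mul mm1 p3 (by linarith) (le_trans (by positivity) mm1)
  have mm3 : (((x/2)*(x/2))*(x/2))*(x/2) ≤ ((((q*x-1/2-1-1-1-1-1-1-1)+1)*(((q*x-1/2-1-1-1-1-1-1-1)+1)+1))*((((q*x-1/2-1-1-1-1-1-1-1)+1)+1)+1))*(((((q*x-1/2-1-1-1-1-1-1-1)+1)+1)+1)+1) :=
    mul_le_mul mm2 p4 (by linarith) (le_trans (by positivity) mm2)
  rw [div_mul_div_comm, div_mul_div_comm, div_mul_div_comm, div_le_div_iff₀ (mul_pos (by linarith) (mul_pos (by linarith) (mul_pos (by linarith) (by linarith)))) (pow_pos hx0 4)]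
  push_cast
  nlinarith [mm3, pow_nonneg (le_of_lt hx0) 4, sq_nonneg x, hx0]

lemma Bb1_4 (q x : ℝ) (hq : 1 ≤ q) (hx : 16 ≤ x) :
    ‖Complex.I*(((((1680:ℝ)*(q*x-1/2)^4 + (-10080:ℝ)*(q*x-1/2)^3 + (18480:ℝ)*(q*x-1/2)^2 + (-10080:ℝ)*(q*x-1/2)):ℝ):ℂ)*Jf x 1 (q*x-1/2-1-1-1-1))‖ ≤ 80640*q^7*x^3 := by
  have hq0 : (0:ℝ) < q := by linarith
  have hx0 : (0:ℝ) < x := by linarith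
  have hqx : x ≤ q*x := by nlinarith [mul_nonneg (sub_nonneg.mpr hq) (le_of_lt hx0)]
  have hw1 : (1:ℝ) ≤ q*x-1/2 := by linarith
  have hw0 : (0:ℝ) ≤ q*x-1/2 := by linarith
  have hwb : q*x-1/2 ≤ q*x := by linarith
  have hpc : (q*x-1/2)^4 ≤ (q*x)^4 := pow_le_pow_left₀ hw0 hwb 4
  have hp1 : (q*x-1/2)^1 ≤ (q*x)^4 := le_trans (pow_le_pow_right₀ hw1 (by norm_num)) hpc
  have hp2 : (q*x-1/2)^2 ≤ (q*x)^4 := le_trans (pow_le_pow_right₀ hw1 (by norm_num)) hpc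
  have hp3 : (q*x-1/2)^3 ≤ (q*x)^4 := le_trans (pow_le_pow_right₀ hw1 (by norm_num)) hpc
  have hn1 : (0:ℝ) ≤ (q*x-1/2)^1 := pow_nonneg hw0 1
  have hn2 : (0:ℝ) ≤ (q*x-1/2)^2 := pow_nonneg hw0 2
  have hn3 : (0:ℝ) ≤ (q*x-1/2)^3 := pow_nonneg hw0 3
  have hn4 : (0:ℝ) ≤ (q*x-1/2)^4 := pow_nonneg hw0 4
  have hgam : |(1680:ℝ)*(q*x-1/2)^4 + (-10080:ℝ)*(q*x-1/2)^3 + (18480:ℝ)*(q*x-1/2)^2 + (-10080:ℝ)*(q*x-1/2)| ≤ 40320*(q*x)^4 := by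
    rw [abs_le]
    constructor
    · linarith [hp1, hp2, hp3, hpc, hn1, hn2, hn3, hn4]
    · linarith [hp1, hp2, hp3, hpc, hn1, hn2, hn3, hn4]
  have hJ := jb1_4 q x hq hx
  rw [norm_mul, Complex.norm_I, one_mul, norm_mul, Complex.norm_real, Real.norm_eq_abs]
  calc |(1680:ℝ)*(q*x-1/2)^4 + (-10080:ℝ)*(q*x-1/2)^3 + (18480:ℝ)*(q*x-1/2)^2 + (-10080:ℝ)*(q*x-1/2)| * ‖Jf x 1 (q*x-1/2-1-1-1-1)‖
      ≤ (40320*(q*x)^4) * (2/x^1) :=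
        mul_le_mul hgam hJ (norm_nonneg _) (by positivity)
    _ = 80640*q^4*x^3 := by
        field_simp
        ring
    _ ≤ 80640*q^7*x^3 := by
        nlinarith [pow_le_pow_right₀ hq (by norm_num : 4 ≤ 7), pow_pos hx0 3]

lemma Bb3_5 (q x : ℝ) (hq : 1 ≤ q) (hx : 16 ≤ x) :
    ‖Complex.I*(((((-3360:ℝ)*(q*x-1/2)^5 + (33600:ℝ)*(q*x-1/2)^4 + (-117600:ℝ)*(q*x-1/2)^3 + (168000:ℝ)*(q*x-1/2)^2 + (-80640:ℝ)*(q*x-1/2)):ℝ):ℂ)*Jf x 3 (q*x-1/2-1-1-1-1-1))‖ ≤ 3225600*q^7*x^3 := by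
  have hq0 : (0:ℝ) < q := by linarith
  have hx0 : (0:ℝ) < x := by linarith
  have hqx : x ≤ q*x := by nlinarith [mul_nonneg (sub_nonneg.mpr hq) (le_of_lt hx0)]
  have hw1 : (1:ℝ) ≤ q*x-1/2 := by linarith
  have hw0 : (0:ℝ) ≤ q*x-1/2 := by linarith
  have hwb : q*x-1/2 ≤ q*x := by linarith
  have hpc : (q*x-1/2)^5 ≤ (q*x)^5 := pow_le_pow_left₀ hw0 hwb 5
  have hp1 : (q*x-1/2)^1 ≤ (q*x)^5 := le_trans (pow_le_pow_right₀ hw1 (by norm_num)) hpc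
  have hp2 : (q*x-1/2)^2 ≤ (q*x)^5 := le_trans (pow_le_pow_right₀ hw1 (by norm_num)) hpc
  have hp3 : (q*x-1/2)^3 ≤ (q*x)^5 := le_trans (pow_le_pow_right₀ hw1 (by norm_num)) hpc
  have hp4 : (q*x-1/2)^4 ≤ (q*x)^5 := le_trans (pow_le_pow_right₀ hw1 (by norm_num)) hpc
  have hn1 : (0:ℝ) ≤ (q*x-1/2)^1 := pow_nonneg hw0 1
  have hn2 : (0:ℝ) ≤ (q*x-1/2)^2 := pow_nonneg hw0 2
  have hn3 : (0:ℝ) ≤ (q*x-1/2)^3 := pow_nonneg hw0 3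
  have hn4 : (0:ℝ) ≤ (q*x-1/2)^4 := pow_nonneg hw0 4
  have hn5 : (0:ℝ) ≤ (q*x-1/2)^5 := pow_nonneg hw0 5
  have hgam : |(-3360:ℝ)*(q*x-1/2)^5 + (33600:ℝ)*(q*x-1/2)^4 + (-117600:ℝ)*(q*x-1/2)^3 + (168000:ℝ)*(q*x-1/2)^2 + (-80640:ℝ)*(q*x-1/2)| ≤ 403200*(q*x)^5 := by
    rw [abs_le]
    constructor
    · linarith [hp1, hp2, hp3, hp4, hpc, hn1, hn2, hn3, hn4, hn5]
    · linarith [hp1, hp2, hp3, hp4, hpc, hn1, hn2, hn3, hn4, hn5]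
  have hJ := jb3_5 q x hq hx
  rw [norm_mul, Complex.norm_I, one_mul, norm_mul, Complex.norm_real, Real.norm_eq_abs]
  calc |(-3360:ℝ)*(q*x-1/2)^5 + (33600:ℝ)*(q*x-1/2)^4 + (-117600:ℝ)*(q*x-1/2)^3 + (168000:ℝ)*(q*x-1/2)^2 + (-80640:ℝ)*(q*x-1/2)| * ‖Jf x 3 (q*x-1/2-1-1-1-1-1)‖
      ≤ (403200*(q*x)^5) * (8/x^2) :=
        mul_le_mul hgam hJ (norm_nonneg _) (by positivity)
    _ = 3225600*q^5*x^3 := by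
        field_simp
        ring
    _ ≤ 3225600*q^7*x^3 := by
        nlinarith [pow_le_pow_right₀ hq (by norm_num : 5 ≤ 7), pow_pos hx0 3]

lemma Bb5_6 (q x : ℝ) (hq : 1 ≤ q) (hx : 16 ≤ x) :
    ‖Complex.I*(((((1344:ℝ)*(q*x-1/2)^6 + (-20160:ℝ)*(q*x-1/2)^5 + (114240:ℝ)*(q*x-1/2)^4 + (-302400:ℝ)*(q*x-1/2)^3 + (368256:ℝ)*(q*x-1/2)^2 + (-161280:ℝ)*(q*x-1/2)):ℝ):ℂ)*Jf x 5 (q*x-1/2-1-1-1-1-1-1))‖ ≤ 30965760*q^7*x^3 := by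
  have hq0 : (0:ℝ) < q := by linarith
  have hx0 : (0:ℝ) < x := by linarith
  have hqx : x ≤ q*x := by nlinarith [mul_nonneg (sub_nonneg.mpr hq) (le_of_lt hx0)]
  have hw1 : (1:ℝ) ≤ q*x-1/2 := by linarith
  have hw0 : (0:ℝ) ≤ q*x-1/2 := by linarith
  have hwb : q*x-1/2 ≤ q*x := by linarith
  have hpc : (q*x-1/2)^6 ≤ (q*x)^6 := pow_le_pow_left₀ hw0 hwb 6
  have hp1 : (q*x-1/2)^1 ≤ (q*x)^6 := le_trans (pow_le_pow_right₀ hw1 (by norm_num)) hpc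
  have hp2 : (q*x-1/2)^2 ≤ (q*x)^6 := le_trans (pow_le_pow_right₀ hw1 (by norm_num)) hpc
  have hp3 : (q*x-1/2)^3 ≤ (q*x)^6 := le_trans (pow_le_pow_right₀ hw1 (by norm_num)) hpc
  have hp4 : (q*x-1/2)^4 ≤ (q*x)^6 := le_trans (pow_le_pow_right₀ hw1 (by norm_num)) hpc
  have hp5 : (q*x-1/2)^5 ≤ (q*x)^6 := le_trans (pow_le_pow_right₀ hw1 (by norm_num)) hpc
  have hn1 : (0:ℝ) ≤ (q*x-1/2)^1 := pow_nonneg hw0 1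
  have hn2 : (0:ℝ) ≤ (q*x-1/2)^2 := pow_nonneg hw0 2
  have hn3 : (0:ℝ) ≤ (q*x-1/2)^3 := pow_nonneg hw0 3
  have hn4 : (0:ℝ) ≤ (q*x-1/2)^4 := pow_nonneg hw0 4
  have hn5 : (0:ℝ) ≤ (q*x-1/2)^5 := pow_nonneg hw0 5
  have hn6 : (0:ℝ) ≤ (q*x-1/2)^6 := pow_nonneg hw0 6
  have hgam : |(1344:ℝ)*(q*x-1/2)^6 + (-20160:ℝ)*(q*x-1/2)^5 + (114240:ℝ)*(q*x-1/2)^4 + (-302400:ℝ)*(q*x-1/2)^3 + (368256:ℝ)*(q*x-1/2)^2 + (-161280:ℝ)*(q*x-1/2)| ≤ 967680*(q*x)^6 := by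
    rw [abs_le]
    constructor
    · linarith [hp1, hp2, hp3, hp4, hp5, hpc, hn1, hn2, hn3, hn4, hn5, hn6]
    · linarith [hp1, hp2, hp3, hp4, hp5, hpc, hn1, hn2, hn3, hn4, hn5, hn6]
  have hJ := jb5_6 q x hq hx
  rw [norm_mul, Complex.norm_I, one_mul, norm_mul, Complex.norm_real, Real.norm_eq_abs]
  calc |(1344:ℝ)*(q*x-1/2)^6 + (-20160:ℝ)*(q*x-1/2)^5 + (114240:ℝ)*(q*x-1/2)^4 + (-302400:ℝ)*(q*x-1/2)^3 + (368256:ℝ)*(q*x-1/2)^2 + (-161280:ℝ)*(q*x-1/2)| * ‖Jf x 5 (q*x-1/2-1-1-1-1-1-1)‖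
      ≤ (967680*(q*x)^6) * (32/x^3) :=
        mul_le_mul hgam hJ (norm_nonneg _) (by positivity)
    _ = 30965760*q^6*x^3 := by
        field_simp
        ring
    _ ≤ 30965760*q^7*x^3 := by
        nlinarith [pow_le_pow_right₀ hq (by norm_num : 6 ≤ 7), pow_pos hx0 3]

lemma Bb7_7 (q x : ℝ) (hq : 1 ≤ q) (hx : 16 ≤ x) :
    ‖Complex.I*(((((-128:ℝ)*(q*x-1/2)^7 + (2688:ℝ)*(q*x-1/2)^6 + (-22400:ℝ)*(q*x-1/2)^5 + (94080:ℝ)*(q*x-1/2)^4 + (-207872:ℝ)*(q*x-1/2)^3 + (225792:ℝ)*(q*x-1/2)^2 + (-92160:ℝ)*(q*x-1/2)):ℝ):ℂ)*Jf x 7 (q*x-1/2-1-1-1-1-1-1-1))‖ ≤ 123863040*q^7*x^3 := by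
  have hq0 : (0:ℝ) < q := by linarith
  have hx0 : (0:ℝ) < x := by linarith
  have hqx : x ≤ q*x := by nlinarith [mul_nonneg (sub_nonneg.mpr hq) (le_of_lt hx0)]
  have hw1 : (1:ℝ) ≤ q*x-1/2 := by linarith
  have hw0 : (0:ℝ) ≤ q*x-1/2 := by linarith
  have hwb : q*x-1/2 ≤ q*x := by linarith
  have hpc : (q*x-1/2)^7 ≤ (q*x)^7 := pow_le_pow_left₀ hw0 hwb 7
  have hp1 : (q*x-1/2)^1 ≤ (q*x)^7 := le_trans (pow_le_pow_right₀ hw1 (by norm_num)) hpc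
  have hp2 : (q*x-1/2)^2 ≤ (q*x)^7 := le_trans (pow_le_pow_right₀ hw1 (by norm_num)) hpc
  have hp3 : (q*x-1/2)^3 ≤ (q*x)^7 := le_trans (pow_le_pow_right₀ hw1 (by norm_num)) hpc
  have hp4 : (q*x-1/2)^4 ≤ (q*x)^7 := le_trans (pow_le_pow_right₀ hw1 (by norm_num)) hpc
  have hp5 : (q*x-1/2)^5 ≤ (q*x)^7 := le_trans (pow_le_pow_right₀ hw1 (by norm_num)) hpc
  have hp6 : (q*x-1/2)^6 ≤ (q*x)^7 := le_trans (pow_le_pow_right₀ hw1 (by norm_num)) hpc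
  have hn1 : (0:ℝ) ≤ (q*x-1/2)^1 := pow_nonneg hw0 1
  have hn2 : (0:ℝ) ≤ (q*x-1/2)^2 := pow_nonneg hw0 2
  have hn3 : (0:ℝ) ≤ (q*x-1/2)^3 := pow_nonneg hw0 3
  have hn4 : (0:ℝ) ≤ (q*x-1/2)^4 := pow_nonneg hw0 4
  have hn5 : (0:ℝ) ≤ (q*x-1/2)^5 := pow_nonneg hw0 5
  have hn6 : (0:ℝ) ≤ (q*x-1/2)^6 := pow_nonneg hw0 6
  have hn7 : (0:ℝ) ≤ (q*x-1/2)^7 := pow_nonneg hw0 7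
  have hgam : |(-128:ℝ)*(q*x-1/2)^7 + (2688:ℝ)*(q*x-1/2)^6 + (-22400:ℝ)*(q*x-1/2)^5 + (94080:ℝ)*(q*x-1/2)^4 + (-207872:ℝ)*(q*x-1/2)^3 + (225792:ℝ)*(q*x-1/2)^2 + (-92160:ℝ)*(q*x-1/2)| ≤ 645120*(q*x)^7 := by
    rw [abs_le]
    constructor
    · linarith [hp1, hp2, hp3, hp4, hp5, hp6, hpc, hn1, hn2, hn3, hn4, hn5, hn6, hn7]
    · linarith [hp1, hp2, hp3, hp4, hp5, hp6, hpc, hn1, hn2, hn3, hn4, hn5, hn6, hn7]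
  have hJ := jb7_7 q x hq hx
  rw [norm_mul, Complex.norm_I, one_mul, norm_mul, Complex.norm_real, Real.norm_eq_abs]
  calc |(-128:ℝ)*(q*x-1/2)^7 + (2688:ℝ)*(q*x-1/2)^6 + (-22400:ℝ)*(q*x-1/2)^5 + (94080:ℝ)*(q*x-1/2)^4 + (-207872:ℝ)*(q*x-1/2)^3 + (225792:ℝ)*(q*x-1/2)^2 + (-92160:ℝ)*(q*x-1/2)| * ‖Jf x 7 (q*x-1/2-1-1-1-1-1-1-1)‖
      ≤ (645120*(q*x)^7) * (192/x^4) :=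
        mul_le_mul hgam hJ (norm_nonneg _) (by positivity)
    _ = 123863040*q^7*x^3 := by
        field_simp
        ring
    _ ≤ 123863040*q^7*x^3 := by
        nlinarith [pow_le_pow_right₀ hq (by norm_num : 7 ≤ 7), pow_pos hx0 3]

lemma lemQb (q x : ℝ) (hq : 1 ≤ q) (hx : 16 ≤ x) :
    |((-120:ℝ)*q^3*x^3 + (-12:ℝ)*q^2*x^4 + (540:ℝ)*q^2*x^2 + (-2:ℝ)*q*x^5 + (24:ℝ)*q*x^3 + (-690:ℝ)*q*x + (-1:ℝ)*x^6 + (1:ℝ)*x^4 + (-9:ℝ)*x^2 + (225:ℝ)) + x^7*(1/x) + x^7*(2*q/x^2) + x^7*((12*q^2-1)/x^3)| ≤ 1608*q^7*x^3 := by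
  have hq0 : (0:ℝ) < q := by linarith
  have hx0 : (0:ℝ) < x := by linarith
  have hxne : x ≠ 0 := ne_of_gt hx0
  have h1x : (1:ℝ) ≤ x := by linarith
  have hq7 : (1:ℝ) ≤ q^7 := by simpa using pow_le_pow_left₀ zero_le_one hq 7
  have hx31 : (1:ℝ) ≤ x^3 := by simpa using pow_le_pow_left₀ zero_le_one h1x 3
  have hq17 : q ≤ q^7 := by simpa using pow_le_pow_right₀ hq (by norm_num : 1 ≤ 7)
  have hq27 : q^2 ≤ q^7 := pow_le_pow_right₀ hq (by norm_num)
  have hq37 : q^3 ≤ q^7 := pow_le_pow_right₀ hq (by norm_num)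
  have hx13 : x ≤ x^3 := by simpa using pow_le_pow_right₀ h1x (by norm_num : 1 ≤ 3)
  have hx23 : x^2 ≤ x^3 := pow_le_pow_right₀ h1x (by norm_num)
  have f00 : (1:ℝ) ≤ q^7*x^3 := by nlinarith
  have fx2 : x^2 ≤ q^7*x^3 := by nlinarith [pow_pos hx0 3]
  have fqx : q*x ≤ q^7*x^3 := by nlinarith [pow_pos hq0 7, mul_pos hq0 hx0]
  have fqx3 : q*x^3 ≤ q^7*x^3 := by nlinarith [pow_pos hx0 3]
  have fq2x2 : q^2*x^2 ≤ q^7*x^3 := by nlinarith [pow_pos hq0 2, pow_pos hx0 2, pow_pos hx0 3]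
  have fq3x3 : q^3*x^3 ≤ q^7*x^3 := by nlinarith [pow_pos hx0 3]
  have g1 : (0:ℝ) ≤ q*x := le_of_lt (mul_pos hq0 hx0)
  have g2 : (0:ℝ) ≤ x^2 := sq_nonneg x
  have g3 : (0:ℝ) ≤ q*x^3 := le_of_lt (mul_pos hq0 (pow_pos hx0 3))
  have g4 : (0:ℝ) ≤ q^2*x^2 := le_of_lt (mul_pos (pow_pos hq0 2) (pow_pos hx0 2))
  have g5 : (0:ℝ) ≤ q^3*x^3 := le_of_lt (mul_pos (pow_pos hq0 3) (pow_pos hx0 3))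
  have hpoly : ((-120:ℝ)*q^3*x^3 + (-12:ℝ)*q^2*x^4 + (540:ℝ)*q^2*x^2 + (-2:ℝ)*q*x^5 + (24:ℝ)*q*x^3 + (-690:ℝ)*q*x + (-1:ℝ)*x^6 + (1:ℝ)*x^4 + (-9:ℝ)*x^2 + (225:ℝ)) + x^7*(1/x) + x^7*(2*q/x^2) + x^7*((12*q^2-1)/x^3)
      = (-120:ℝ)*q^3*x^3 + (540:ℝ)*q^2*x^2 + (24:ℝ)*q*x^3 + (-690:ℝ)*q*x + (-9:ℝ)*x^2 + (225:ℝ) := by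
    field_simp
    ring
  rw [hpoly, abs_le]
  constructor
  · linarith [f00, fx2, fqx, fqx3, fq2x2, fq3x3, g1, g2, g3, g4, g5]
  · linarith [f00, fx2, fqx, fqx3, fq2x2, fq3x3, g1, g2, g3, g4, g5]

lemma lemAb (q x : ℝ) (hq : 1 ≤ q) (hx : 16 ≤ x) :
    ‖Complex.I*((((-120:ℝ)*q^3*x^3 + (-12:ℝ)*q^2*x^4 + (540:ℝ)*q^2*x^2 + (-2:ℝ)*q*x^5 + (24:ℝ)*q*x^3 + (-690:ℝ)*q*x + (-1:ℝ)*x^6 + (1:ℝ)*x^4 + (-9:ℝ)*x^2 + (225:ℝ)):ℝ):ℂ) - (Complex.I*(x:ℂ))^7 * ((1 / x : ℝ) + (2 * q / x ^ 2 : ℝ) + ((12 * q ^ 2 - 1) / x ^ 3 : ℝ) : ℂ)‖ ≤ 1608*q^7*x^3 := by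
  have hI7x : (Complex.I*(x:ℂ))^7 = -(Complex.I*(x:ℂ)^7) := by
    rw [mul_pow, lemI7]; ring
  have hc : Complex.I*((((-120:ℝ)*q^3*x^3 + (-12:ℝ)*q^2*x^4 + (540:ℝ)*q^2*x^2 + (-2:ℝ)*q*x^5 + (24:ℝ)*q*x^3 + (-690:ℝ)*q*x + (-1:ℝ)*x^6 + (1:ℝ)*x^4 + (-9:ℝ)*x^2 + (225:ℝ)):ℝ):ℂ) - (Complex.I*(x:ℂ))^7 * ((1 / x : ℝ) + (2 * q / x ^ 2 : ℝ) + ((12 * q ^ 2 - 1) / x ^ 3 : ℝ) : ℂ)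
      = Complex.I * ((((-120:ℝ)*q^3*x^3 + (-12:ℝ)*q^2*x^4 + (540:ℝ)*q^2*x^2 + (-2:ℝ)*q*x^5 + (24:ℝ)*q*x^3 + (-690:ℝ)*q*x + (-1:ℝ)*x^6 + (1:ℝ)*x^4 + (-9:ℝ)*x^2 + (225:ℝ)) + x^7*(1/x) + x^7*(2*q/x^2) + x^7*((12*q^2-1)/x^3) : ℝ) : ℂ) := by
    rw [hI7x]; push_cast; ring
  rw [hc, norm_mul, Complex.norm_I, one_mul, Complex.norm_real, Real.norm_eq_abs]
  exact lemQb q x hq hx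

theorem stmt_14 (q : ℝ) (hq : 1 ≤ q) :
    ∃ C > (0 : ℝ), ∃ X > (0 : ℝ), ∀ x : ℝ, X ≤ x →
      ‖Complex.I * (∫ t in (0 : ℝ)..1,
          Complex.exp (-(Complex.I * x * t)) *
            (Real.exp ((q * x - 1 / 2) * Real.log (1 - t ^ 2)) : ℂ)) -
        ((1 / x : ℝ) + (2 * q / x ^ 2 : ℝ) + ((12 * q ^ 2 - 1) / x ^ 3 : ℝ) : ℂ)‖ ≤
      C / x ^ 4 := by
  have hq0 : (0:ℝ) < q := by linarith
  refine ⟨158200000*q^7, by nlinarith [pow_pos hq0 7], 16, by norm_num, ?_⟩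
  intro x hx
  have hx0 : (0:ℝ) < x := by linarith
  have hxne : x ≠ 0 := ne_of_gt hx0
  have hqx : x ≤ q*x := by nlinarith [mul_nonneg (sub_nonneg.mpr hq) (le_of_lt hx0)]
  have hcong : (∫ t in (0:ℝ)..1, Complex.exp (-(Complex.I * x * t)) *
        (Real.exp ((q * x - 1 / 2) * Real.log (1 - t ^ 2)) : ℂ))
      = Jf x 0 (q*x-1/2) := by
    unfold Jf
    apply intervalIntegral.integral_congr_ae
    have h1 : ∀ᵐ (t:ℝ) ∂MeasureTheory.volume, t ≠ 1 := by
      rw [MeasureTheory.ae_iff]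
      simp only [ne_eq, not_not, Set.setOf_eq_eq_singleton]
      exact Real.volume_singleton
    filter_upwards [h1] with t ht hmem
    rw [Set.uIoc_of_le zero_le_one] at hmem
    obtain ⟨h0t, ht1⟩ := hmem
    have hlt : t < 1 := lt_of_le_of_ne ht1 ht
    have hpos : 0 < 1 - t^2 := by nlinarith
    rw [pow_zero, one_mul, Real.rpow_def_of_pos hpos,
        mul_comm (Real.log (1-t^2)) (q*x-1/2)]
  rw [hcong, le_div_iff₀ (pow_pos hx0 4)]
  have h2le0 : (2:ℝ) ≤ q*x-1/2 := by linarith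
  have h2le1 : (2:ℝ) ≤ q*x-1/2-1 := by linarith
  have h2le2 : (2:ℝ) ≤ q*x-1/2-1-1 := by linarith
  have h2le3 : (2:ℝ) ≤ q*x-1/2-1-1-1 := by linarith
  have h2le4 : (2:ℝ) ≤ q*x-1/2-1-1-1-1 := by linarith
  have h2le5 : (2:ℝ) ≤ q*x-1/2-1-1-1-1-1 := by linarith
  have h2le6 : (2:ℝ) ≤ q*x-1/2-1-1-1-1-1-1 := by linarith
  have e0_0 : (Complex.I*(x:ℂ))*Jf x 0 (q*x-1/2) = 1 - 2*((q*x-1/2:ℝ):ℂ)*Jf x 1 (q*x-1/2-1) := ibp0 x (q*x-1/2) h2le0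
  have e1_1 : (Complex.I*(x:ℂ))*Jf x 1 (q*x-1/2-1) = ((1:ℕ):ℂ)*Jf x 0 (q*x-1/2-1) - 2*((q*x-1/2-1:ℝ):ℂ)*Jf x 2 (q*x-1/2-1-1) := ibpS x 0 (q*x-1/2-1) h2le1
  have e0_1 : (Complex.I*(x:ℂ))*Jf x 0 (q*x-1/2-1) = 1 - 2*((q*x-1/2-1:ℝ):ℂ)*Jf x 1 (q*x-1/2-1-1) := ibp0 x (q*x-1/2-1) h2le1
  have e2_2 : (Complex.I*(x:ℂ))*Jf x 2 (q*x-1/2-1-1) = ((2:ℕ):ℂ)*Jf x 1 (q*x-1/2-1-1) - 2*((q*x-1/2-1-1:ℝ):ℂ)*Jf x 3 (q*x-1/2-1-1-1) := ibpS x 1 (q*x-1/2-1-1) h2le2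
  have e1_2 : (Complex.I*(x:ℂ))*Jf x 1 (q*x-1/2-1-1) = ((1:ℕ):ℂ)*Jf x 0 (q*x-1/2-1-1) - 2*((q*x-1/2-1-1:ℝ):ℂ)*Jf x 2 (q*x-1/2-1-1-1) := ibpS x 0 (q*x-1/2-1-1) h2le2
  have e3_3 : (Complex.I*(x:ℂ))*Jf x 3 (q*x-1/2-1-1-1) = ((3:ℕ):ℂ)*Jf x 2 (q*x-1/2-1-1-1) - 2*((q*x-1/2-1-1-1:ℝ):ℂ)*Jf x 4 (q*x-1/2-1-1-1-1) := ibpS x 2 (q*x-1/2-1-1-1) h2le3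
  have e0_2 : (Complex.I*(x:ℂ))*Jf x 0 (q*x-1/2-1-1) = 1 - 2*((q*x-1/2-1-1:ℝ):ℂ)*Jf x 1 (q*x-1/2-1-1-1) := ibp0 x (q*x-1/2-1-1) h2le2
  have e2_3 : (Complex.I*(x:ℂ))*Jf x 2 (q*x-1/2-1-1-1) = ((2:ℕ):ℂ)*Jf x 1 (q*x-1/2-1-1-1) - 2*((q*x-1/2-1-1-1:ℝ):ℂ)*Jf x 3 (q*x-1/2-1-1-1-1) := ibpS x 1 (q*x-1/2-1-1-1) h2le3
  have e4_4 : (Complex.I*(x:ℂ))*Jf x 4 (q*x-1/2-1-1-1-1) = ((4:ℕ):ℂ)*Jf x 3 (q*x-1/2-1-1-1-1) - 2*((q*x-1/2-1-1-1-1:ℝ):ℂ)*Jf x 5 (q*x-1/2-1-1-1-1-1) := ibpS x 3 (q*x-1/2-1-1-1-1) h2le4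
  have e1_3 : (Complex.I*(x:ℂ))*Jf x 1 (q*x-1/2-1-1-1) = ((1:ℕ):ℂ)*Jf x 0 (q*x-1/2-1-1-1) - 2*((q*x-1/2-1-1-1:ℝ):ℂ)*Jf x 2 (q*x-1/2-1-1-1-1) := ibpS x 0 (q*x-1/2-1-1-1) h2le3
  have e3_4 : (Complex.I*(x:ℂ))*Jf x 3 (q*x-1/2-1-1-1-1) = ((3:ℕ):ℂ)*Jf x 2 (q*x-1/2-1-1-1-1) - 2*((q*x-1/2-1-1-1-1:ℝ):ℂ)*Jf x 4 (q*x-1/2-1-1-1-1-1) := ibpS x 2 (q*x-1/2-1-1-1-1) h2le4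
  have e5_5 : (Complex.I*(x:ℂ))*Jf x 5 (q*x-1/2-1-1-1-1-1) = ((5:ℕ):ℂ)*Jf x 4 (q*x-1/2-1-1-1-1-1) - 2*((q*x-1/2-1-1-1-1-1:ℝ):ℂ)*Jf x 6 (q*x-1/2-1-1-1-1-1-1) := ibpS x 4 (q*x-1/2-1-1-1-1-1) h2le5
  have e0_3 : (Complex.I*(x:ℂ))*Jf x 0 (q*x-1/2-1-1-1) = 1 - 2*((q*x-1/2-1-1-1:ℝ):ℂ)*Jf x 1 (q*x-1/2-1-1-1-1) := ibp0 x (q*x-1/2-1-1-1) h2le3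
  have e2_4 : (Complex.I*(x:ℂ))*Jf x 2 (q*x-1/2-1-1-1-1) = ((2:ℕ):ℂ)*Jf x 1 (q*x-1/2-1-1-1-1) - 2*((q*x-1/2-1-1-1-1:ℝ):ℂ)*Jf x 3 (q*x-1/2-1-1-1-1-1) := ibpS x 1 (q*x-1/2-1-1-1-1) h2le4
  have e4_5 : (Complex.I*(x:ℂ))*Jf x 4 (q*x-1/2-1-1-1-1-1) = ((4:ℕ):ℂ)*Jf x 3 (q*x-1/2-1-1-1-1-1) - 2*((q*x-1/2-1-1-1-1-1:ℝ):ℂ)*Jf x 5 (q*x-1/2-1-1-1-1-1-1) := ibpS x 3 (q*x-1/2-1-1-1-1-1) h2le5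
  have e6_6 : (Complex.I*(x:ℂ))*Jf x 6 (q*x-1/2-1-1-1-1-1-1) = ((6:ℕ):ℂ)*Jf x 5 (q*x-1/2-1-1-1-1-1-1) - 2*((q*x-1/2-1-1-1-1-1-1:ℝ):ℂ)*Jf x 7 (q*x-1/2-1-1-1-1-1-1-1) := ibpS x 5 (q*x-1/2-1-1-1-1-1-1) h2le6
  have hmain : (Complex.I*(x:ℂ))^7 * Jf x 0 (q*x-1/2)
      = ((((-120:ℝ)*q^3*x^3 + (-12:ℝ)*q^2*x^4 + (540:ℝ)*q^2*x^2 + (-2:ℝ)*q*x^5 + (24:ℝ)*q*x^3 + (-690:ℝ)*q*x + (-1:ℝ)*x^6 + (1:ℝ)*x^4 + (-9:ℝ)*x^2 + (225:ℝ)):ℝ):ℂ) + (((((1680:ℝ)*(q*x-1/2)^4 + (-10080:ℝ)*(q*x-1/2)^3 + (18480:ℝ)*(q*x-1/2)^2 + (-10080:ℝ)*(q*x-1/2)):ℝ):ℂ)*Jf x 1 (q*x-1/2-1-1-1-1) + (((((-3360:ℝ)*(q*x-1/2)^5 + (33600:ℝ)*(q*x-1/2)^4 + (-117600:ℝ)*(q*x-1/2)^3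 + (168000:ℝ)*(q*x-1/2)^2 + (-80640:ℝ)*(q*x-1/2)):ℝ):ℂ)*Jf x 3 (q*x-1/2-1-1-1-1-1) + (((((1344:ℝ)*(q*x-1/2)^6 + (-20160:ℝ)*(q*x-1/2)^5 + (114240:ℝ)*(q*x-1/2)^4 + (-302400:ℝ)*(q*x-1/2)^3 + (368256:ℝ)*(q*x-1/2)^2 + (-161280:ℝ)*(q*x-1/2)):ℝ):ℂ)*Jf x 5 (q*x-1/2-1-1-1-1-1-1) + (((((-128:ℝ)*(q*x-1/2)^7 + (2688:ℝ)*(q*x-1/2)^6 + (-22400:ℝ)*(q*x-1/2)^5 + (94080:ℝ)*(q*x-1/2)^4 + (-207872:ℝ)*(q*x-1/2)^3 + (225792:ℝ)*(q*x-1/2)^2 + (-92160:ℝ)*(q*x-1/2)):ℝ):ℂ)*Jf x 7 (q*x-1/2-1-1-1-1-1-1-1))))) := by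
    linear_combination (norm := (push_cast [-Complex.I_pow_eq_pow_mod']; ring1)) ((1:ℂ)*Complex.I^6*(x:ℂ)^6)*e0_0 + ((-2:ℂ)*Complex.I^5*(x:ℂ)^6*(q:ℂ) + (1:ℂ)*Complex.I^5*(x:ℂ)^5)*e1_1 + ((-2:ℂ)*Complex.I^4*(x:ℂ)^5*(q:ℂ) + (1:ℂ)*Complex.I^4*(x:ℂ)^4)*e0_1 + ((4:ℂ)*Complex.I^4*(x:ℂ)^6*(q:ℂ)^2 + (-8:ℂ)*Complex.I^4*(x:ℂ)^5*(q:ℂ) + (3:ℂ)*Complex.I^4*(x:ℂ)^4)*e2_2 + ((12:ℂ)*Complex.I^3*(x:ℂ)^5*(q:ℂ)^2 + (-24:ℂ)*Complex.I^3*(x:ℂ)^4*(q:ℂ) + (9:ℂ)*Complex.I^3*(x:ℂ)^3)*e1_2 + ((-8:ℂ)*Complex.I^3*(x:ℂ)^6*(q:ℂ)^3 + (36:ℂ)*Complex.I^3*(x:ℂ)^5*(q:ℂ)^2 + (-46:ℂ)*Complex.I^3*(x:ℂ)^4*(q:ℂ) + (15:ℂ)*Complex.I^3*(x:ℂ)^3)*e3_3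 + ((12:ℂ)*Complex.I^2*(x:ℂ)^4*(q:ℂ)^2 + (-24:ℂ)*Complex.I^2*(x:ℂ)^3*(q:ℂ) + (9:ℂ)*Complex.I^2*(x:ℂ)^2)*e0_2 + ((-48:ℂ)*Complex.I^2*(x:ℂ)^5*(q:ℂ)^3 + (216:ℂ)*Complex.I^2*(x:ℂ)^4*(q:ℂ)^2 + (-276:ℂ)*Complex.I^2*(x:ℂ)^3*(q:ℂ) + (90:ℂ)*Complex.I^2*(x:ℂ)^2)*e2_3 + ((16:ℂ)*Complex.I^2*(x:ℂ)^6*(q:ℂ)^4 + (-128:ℂ)*Complex.I^2*(x:ℂ)^5*(q:ℂ)^3 + (344:ℂ)*Complex.I^2*(x:ℂ)^4*(q:ℂ)^2 + (-352:ℂ)*Complex.I^2*(x:ℂ)^3*(q:ℂ) + (105:ℂ)*Complex.I^2*(x:ℂ)^2)*e4_4 + ((-120:ℂ)*Complex.I*(x:ℂ)^4*(q:ℂ)^3 + (540:ℂ)*Complex.I*(x:ℂ)^3*(q:ℂ)^2 + (-690:ℂ)*Complex.I*(x:ℂ)^2*(q:ℂ) + (225:ℂ)*Complex.I*(x:ℂ))*e1_3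 + ((160:ℂ)*Complex.I*(x:ℂ)^5*(q:ℂ)^4 + (-1280:ℂ)*Complex.I*(x:ℂ)^4*(q:ℂ)^3 + (3440:ℂ)*Complex.I*(x:ℂ)^3*(q:ℂ)^2 + (-3520:ℂ)*Complex.I*(x:ℂ)^2*(q:ℂ) + (1050:ℂ)*Complex.I*(x:ℂ))*e3_4 + ((-32:ℂ)*Complex.I*(x:ℂ)^6*(q:ℂ)^5 + (400:ℂ)*Complex.I*(x:ℂ)^5*(q:ℂ)^4 + (-1840:ℂ)*Complex.I*(x:ℂ)^4*(q:ℂ)^3 + (3800:ℂ)*Complex.I*(x:ℂ)^3*(q:ℂ)^2 + (-3378:ℂ)*Complex.I*(x:ℂ)^2*(q:ℂ) + (945:ℂ)*Complex.I*(x:ℂ))*e5_5 + ((-120:ℂ)*(x:ℂ)^3*(q:ℂ)^3 + (540:ℂ)*(x:ℂ)^2*(q:ℂ)^2 + (-690:ℂ)*(x:ℂ)*(q:ℂ) + (225:ℂ))*e0_3 + ((720:ℂ)*(x:ℂ)^4*(q:ℂ)^4 + (-5760:ℂ)*(x:ℂ)^3*(q:ℂ)^3 + (15480:ℂ)*(x:ℂ)^2*(q:ℂ)^2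 + (-15840:ℂ)*(x:ℂ)*(q:ℂ) + (4725:ℂ))*e2_4 + ((-480:ℂ)*(x:ℂ)^5*(q:ℂ)^5 + (6000:ℂ)*(x:ℂ)^4*(q:ℂ)^4 + (-27600:ℂ)*(x:ℂ)^3*(q:ℂ)^3 + (57000:ℂ)*(x:ℂ)^2*(q:ℂ)^2 + (-50670:ℂ)*(x:ℂ)*(q:ℂ) + (14175:ℂ))*e4_5 + ((64:ℂ)*(x:ℂ)^6*(q:ℂ)^6 + (-1152:ℂ)*(x:ℂ)^5*(q:ℂ)^5 + (8080:ℂ)*(x:ℂ)^4*(q:ℂ)^4 + (-27840:ℂ)*(x:ℂ)^3*(q:ℂ)^3 + (48556:ℂ)*(x:ℂ)^2*(q:ℂ)^2 + (-39048:ℂ)*(x:ℂ)*(q:ℂ) + (10395:ℂ))*e6_6 + ((1:ℂ)*Complex.I^4*(x:ℂ)^6 + (-1:ℂ)*Complex.I^2*(x:ℂ)^6 + (-2:ℂ)*Complex.I^2*(x:ℂ)^5*(q:ℂ) + (1:ℂ)*Complex.I^2*(x:ℂ)^4 + (1:ℂ)*(x:ℂ)^6 + (2:ℂ)*(x:ℂ)^5*(q:ℂ)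 + (12:ℂ)*(x:ℂ)^4*(q:ℂ)^2 + (-1:ℂ)*(x:ℂ)^4 + (-24:ℂ)*(x:ℂ)^3*(q:ℂ) + (9:ℂ)*(x:ℂ)^2)*Complex.I_sq
  have hexpand : (Complex.I*(x:ℂ))^7 * (Complex.I * Jf x 0 (q*x-1/2) - ((1 / x : ℝ) + (2 * q / x ^ 2 : ℝ) + ((12 * q ^ 2 - 1) / x ^ 3 : ℝ) : ℂ))
      = (Complex.I*((((-120:ℝ)*q^3*x^3 + (-12:ℝ)*q^2*x^4 + (540:ℝ)*q^2*x^2 + (-2:ℝ)*q*x^5 + (24:ℝ)*q*x^3 + (-690:ℝ)*q*x + (-1:ℝ)*x^6 + (1:ℝ)*x^4 + (-9:ℝ)*x^2 + (225:ℝ)):ℝ):ℂ) - (Complex.I*(x:ℂ))^7 * ((1 / x : ℝ) + (2 * q / x ^ 2 : ℝ) + ((12 * q ^ 2 - 1) / x ^ 3 : ℝ) : ℂ))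
        + (Complex.I*(((((1680:ℝ)*(q*x-1/2)^4 + (-10080:ℝ)*(q*x-1/2)^3 + (18480:ℝ)*(q*x-1/2)^2 + (-10080:ℝ)*(q*x-1/2)):ℝ):ℂ)*Jf x 1 (q*x-1/2-1-1-1-1)) + (Complex.I*(((((-3360:ℝ)*(q*x-1/2)^5 + (33600:ℝ)*(q*x-1/2)^4 + (-117600:ℝ)*(q*x-1/2)^3 + (168000:ℝ)*(q*x-1/2)^2 + (-80640:ℝ)*(q*x-1/2)):ℝ):ℂ)*Jf x 3 (q*x-1/2-1-1-1-1-1)) + (Complex.I*(((((1344:ℝ)*(q*x-1/2)^6 + (-20160:ℝ)*(q*x-1/2)^5 + (114240:ℝ)*(q*x-1/2)^4 + (-302400:ℝ)*(q*x-1/2)^3 + (368256:ℝ)*(q*x-1/2)^2 + (-161280:ℝ)*(q*x-1/2)):ℝ):ℂ)*Jf x 5 (q*x-1/2-1-1-1-1-1-1)) + Complex.I*(((((-128:ℝ)*(q*x-1/2)^7 + (2688:ℝ)*(q*x-1/2)^6 + (-22400:ℝ)*(q*x-1/2)^5 + (94080:ℝ)*(q*x-1/2)^4 + (-207872:ℝ)*(q*x-1/2)^3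 + (225792:ℝ)*(q*x-1/2)^2 + (-92160:ℝ)*(q*x-1/2)):ℝ):ℂ)*Jf x 7 (q*x-1/2-1-1-1-1-1-1-1))))) := by
    linear_combination (norm := (push_cast; ring1)) Complex.I * hmain
  clear e0_0 e1_1 e0_1 e2_2 e1_2 e3_3 e0_2 e2_3 e4_4 e1_3 e3_4 e5_5 e0_3 e2_4 e4_5 e6_6 hmain h2le0 h2le1 h2le2 h2le3 h2le4 h2le5 h2le6
  have hnx7 : ‖(Complex.I*(x:ℂ))^7‖ = x^7 := by
    rw [norm_pow, norm_mul, Complex.norm_I, one_mul, Complex.norm_real,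
        Real.norm_eq_abs, abs_of_pos hx0]
  have htot : x^7 * ‖Complex.I * Jf x 0 (q*x-1/2) - ((1 / x : ℝ) + (2 * q / x ^ 2 : ℝ) + ((12 * q ^ 2 - 1) / x ^ 3 : ℝ) : ℂ)‖
      ≤ 1608*q^7*x^3 + (80640*q^7*x^3 + (3225600*q^7*x^3 + (30965760*q^7*x^3 + 123863040*q^7*x^3))) := by
    calc x^7 * ‖Complex.I * Jf x 0 (q*x-1/2) - ((1 / x : ℝ) + (2 * q / x ^ 2 : ℝ) + ((12 * q ^ 2 - 1) / x ^ 3 : ℝ) : ℂ)‖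
        = ‖(Complex.I*(x:ℂ))^7 * (Complex.I * Jf x 0 (q*x-1/2) - ((1 / x : ℝ) + (2 * q / x ^ 2 : ℝ) + ((12 * q ^ 2 - 1) / x ^ 3 : ℝ) : ℂ))‖ := by
          rw [norm_mul, hnx7]
      _ = ‖(Complex.I*((((-120:ℝ)*q^3*x^3 + (-12:ℝ)*q^2*x^4 + (540:ℝ)*q^2*x^2 + (-2:ℝ)*q*x^5 + (24:ℝ)*q*x^3 + (-690:ℝ)*q*x + (-1:ℝ)*x^6 + (1:ℝ)*x^4 + (-9:ℝ)*x^2 + (225:ℝ)):ℝ):ℂ) - (Complex.I*(x:ℂ))^7 * ((1 / x : ℝ) + (2 * q / x ^ 2 : ℝ) + ((12 * q ^ 2 - 1) / x ^ 3 : ℝ) : ℂ))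
            + (Complex.I*(((((1680:ℝ)*(q*x-1/2)^4 + (-10080:ℝ)*(q*x-1/2)^3 + (18480:ℝ)*(q*x-1/2)^2 + (-10080:ℝ)*(q*x-1/2)):ℝ):ℂ)*Jf x 1 (q*x-1/2-1-1-1-1)) + (Complex.I*(((((-3360:ℝ)*(q*x-1/2)^5 + (33600:ℝ)*(q*x-1/2)^4 + (-117600:ℝ)*(q*x-1/2)^3 + (168000:ℝ)*(q*x-1/2)^2 + (-80640:ℝ)*(q*x-1/2)):ℝ):ℂ)*Jf x 3 (q*x-1/2-1-1-1-1-1)) + (Complex.I*(((((1344:ℝ)*(q*x-1/2)^6 + (-20160:ℝ)*(q*x-1/2)^5 + (114240:ℝ)*(q*x-1/2)^4 + (-302400:ℝ)*(q*x-1/2)^3 + (368256:ℝ)*(q*x-1/2)^2 + (-161280:ℝ)*(q*x-1/2)):ℝ):ℂ)*Jf x 5 (q*x-1/2-1-1-1-1-1-1)) + Complex.I*(((((-128:ℝ)*(q*x-1/2)^7 + (2688:ℝ)*(q*x-1/2)^6 + (-22400:ℝ)*(q*x-1/2)^5 + (94080:ℝ)*(q*x-1/2)^4 + (-207872:ℝ)*(q*x-1/2)^3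 + (225792:ℝ)*(q*x-1/2)^2 + (-92160:ℝ)*(q*x-1/2)):ℝ):ℂ)*Jf x 7 (q*x-1/2-1-1-1-1-1-1-1)))))‖ := by rw [hexpand]
      _ ≤ ‖Complex.I*((((-120:ℝ)*q^3*x^3 + (-12:ℝ)*q^2*x^4 + (540:ℝ)*q^2*x^2 + (-2:ℝ)*q*x^5 + (24:ℝ)*q*x^3 + (-690:ℝ)*q*x + (-1:ℝ)*x^6 + (1:ℝ)*x^4 + (-9:ℝ)*x^2 + (225:ℝ)):ℝ):ℂ) - (Complex.I*(x:ℂ))^7 * ((1 / x : ℝ) + (2 * q / x ^ 2 : ℝ) + ((12 * q ^ 2 - 1) / x ^ 3 : ℝ) : ℂ)‖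
            + ‖Complex.I*(((((1680:ℝ)*(q*x-1/2)^4 + (-10080:ℝ)*(q*x-1/2)^3 + (18480:ℝ)*(q*x-1/2)^2 + (-10080:ℝ)*(q*x-1/2)):ℝ):ℂ)*Jf x 1 (q*x-1/2-1-1-1-1)) + (Complex.I*(((((-3360:ℝ)*(q*x-1/2)^5 + (33600:ℝ)*(q*x-1/2)^4 + (-117600:ℝ)*(q*x-1/2)^3 + (168000:ℝ)*(q*x-1/2)^2 + (-80640:ℝ)*(q*x-1/2)):ℝ):ℂ)*Jf x 3 (q*x-1/2-1-1-1-1-1)) + (Complex.I*(((((1344:ℝ)*(q*x-1/2)^6 + (-20160:ℝ)*(q*x-1/2)^5 + (114240:ℝ)*(q*x-1/2)^4 + (-302400:ℝ)*(q*x-1/2)^3 + (368256:ℝ)*(q*x-1/2)^2 + (-161280:ℝ)*(q*x-1/2)):ℝ):ℂ)*Jf x 5 (q*x-1/2-1-1-1-1-1-1)) + Complex.I*(((((-128:ℝ)*(q*x-1/2)^7 + (2688:ℝ)*(q*x-1/2)^6 + (-22400:ℝ)*(q*x-1/2)^5 + (94080:ℝ)*(q*x-1/2)^4 + (-207872:ℝ)*(q*x-1/2)^3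 + (225792:ℝ)*(q*x-1/2)^2 + (-92160:ℝ)*(q*x-1/2)):ℝ):ℂ)*Jf x 7 (q*x-1/2-1-1-1-1-1-1-1))))‖ := norm_add_le _ _
      _ ≤ ‖Complex.I*((((-120:ℝ)*q^3*x^3 + (-12:ℝ)*q^2*x^4 + (540:ℝ)*q^2*x^2 + (-2:ℝ)*q*x^5 + (24:ℝ)*q*x^3 + (-690:ℝ)*q*x + (-1:ℝ)*x^6 + (1:ℝ)*x^4 + (-9:ℝ)*x^2 + (225:ℝ)):ℝ):ℂ) - (Complex.I*(x:ℂ))^7 * ((1 / x : ℝ) + (2 * q / x ^ 2 : ℝ) + ((12 * q ^ 2 - 1) / x ^ 3 : ℝ) : ℂ)‖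
            + (‖Complex.I*(((((1680:ℝ)*(q*x-1/2)^4 + (-10080:ℝ)*(q*x-1/2)^3 + (18480:ℝ)*(q*x-1/2)^2 + (-10080:ℝ)*(q*x-1/2)):ℝ):ℂ)*Jf x 1 (q*x-1/2-1-1-1-1))‖ + (‖Complex.I*(((((-3360:ℝ)*(q*x-1/2)^5 + (33600:ℝ)*(q*x-1/2)^4 + (-117600:ℝ)*(q*x-1/2)^3 + (168000:ℝ)*(q*x-1/2)^2 + (-80640:ℝ)*(q*x-1/2)):ℝ):ℂ)*Jf x 3 (q*x-1/2-1-1-1-1-1))‖ + (‖Complex.I*(((((1344:ℝ)*(q*x-1/2)^6 + (-20160:ℝ)*(q*x-1/2)^5 + (114240:ℝ)*(q*x-1/2)^4 + (-302400:ℝ)*(q*x-1/2)^3 + (368256:ℝ)*(q*x-1/2)^2 + (-161280:ℝ)*(q*x-1/2)):ℝ):ℂ)*Jf x 5 (q*x-1/2-1-1-1-1-1-1))‖ + ‖Complex.I*(((((-128:ℝ)*(q*x-1/2)^7 + (2688:ℝ)*(q*x-1/2)^6 + (-22400:ℝ)*(q*x-1/2)^5 + (94080:ℝ)*(q*x-1/2)^4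 + (-207872:ℝ)*(q*x-1/2)^3 + (225792:ℝ)*(q*x-1/2)^2 + (-92160:ℝ)*(q*x-1/2)):ℝ):ℂ)*Jf x 7 (q*x-1/2-1-1-1-1-1-1-1))‖))) := by
          refine add_le_add le_rfl ?_
          refine le_trans (norm_add_le _ _) (add_le_add le_rfl ?_)
          refine le_trans (norm_add_le _ _) (add_le_add le_rfl ?_)
          exact norm_add_le _ _
      _ ≤ 1608*q^7*x^3 + (80640*q^7*x^3 + (3225600*q^7*x^3 + (30965760*q^7*x^3 + 123863040*q^7*x^3))) :=
          add_le_add (lemAb q x hq hx) (add_le_add (Bb1_4 q x hq hx)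
            (add_le_add (Bb3_5 q x hq hx) (add_le_add (Bb5_6 q x hq hx) (Bb7_7 q x hq hx))))
  clear hexpand hcong
  calc ‖Complex.I * Jf x 0 (q*x-1/2) - ((1 / x : ℝ) + (2 * q / x ^ 2 : ℝ) + ((12 * q ^ 2 - 1) / x ^ 3 : ℝ) : ℂ)‖ * x^4
      = (x^7 * ‖Complex.I * Jf x 0 (q*x-1/2) - ((1 / x : ℝ) + (2 * q / x ^ 2 : ℝ) + ((12 * q ^ 2 - 1) / x ^ 3 : ℝ) : ℂ)‖)/x^3 := by
        field_simp
    _ ≤ (1608*q^7*x^3 + (80640*q^7*x^3 + (3225600*q^7*x^3 + (30965760*q^7*x^3 + 123863040*q^7*x^3))))/x^3 := by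
        exact (div_le_div_iff_of_pos_right (pow_pos hx0 3)).mpr htot
    _ = 158136648*q^7 := by
        field_simp
        ring
    _ ≤ 158200000*q^7 := by nlinarith [pow_pos hq0 7]
end
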